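/- arXiv:2302.00665 — 8 statements merged into one kernel-verified Lean document; each statement's English description precedes it below -/
import Mathlib

section
/- Consider binomial data in a GLMM with flat prior on β and priors π(τ_j) ∝ τ_j^{a_j−1} e^{−b_j τ_j} with b_j ≥ 0, and suppose the random-effects design matrix Z has full column rank q. Assume 0 < F(x) < 1 for all x ∈ ℝ. If c(y) < ∞ (posterior propriety), then necessarily: (1) X has full column rank p; (2) there exists a vector e ∈ ℝ^{n+k} with all coordinates strictly positive such that e^T X*_△ = 0; and (3) a_j + q_j/2 > 0 for every j = 1,…,r. -/
open MeasureTheory Set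
open scoped ENNReal

lemma aux_ennreal_top {x C : ℝ≥0∞} (hC : 0 < C) (h : ∀ N : ℕ, (N : ℝ≥0∞) * C ≤ x) :
    x = ⊤ := by
  by_contra hx
  rcases eq_or_ne C ⊤ with hCt | hCt
  · have := h 1
    simp [hCt] at this
    exact hx this
  · have hdiv : ∀ N : ℕ, (N : ℝ≥0∞) ≤ x / C := fun N =>
      (ENNReal.le_div_iff_mul_le (Or.inl hC.ne') (Or.inl hCt)).2 (h N)
    have hxC : x / C ≠ ⊤ := by
      intro ht
      exact hx (by simpa [ENNReal.div_eq_top, hC.ne', hCt] using ht)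
    obtain ⟨N, hN⟩ := ENNReal.exists_nat_gt hxC
    exact (hN.not_ge (hdiv N)).elim

lemma lintegral_top_of_indicators {α : Type*} [MeasurableSpace α] (μ : Measure α)
    (f : α → ℝ≥0∞) (Q : ℕ → Set α) (hQm : ∀ k, MeasurableSet (Q k))
    (hdisj : ∀ k l, k ≠ l → ∀ x, x ∈ Q k → x ∉ Q l)
    (D : ℕ → ℝ≥0∞) (hD : ∀ k, ∀ x ∈ Q k, D k ≤ f x)
    (C : ℝ≥0∞) (hC0 : 0 < C) (hC : ∀ k, C ≤ D k * μ (Q k)) :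
    ∫⁻ x, f x ∂μ = ⊤ := by
  refine aux_ennreal_top hC0 fun N => ?_
  have hpt : ∀ x, (∑ k ∈ Finset.range N, (Q k).indicator (fun _ => D k) x) ≤ f x := by
    intro x
    by_cases hx : ∃ k ∈ Finset.range N, x ∈ Q k
    · obtain ⟨k, hkN, hxk⟩ := hx
      rw [Finset.sum_eq_single_of_mem k hkN]
      · simpa [Set.indicator_of_mem hxk] using hD k x hxk
      · intro l _ hlk
        exact Set.indicator_of_notMem (hdisj k l (fun h => hlk h.symm) x hxk) _
    · push_neg at hx
      rw [Finset.sum_eq_zero fun k hk => Set.indicator_of_notMem (hx k hk) _]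
      exact zero_le
  calc (N : ℝ≥0∞) * C = ∑ _k ∈ Finset.range N, C := by
        simp [Finset.sum_const, mul_comm]
    _ ≤ ∑ k ∈ Finset.range N, D k * μ (Q k) := Finset.sum_le_sum fun k _ => hC k
    _ = ∑ k ∈ Finset.range N, ∫⁻ x, (Q k).indicator (fun _ => D k) x ∂μ := by
        refine Finset.sum_congr rfl fun k _ => ?_
        rw [lintegral_indicator (hQm k), setLIntegral_const]
    _ = ∫⁻ x, ∑ k ∈ Finset.range N, (Q k).indicator (fun _ => D k) x ∂μ := by
        rw [lintegral_finset_sum]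
        exact fun k _ => measurable_const.indicator (hQm k)
    _ ≤ ∫⁻ x, f x ∂μ := lintegral_mono hpt

set_option maxHeartbeats 1000000 in
lemma stiemke {p : ℕ} (hp : 0 < p) {ι : Type*} [Fintype ι] [Nonempty ι]
    (A : ι → Fin p → ℝ)
    (h : ∀ η : Fin p → ℝ, η ≠ 0 → ∃ i, 0 < ∑ c, A i c * η c) :
    ∃ e : ι → ℝ, (∀ i, 0 < e i) ∧ ∀ c, ∑ i, e i * A i c = 0 := by
  classical
  have hpne : Nonempty (Fin p) := ⟨⟨0, hp⟩⟩
  set L : ι → (Fin p → ℝ) → ℝ := fun i η => ∑ c, A i c * η c with hLdef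
  have hLcont : ∀ i, Continuous (L i) := fun i =>
    continuous_finset_sum _ fun c _ => continuous_const.mul (continuous_apply c)
  set g : (Fin p → ℝ) → ℝ := fun η => ∑ i, Real.exp (L i η) with hgdef
  have hgcont : Continuous g :=
    continuous_finset_sum _ fun i _ => (Real.continuous_exp.comp (hLcont i))
  set Ms : (Fin p → ℝ) → ℝ := fun η => ∑ i, max (L i η) 0 with hMdef
  have hMcont : Continuous Ms :=
    continuous_finset_sum _ fun i _ => (hLcont i).max continuous_const
  have hMhom : ∀ (c : ℝ), 0 ≤ c → ∀ η, Ms (c • η) = c * Ms η := by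
    intro c hc η
    simp only [hMdef]
    rw [Finset.mul_sum]
    refine Finset.sum_congr rfl fun i _ => ?_
    have hL : L i (c • η) = c * L i η := by
      simp only [hLdef, Pi.smul_apply, smul_eq_mul, Finset.mul_sum]
      exact Finset.sum_congr rfl fun c' _ => by ring
    rw [hL, mul_max_of_nonneg _ _ hc, mul_zero]
  have hMpos : ∀ η, η ≠ 0 → 0 < Ms η := by
    intro η hη
    obtain ⟨i, hi⟩ := h η hη
    exact Finset.sum_pos' (fun i _ => le_max_right _ _)
      ⟨i, Finset.mem_univ i, lt_max_of_lt_left hi⟩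
  obtain ⟨η₀, hη₀s, hη₀min'⟩ := (isCompact_sphere (0 : Fin p → ℝ) 1).exists_isMinOn
    ⟨(fun _ => 1 : Fin p → ℝ), by simp [mem_sphere_iff_norm, pi_norm_const]⟩
    hMcont.continuousOn
  have hη₀min := isMinOn_iff.mp hη₀min'
  set δ := Ms η₀ with hδdef
  have hη₀ne : η₀ ≠ 0 := by
    intro h0
    rw [mem_sphere_iff_norm, h0, zero_sub, norm_neg, norm_zero] at hη₀s
    norm_num at hη₀s
  have hδpos : 0 < δ := hMpos η₀ hη₀ne
  have hMlb : ∀ η, δ * ‖η‖ ≤ Ms η := by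
    intro η
    rcases eq_or_ne η 0 with rfl | hη
    · rw [norm_zero, mul_zero]
      exact Finset.sum_nonneg fun i _ => le_max_right _ _
    · have hn : (0:ℝ) < ‖η‖ := norm_pos_iff.2 hη
      have hsph : (‖η‖⁻¹ • η) ∈ Metric.sphere (0 : Fin p → ℝ) 1 := by
        simp [mem_sphere_iff_norm, norm_smul, abs_of_pos (inv_pos.2 hn),
          inv_mul_cancel₀ hn.ne']
      have hle := hη₀min _ hsph
      rw [hMhom _ (inv_pos.2 hn).le] at hle
      have := mul_le_mul_of_nonneg_right hle hn.le
      calc δ * ‖η‖ ≤ ‖η‖⁻¹ * Ms η * ‖η‖ := this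
        _ = Ms η := by field_simp
  set Nc : ℝ := (Fintype.card ι : ℝ) with hNc
  have hNc1 : (1:ℝ) ≤ Nc := by
    simp only [hNc]
    exact_mod_cast Fintype.card_pos
  have hNcpos : (0:ℝ) < Nc := lt_of_lt_of_le one_pos hNc1
  have hL0 : ∀ i, L i (0 : Fin p → ℝ) = 0 := fun i => by simp [hLdef]
  have hg0 : g 0 = Nc := by
    simp [hgdef, hL0, hNc]
  have hglb : ∀ η, Real.exp (δ / Nc * ‖η‖) ≤ g η := by
    intro η
    rcases eq_or_ne η 0 with rfl | hη
    · rw [hg0]; simp only [norm_zero, mul_zero, Real.exp_zero]; exact hNc1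
    · have hn : (0:ℝ) < ‖η‖ := norm_pos_iff.2 hη
      have havg : ∃ i ∈ Finset.univ, Ms η / Nc ≤ max (L i η) 0 := by
        apply Finset.exists_le_of_sum_le (Finset.univ_nonempty (α := ι))
        rw [Finset.sum_const, nsmul_eq_mul]
        have hcard : (((Finset.univ : Finset ι)).card : ℝ) = Nc := by simp [hNc]
        rw [hcard, mul_div_cancel₀ _ hNcpos.ne']
      obtain ⟨i, _, hi⟩ := havg
      have hc : 0 < δ / Nc * ‖η‖ := by positivity
      have hcle : δ / Nc * ‖η‖ ≤ Ms η / Nc := by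
        rw [div_mul_eq_mul_div, div_le_div_iff_of_pos_right hNcpos]
        exact hMlb η
      have hLi : δ / Nc * ‖η‖ ≤ L i η := by
        rcases le_or_gt (L i η) 0 with hL | hL
        · exfalso
          have : max (L i η) 0 = 0 := max_eq_right hL
          rw [this] at hi
          exact absurd (hcle.trans hi) (not_le.2 hc)
        · have : max (L i η) 0 = L i η := max_eq_left hL.le
          rw [this] at hi
          exact hcle.trans hi
      calc Real.exp (δ / Nc * ‖η‖) ≤ Real.exp (L i η) := Real.exp_le_exp.2 hLi
        _ ≤ g η := Finset.single_le_sum (f := fun i => Real.exp (L i η))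
            (fun i _ => (Real.exp_pos _).le) (Finset.mem_univ i)
  have hev : ∀ᶠ η in Filter.cocompact (Fin p → ℝ), g 0 ≤ g η := by
    refine (tendsto_norm_cocompact_atTop.eventually_ge_atTop
      (Nc * Real.log Nc / δ)).mono fun η hη => ?_
    rw [hg0]
    have h1 : Real.log Nc ≤ δ / Nc * ‖η‖ := by
      have h2 : Nc * Real.log Nc ≤ δ * ‖η‖ := by
        calc Nc * Real.log Nc = δ * (Nc * Real.log Nc / δ) := by
              rw [mul_div_assoc', mul_comm δ, mul_div_assoc, div_self hδpos.ne', mul_one]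
          _ ≤ δ * ‖η‖ := mul_le_mul_of_nonneg_left hη hδpos.le
      rw [div_mul_eq_mul_div, le_div_iff₀ hNcpos, mul_comm (Real.log Nc) Nc]
      exact h2
    calc Nc = Real.exp (Real.log Nc) := (Real.exp_log hNcpos).symm
      _ ≤ Real.exp (δ / Nc * ‖η‖) := Real.exp_le_exp.2 h1
      _ ≤ g η := hglb η
  obtain ⟨ηs, hmin⟩ := hgcont.exists_forall_le' 0 hev
  refine ⟨fun i => Real.exp (L i ηs), fun i => Real.exp_pos _, fun c => ?_⟩
  set G : ℝ → ℝ := fun t => ∑ i, Real.exp (L i ηs + t * A i c) with hGdef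
  have hLsingle : ∀ (t : ℝ) (i : ι),
      L i (ηs + t • (Pi.single c 1 : Fin p → ℝ)) = L i ηs + t * A i c := by
    intro t i
    simp only [hLdef, Pi.add_apply, Pi.smul_apply, smul_eq_mul, mul_add]
    rw [Finset.sum_add_distrib]
    congr 1
    rw [Finset.sum_eq_single c (fun c' _ hc' => by simp [Pi.single_eq_of_ne hc'])
        (fun hc' => absurd (Finset.mem_univ c) hc')]
    rw [Pi.single_eq_same]
    ring
  have hGt : ∀ t, G t = g (ηs + t • (Pi.single c 1 : Fin p → ℝ)) := by
    intro t
    refine Finset.sum_congr rfl fun i _ => ?_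
    rw [hLsingle t i]
  have hlocmin : IsLocalMin G 0 := by
    apply Filter.Eventually.of_forall
    intro t
    rw [hGt t, hGt 0]
    simp only [zero_smul, add_zero]
    exact hmin _
  have hderiv : HasDerivAt G (∑ i, Real.exp (L i ηs + 0 * A i c) * A i c) 0 :=
    HasDerivAt.fun_sum fun i _ => (((hasDerivAt_mul_const (A i c)).const_add (L i ηs)).exp)
  have hz := hlocmin.hasDerivAt_eq_zero hderiv
  simpa using hz


lemma term_mono {F : ℝ → ℝ} (hmono : Monotone F) (h0 : ∀ x, 0 < F x) (h1 : ∀ x, F x < 1)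
    (yi mi : ℕ) {x x' : ℝ} (hup : 0 < yi → x ≤ x') (hdn : yi < mi → x' ≤ x) :
    F x ^ yi * (1 - F x) ^ (mi - yi) ≤ F x' ^ yi * (1 - F x') ^ (mi - yi) := by
  have hA : F x ^ yi ≤ F x' ^ yi := by
    rcases Nat.eq_zero_or_pos yi with h | h
    · simp [h]
    · exact pow_le_pow_left₀ (h0 x).le (hmono (hup h)) _
  have hB : (1 - F x) ^ (mi - yi) ≤ (1 - F x') ^ (mi - yi) := by
    rcases Nat.eq_zero_or_pos (mi - yi) with h | h
    · simp [h]
    · have hy : yi < mi := by omega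
      have hFF : F x' ≤ F x := hmono (hdn hy)
      exact pow_le_pow_left₀ (by linarith [h1 x]) (by linarith) _
  exact mul_le_mul hA hB (pow_nonneg (by linarith [h1 x]) _) (pow_nonneg (h0 x').le _)

lemma term_lb {F : ℝ → ℝ} (hmono : Monotone F) (h0 : ∀ x, 0 < F x) (h1 : ∀ x, F x < 1)
    (yi mi : ℕ) {xlo x xhi : ℝ} (hlo : xlo ≤ x) (hhi : x ≤ xhi) :
    F xlo ^ yi * (1 - F xhi) ^ (mi - yi) ≤ F x ^ yi * (1 - F x) ^ (mi - yi) :=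
  mul_le_mul (pow_le_pow_left₀ (h0 xlo).le (hmono hlo) _)
    (pow_le_pow_left₀ (by linarith [h1 xhi]) (by have := hmono hhi; linarith) _)
    (pow_nonneg (by linarith [h1 xhi]) _) (pow_nonneg (h0 x).le _)

lemma rpow_lb_of_half (β : ℝ) {x : ℝ} (h1 : 1/2 ≤ x) (h2 : x ≤ 1) :
    Real.exp (-|β| * Real.log 2) ≤ x ^ β := by
  have hx : (0:ℝ) < x := lt_of_lt_of_le (by norm_num) h1
  rw [Real.rpow_def_of_pos hx]
  apply Real.exp_le_exp.2
  have hlog1 : Real.log x ≤ 0 := Real.log_nonpos hx.le h2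
  have hlog2 : -Real.log 2 ≤ Real.log x := by
    have h := (Real.log_le_log_iff (by norm_num : (0:ℝ) < 1/2) hx).2 h1
    rw [show (1:ℝ)/2 = (2:ℝ)⁻¹ by norm_num, Real.log_inv] at h
    exact h
  have habs : |Real.log x| ≤ Real.log 2 := by
    rw [abs_le]
    constructor
    · linarith
    · linarith [Real.log_pos (by norm_num : (1:ℝ) < 2)]
  have h3 : |β * Real.log x| ≤ |β| * Real.log 2 := by
    rw [abs_mul]
    exact mul_le_mul_of_nonneg_left habs (abs_nonneg β)
  calc -|β| * Real.log 2 = -(|β| * Real.log 2) := by ring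
    _ ≤ -|β * Real.log x| := by linarith
    _ ≤ β * Real.log x := neg_abs_le _
    _ = Real.log x * β := by ring

lemma rpow_lb_dyadic (k : ℕ) {β x : ℝ} (hβ : β ≤ -1) (hx0 : 0 < x)
    (hxk : x ≤ (1/2:ℝ)^k) : (2:ℝ)^k ≤ x ^ β := by
  rw [Real.rpow_def_of_pos hx0]
  have hlog2pos : (0:ℝ) < Real.log 2 := Real.log_pos (by norm_num)
  have hlog : Real.log x ≤ -((k:ℝ) * Real.log 2) := by
    have h := (Real.log_le_log_iff hx0 (by positivity)).2 hxk
    rw [Real.log_pow, show (1:ℝ)/2 = (2:ℝ)⁻¹ by norm_num, Real.log_inv] at h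
    calc Real.log x ≤ (k:ℝ) * -Real.log 2 := h
      _ = -((k:ℝ) * Real.log 2) := by ring
  have h1 : (k:ℝ) * Real.log 2 ≤ β * Real.log x := by
    have h2 : β * (-((k:ℝ) * Real.log 2)) ≤ β * Real.log x :=
      mul_le_mul_of_nonpos_left hlog (by linarith)
    have h3 : (k:ℝ) * Real.log 2 ≤ (-β) * ((k:ℝ) * Real.log 2) := by
      have hkl : (0:ℝ) ≤ (k:ℝ) * Real.log 2 := by positivity
      nlinarith
    calc (k:ℝ) * Real.log 2 ≤ (-β) * ((k:ℝ) * Real.log 2) := h3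
      _ = β * (-((k:ℝ) * Real.log 2)) := by ring
      _ ≤ β * Real.log x := h2
  calc (2:ℝ)^k = Real.exp (Real.log 2) ^ k := by rw [Real.exp_log (by norm_num)]
    _ = Real.exp ((k:ℝ) * Real.log 2) := (Real.exp_nat_mul _ _).symm
    _ ≤ Real.exp (β * Real.log x) := Real.exp_le_exp.2 h1
    _ = Real.exp (Real.log x * β) := by rw [mul_comm]
set_option maxHeartbeats 2000000 in
/-- Necessary conditions for posterior propriety for binomial GLMMs when
the random-effects design matrix Z has full column rank (Theorem 4 of
Rao & Roy): with a flat prior on β, priors π(τ_j) ∝ τ_j^{a_j-1} e^{-b_j τ_j}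
with b_j ≥ 0, and 0 < F < 1 everywhere, finiteness of the marginal c(y)
forces X to have full column rank p, the existence of a strictly positive
vector e with eᵀ X*_△ = 0, and a_j + q_j/2 > 0 for every j. -/
theorem binomial_glmm_necessary_conditions_Z_full_rank
    (n p r : ℕ) (hn : 0 < n) (hp : 0 < p) (hr : 0 < r)
    (qv : Fin r → ℕ) (hqv : ∀ j, 0 < qv j)
    (X : Matrix (Fin n) (Fin p) ℝ)
    (Z : (i : Fin n) → (j : Fin r) → Fin (qv j) → ℝ)
    -- Z has full column rank q
    (hZrank :
      (Matrix.of fun (i : Fin n) (s : (j : Fin r) × Fin (qv j)) => Z i s.1 s.2).rank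
        = ∑ j, qv j)
    (μ : Measure ℝ) [IsProbabilityMeasure μ]
    (F : ℝ → ℝ) (hF : ∀ x, F x = (μ (Iic x)).toReal)
    (hF01 : ∀ x : ℝ, 0 < F x ∧ F x < 1)
    (m y : Fin n → ℕ) (hm : ∀ i, 1 ≤ m i) (hy : ∀ i, y i ≤ m i)
    (a b : Fin r → ℝ) (hb : ∀ j, 0 ≤ b j)
    -- posterior propriety
    (hcy :
      (∫⁻ τ : Fin r → ℝ in Set.univ.pi fun _ => Ioi (0 : ℝ),
        ∫⁻ β : Fin p → ℝ,
          ∫⁻ u : (j : Fin r) → Fin (qv j) → ℝ,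
            ENNReal.ofReal (
              (∏ i : Fin n,
                (Nat.choose (m i) (y i) : ℝ) *
                  F (∑ c, X i c * β c + ∑ j, ∑ s, Z i j s * u j s) ^ (y i) *
                  (1 - F (∑ c, X i c * β c + ∑ j, ∑ s, Z i j s * u j s)) ^ (m i - y i)) *
              ((2 * Real.pi) ^ (-(((∑ j, qv j : ℕ)) : ℝ) / 2) *
                ∏ j : Fin r,
                  τ j ^ ((qv j : ℝ) / 2) * Real.exp (-(τ j) * (∑ s, (u j s) ^ 2) / 2)) *
              (∏ j : Fin r, τ j ^ (a j - 1) * Real.exp (-(b j) * τ j)))) < ⊤) :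
    X.rank = p ∧
    (∃ e : Fin n ⊕ {i : Fin n // 0 < y i ∧ y i < m i} → ℝ,
      (∀ row, 0 < e row) ∧
      ∀ c : Fin p,
        (∑ i : Fin n, e (Sum.inl i) * ((if y i < m i then (1 : ℝ) else -1) * X i c)) +
          (∑ i : {i : Fin n // 0 < y i ∧ y i < m i}, e (Sum.inr i) * (-(X i.1 c))) = 0) ∧
    ∀ j, 0 < a j + (qv j : ℝ) / 2 := by
  classical
  -- basic facts about F
  have hFmono : Monotone F := fun x1 x2 h12 => by
    rw [hF x1, hF x2]
    exact ENNReal.toReal_mono (measure_ne_top μ _) (measure_mono (Iic_subset_Iic.2 h12))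
  have hF0 : ∀ x, 0 < F x := fun x => (hF01 x).1
  have hF1 : ∀ x, F x < 1 := fun x => (hF01 x).2
  -- abbreviations
  set T : (Fin p → ℝ) → ((j : Fin r) → Fin (qv j) → ℝ) → Fin n → ℝ :=
    fun β u i => ∑ c, X i c * β c + ∑ j, ∑ s, Z i j s * u j s with hT
  set Pl : (Fin p → ℝ) → ((j : Fin r) → Fin (qv j) → ℝ) → ℝ :=
    fun β u => ∏ i, (Nat.choose (m i) (y i) : ℝ) * F (T β u i) ^ (y i) *
      (1 - F (T β u i)) ^ (m i - y i) with hPl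
  set Gf : (Fin r → ℝ) → ((j : Fin r) → Fin (qv j) → ℝ) → ℝ :=
    fun τ u => (2 * Real.pi) ^ (-(((∑ j, qv j : ℕ)) : ℝ) / 2) *
      ∏ j, τ j ^ ((qv j : ℝ) / 2) * Real.exp (-(τ j) * (∑ s, (u j s) ^ 2) / 2) with hGf
  set Hf : (Fin r → ℝ) → ℝ :=
    fun τ => ∏ j, τ j ^ (a j - 1) * Real.exp (-(b j) * τ j) with hHf
  set I : (Fin r → ℝ) → (Fin p → ℝ) → ((j : Fin r) → Fin (qv j) → ℝ) → ℝ≥0∞ :=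
    fun τ β u => ENNReal.ofReal (Pl β u * Gf τ u * Hf τ) with hI
  set S : Set (Fin r → ℝ) := Set.univ.pi fun _ => Ioi (0 : ℝ) with hS
  have hcy' : (∫⁻ τ in S, ∫⁻ β, ∫⁻ u, I τ β u) < ⊤ := hcy
  have hSm : MeasurableSet S := MeasurableSet.univ_pi fun _ => measurableSet_Ioi
  -- the boxes
  set Box : Set (Fin p → ℝ) := Set.univ.pi fun _ => Icc (-1 : ℝ) 1 with hBox
  set UB : Set ((j : Fin r) → Fin (qv j) → ℝ) :=
    Set.univ.pi fun j => Set.univ.pi fun _ => Icc (-1 : ℝ) 1 with hUB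
  have hBoxm : MeasurableSet Box := MeasurableSet.univ_pi fun _ => measurableSet_Icc
  have hUBm : MeasurableSet UB :=
    MeasurableSet.univ_pi fun j => MeasurableSet.univ_pi fun _ => measurableSet_Icc
  set VB : ℝ≥0∞ := volume Box with hVB
  set VU : ℝ≥0∞ := volume UB with hVU
  have hVBeq : VB = ∏ _c : Fin p, ENNReal.ofReal 2 := by
    rw [hVB, hBox, volume_pi_pi]
    refine Finset.prod_congr rfl fun c _ => ?_
    rw [Real.volume_Icc]; norm_num
  have hVUeq : VU = ∏ j : Fin r, ∏ _s : Fin (qv j), ENNReal.ofReal 2 := by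
    rw [hVU, hUB, volume_pi_pi]
    refine Finset.prod_congr rfl fun j _ => ?_
    rw [volume_pi_pi]
    refine Finset.prod_congr rfl fun s _ => ?_
    rw [Real.volume_Icc]; norm_num
  have h2pos : (0:ℝ≥0∞) < ENNReal.ofReal 2 := ENNReal.ofReal_pos.2 (by norm_num)
  have hVB0 : 0 < VB := by
    rw [hVBeq]; exact CanonicallyOrderedAdd.prod_pos.2 fun _ _ => h2pos
  have hVBt : VB < ⊤ := by
    rw [hVBeq]; exact ENNReal.prod_lt_top fun _ _ => ENNReal.ofReal_lt_top
  have hVU0 : 0 < VU := by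
    rw [hVUeq]
    exact CanonicallyOrderedAdd.prod_pos.2 fun j _ =>
      CanonicallyOrderedAdd.prod_pos.2 fun s _ => h2pos
  have hVUt : VU < ⊤ := by
    rw [hVUeq]
    exact ENNReal.prod_lt_top fun j _ => ENNReal.prod_lt_top fun s _ => ENNReal.ofReal_lt_top
  -- lower bound for the likelihood on boxes
  set Rb : Fin n → ℝ := fun i => (∑ c, |X i c|) + (∑ j, ∑ s, |Z i j s|) with hRb
  have hTbound : ∀ β ∈ Box, ∀ u ∈ UB, ∀ i, |T β u i| ≤ Rb i := by
    intro β hβ u hu i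
    have h1 : |∑ c, X i c * β c| ≤ ∑ c, |X i c| := by
      refine (Finset.abs_sum_le_sum_abs _ _).trans (Finset.sum_le_sum fun c _ => ?_)
      rw [abs_mul]
      have hβc : |β c| ≤ 1 := abs_le.2 ⟨(hβ c (mem_univ c)).1, (hβ c (mem_univ c)).2⟩
      calc |X i c| * |β c| ≤ |X i c| * 1 := mul_le_mul_of_nonneg_left hβc (abs_nonneg _)
        _ = |X i c| := mul_one _
    have h2 : |∑ j, ∑ s, Z i j s * u j s| ≤ ∑ j, ∑ s, |Z i j s| := by
      refine (Finset.abs_sum_le_sum_abs _ _).trans (Finset.sum_le_sum fun j _ => ?_)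
      refine (Finset.abs_sum_le_sum_abs _ _).trans (Finset.sum_le_sum fun s _ => ?_)
      rw [abs_mul]
      have hus : |u j s| ≤ 1 := by
        have := (hu j (mem_univ j)) s (mem_univ s)
        exact abs_le.2 ⟨this.1, this.2⟩
      calc |Z i j s| * |u j s| ≤ |Z i j s| * 1 := mul_le_mul_of_nonneg_left hus (abs_nonneg _)
        _ = |Z i j s| := mul_one _
    calc |T β u i| ≤ |∑ c, X i c * β c| + |∑ j, ∑ s, Z i j s * u j s| := abs_add_le _ _
      _ ≤ Rb i := add_le_add h1 h2
  set ε : Fin n → ℝ := fun i => F (-(Rb i)) ^ (y i) * (1 - F (Rb i)) ^ (m i - y i) with hε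
  have hεpos : ∀ i, 0 < ε i := fun i =>
    mul_pos (pow_pos (hF0 _) _) (pow_pos (by linarith [hF1 (Rb i)]) _)
  set ε0 : ℝ := ∏ i, ε i with hε0def
  have hε0 : 0 < ε0 := Finset.prod_pos fun i _ => hεpos i
  have hterm_nonneg : ∀ β u i, 0 ≤ (Nat.choose (m i) (y i) : ℝ) * F (T β u i) ^ (y i) *
      (1 - F (T β u i)) ^ (m i - y i) := by
    intro β u i
    exact mul_nonneg (mul_nonneg (Nat.cast_nonneg _) (pow_nonneg (hF0 _).le _))
      (pow_nonneg (by linarith [hF1 (T β u i)]) _)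
  have hPlB : ∀ β ∈ Box, ∀ u ∈ UB, ε0 ≤ Pl β u := by
    intro β hβ u hu
    refine Finset.prod_le_prod (fun i _ => (hεpos i).le) fun i _ => ?_
    have habs := hTbound β hβ u hu i
    have h1 : ε i ≤ F (T β u i) ^ (y i) * (1 - F (T β u i)) ^ (m i - y i) :=
      term_lb hFmono hF0 hF1 _ _ (neg_le_of_abs_le habs) (le_of_abs_le habs)
    have hch : (1:ℝ) ≤ (Nat.choose (m i) (y i) : ℝ) := by
      exact_mod_cast Nat.one_le_iff_ne_zero.2 (Nat.choose_pos (hy i)).ne'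
    rw [mul_assoc]
    refine h1.trans (le_mul_of_one_le_left ?_ hch)
    exact mul_nonneg (pow_nonneg (hF0 _).le _) (pow_nonneg (by linarith [hF1 (T β u i)]) _)
  -- lower bound for the Gaussian factor
  set Gmin : (Fin r → ℝ) → ℝ := fun τ => (2 * Real.pi) ^ (-(((∑ j, qv j : ℕ)) : ℝ) / 2) *
    ∏ j, τ j ^ ((qv j : ℝ) / 2) * Real.exp (-(τ j) * (qv j : ℝ) / 2) with hGmin
  have hSmem : ∀ τ : Fin r → ℝ, τ ∈ S → ∀ j, 0 < τ j := fun τ hτ j => hτ j (mem_univ j)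
  have h2pi : (0:ℝ) < 2 * Real.pi := by positivity
  have hGminPos : ∀ τ ∈ S, 0 < Gmin τ := by
    intro τ hτ
    exact mul_pos (Real.rpow_pos_of_pos h2pi _)
      (Finset.prod_pos fun j _ =>
        mul_pos (Real.rpow_pos_of_pos (hSmem τ hτ j) _) (Real.exp_pos _))
  have hHfPos : ∀ τ ∈ S, 0 < Hf τ := by
    intro τ hτ
    exact Finset.prod_pos fun j _ =>
      mul_pos (Real.rpow_pos_of_pos (hSmem τ hτ j) _) (Real.exp_pos _)
  have hGfB : ∀ τ ∈ S, ∀ u ∈ UB, Gmin τ ≤ Gf τ u := by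
    intro τ hτ u hu
    refine mul_le_mul_of_nonneg_left (Finset.prod_le_prod ?_ ?_)
      (Real.rpow_nonneg h2pi.le _)
    · intro j _
      exact (mul_pos (Real.rpow_pos_of_pos (hSmem τ hτ j) _) (Real.exp_pos _)).le
    · intro j _
      refine mul_le_mul_of_nonneg_left (Real.exp_le_exp.2 ?_)
        (Real.rpow_nonneg (hSmem τ hτ j).le _)
      have hsq : ∑ s, (u j s) ^ 2 ≤ (qv j : ℝ) := by
        calc ∑ s, (u j s) ^ 2 ≤ ∑ _s : Fin (qv j), (1:ℝ) := by
              refine Finset.sum_le_sum fun s _ => ?_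
              have := (hu j (mem_univ j)) s (mem_univ s)
              nlinarith [this.1, this.2]
          _ = (qv j : ℝ) := by simp
      have := mul_le_mul_of_nonneg_left hsq (hSmem τ hτ j).le
      linarith
  -- core pointwise bound
  have hIB : ∀ τ ∈ S, ∀ (β : Fin p → ℝ) u, u ∈ UB → ε0 ≤ Pl β u →
      ENNReal.ofReal (ε0 * (Gmin τ * Hf τ)) ≤ I τ β u := by
    intro τ hτ β u hu hP
    apply ENNReal.ofReal_le_ofReal
    have hG := hGfB τ hτ u hu
    have hGm := hGminPos τ hτ
    have hH := hHfPos τ hτ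
    have hPl0 : (0:ℝ) ≤ Pl β u := le_trans hε0.le hP
    calc ε0 * (Gmin τ * Hf τ) = (ε0 * Gmin τ) * Hf τ := by ring
      _ ≤ (Pl β u * Gf τ u) * Hf τ :=
          mul_le_mul_of_nonneg_right (mul_le_mul hP hG hGm.le hPl0) hH.le
  -- inner u-integral bound
  have hInner : ∀ τ ∈ S, ∀ β : Fin p → ℝ, (∀ u ∈ UB, ε0 ≤ Pl β u) →
      ENNReal.ofReal (ε0 * (Gmin τ * Hf τ)) * VU ≤ ∫⁻ u, I τ β u := by
    intro τ hτ β hP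
    have hpt : ∀ u, UB.indicator (fun _ => ENNReal.ofReal (ε0 * (Gmin τ * Hf τ))) u
        ≤ I τ β u := by
      intro u
      by_cases hu : u ∈ UB
      · rw [Set.indicator_of_mem hu]; exact hIB τ hτ β u hu (hP u hu)
      · rw [Set.indicator_of_notMem hu]; exact zero_le
    calc ENNReal.ofReal (ε0 * (Gmin τ * Hf τ)) * VU
        = ∫⁻ u, UB.indicator (fun _ => ENNReal.ofReal (ε0 * (Gmin τ * Hf τ))) u := by
          rw [lintegral_indicator hUBm, setLIntegral_const]
      _ ≤ ∫⁻ u, I τ β u := lintegral_mono hpt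
  -- the sign matrix
  set A : (Fin n ⊕ {i : Fin n // 0 < y i ∧ y i < m i}) → Fin p → ℝ :=
    Sum.elim (fun i c => (if y i < m i then (1:ℝ) else -1) * X i c)
      (fun i c => -(X i.1 c)) with hA
  -- KEY: no nonzero direction with all row products ≤ 0
  have hkey : ∀ η : Fin p → ℝ, (∀ io, ∑ c, A io c * η c ≤ 0) → η = 0 := by
    intro η hrow
    by_contra hηne
    set v : Fin n → ℝ := fun i => ∑ c, X i c * η c with hv
    have hrow_inl : ∀ i : Fin n,
        ∑ c, A (Sum.inl i) c * η c = (if y i < m i then (1:ℝ) else -1) * v i := by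
      intro i
      rw [hv, Finset.mul_sum]
      exact Finset.sum_congr rfl fun c _ => by simp [hA]
    have hrow_inr : ∀ i : {i : Fin n // 0 < y i ∧ y i < m i},
        ∑ c, A (Sum.inr i) c * η c = -(v i.1) := by
      intro i
      rw [hv, ← Finset.sum_neg_distrib]
      exact Finset.sum_congr rfl fun c _ => by simp [hA]
    have hvsign : ∀ i, (0 < y i → 0 ≤ v i) ∧ (y i < m i → v i ≤ 0) := by
      intro i
      constructor
      · intro hyi
        by_cases him : y i < m i
        · have := hrow (Sum.inr ⟨i, hyi, him⟩)
          rw [hrow_inr] at this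
          linarith
        · have := hrow (Sum.inl i)
          rw [hrow_inl, if_neg him] at this
          linarith
      · intro him
        have := hrow (Sum.inl i)
        rw [hrow_inl, if_pos him, one_mul] at this
        exact this
    have hTshift : ∀ β u (t:ℝ) i, T (β + t • η) u i = T β u i + t * v i := by
      intro β u t i
      simp only [hT, hv, Pi.add_apply, Pi.smul_apply, smul_eq_mul]
      have hsum : ∑ c, X i c * (β c + t * η c)
          = (∑ c, X i c * β c) + t * ∑ c, X i c * η c := by
        rw [Finset.mul_sum, ← Finset.sum_add_distrib]
        exact Finset.sum_congr rfl fun c _ => by ring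
      rw [hsum]; ring
    have hPmono : ∀ β u (t:ℝ), 0 ≤ t → Pl β u ≤ Pl (β + t • η) u := by
      intro β u t ht
      refine Finset.prod_le_prod (fun i _ => hterm_nonneg β u i) fun i _ => ?_
      rw [hTshift]
      have hmon := term_mono hFmono hF0 hF1 (y i) (m i) (x := T β u i)
        (x' := T β u i + t * v i)
        (fun hyi => le_add_of_nonneg_right (mul_nonneg ht ((hvsign i).1 hyi)))
        (fun him => by nlinarith [(hvsign i).2 him])
      rw [mul_assoc, mul_assoc]
      exact mul_le_mul_of_nonneg_left hmon (Nat.cast_nonneg _)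
    obtain ⟨c0, hc0⟩ : ∃ c0, η c0 ≠ 0 := Function.ne_iff.1 hηne
    set tk : ℕ → ℝ := fun k => k * (3 / |η c0|) with htk
    have htknn : ∀ k, 0 ≤ tk k := fun k => by
      have : (0:ℝ) < |η c0| := abs_pos.2 hc0
      positivity
    set Qk : ℕ → Set (Fin p → ℝ) :=
      fun k => Set.univ.pi fun c => Icc (tk k * η c - 1) (tk k * η c + 1) with hQk
    have hQkm : ∀ k, MeasurableSet (Qk k) :=
      fun k => MeasurableSet.univ_pi fun c => measurableSet_Icc
    have hQksub : ∀ k (β : Fin p → ℝ), β ∈ Qk k → β - tk k • η ∈ Box := by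
      intro k β hβ c _
      have := hβ c (mem_univ c)
      simp only [Pi.sub_apply, Pi.smul_apply, smul_eq_mul, mem_Icc]
      constructor <;> [linarith [this.1]; linarith [this.2]]
    have hQkdisj : ∀ k l, k ≠ l → ∀ β, β ∈ Qk k → β ∉ Qk l := by
      intro k l hkl β hk hl
      have h1 := hk c0 (mem_univ c0)
      have h2 := hl c0 (mem_univ c0)
      have habs : |tk k * η c0 - tk l * η c0| ≤ 2 := by
        rw [abs_le]
        constructor <;> [linarith [h1.1, h1.2, h2.1, h2.2]; linarith [h1.1, h1.2, h2.1, h2.2]]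
      have hane : (0:ℝ) < |η c0| := abs_pos.2 hc0
      have heq : |tk k * η c0 - tk l * η c0| = 3 * |(k:ℝ) - (l:ℝ)| := by
        have hre : tk k * η c0 - tk l * η c0 = ((k:ℝ) - (l:ℝ)) * (3 / |η c0|) * η c0 := by
          simp only [htk]; ring
        rw [hre, abs_mul, abs_mul, abs_div, abs_abs, abs_of_pos (by norm_num : (0:ℝ) < 3)]
        field_simp
      have hkl1 : (1:ℝ) ≤ |(k:ℝ) - (l:ℝ)| := by
        rcases hkl.lt_or_gt with h | h
        · have : (k:ℝ) + 1 ≤ (l:ℝ) := by exact_mod_cast Nat.succ_le_of_lt h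
          rw [abs_sub_comm, abs_of_nonneg (by linarith)]
          linarith
        · have : (l:ℝ) + 1 ≤ (k:ℝ) := by exact_mod_cast Nat.succ_le_of_lt h
          rw [abs_of_nonneg (by linarith)]
          linarith
      rw [heq] at habs
      linarith
    have hQkvol : ∀ k, volume (Qk k) = VB := by
      intro k
      rw [hQk, hVBeq]
      rw [volume_pi_pi]
      refine Finset.prod_congr rfl fun c _ => ?_
      rw [Real.volume_Icc]
      norm_num
    have hmid : ∀ τ, τ ∈ S → (∫⁻ β, ∫⁻ u, I τ β u) = ⊤ := by
      intro τ hτ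
      have hval : 0 < ε0 * (Gmin τ * Hf τ) :=
        mul_pos hε0 (mul_pos (hGminPos τ hτ) (hHfPos τ hτ))
      have hDpos : 0 < ENNReal.ofReal (ε0 * (Gmin τ * Hf τ)) * VU :=
        ENNReal.mul_pos (ENNReal.ofReal_pos.2 hval).ne' hVU0.ne'
      refine lintegral_top_of_indicators volume _ Qk hQkm hQkdisj
        (fun _ => ENNReal.ofReal (ε0 * (Gmin τ * Hf τ)) * VU) ?_
        (ENNReal.ofReal (ε0 * (Gmin τ * Hf τ)) * VU * VB) ?_ ?_
      · intro k β hβ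
        refine hInner τ hτ β fun u hu => ?_
        calc ε0 ≤ Pl (β - tk k • η) u := hPlB _ (hQksub k β hβ) u hu
          _ ≤ Pl ((β - tk k • η) + tk k • η) u := hPmono _ u _ (htknn k)
          _ = Pl β u := by rw [sub_add_cancel]
      · exact ENNReal.mul_pos hDpos.ne' hVB0.ne'
      · intro k
        rw [hQkvol k]
    have : (∫⁻ τ in S, ∫⁻ β, ∫⁻ u, I τ β u) = ⊤ := by
      have hbound := setLIntegral_mono' (μ := volume) hSm
        (f := fun _ : Fin r → ℝ => (⊤ : ℝ≥0∞)) (g := fun τ => ∫⁻ β, ∫⁻ u, I τ β u)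
        (fun τ hτ => (hmid τ hτ).ge)
      rw [setLIntegral_const] at hbound
      have hvolS : volume S ≠ 0 := by
        rw [hS, volume_pi_pi]
        rw [Finset.prod_ne_zero_iff]
        intro j _
        rw [Real.volume_Ioi]
        exact ENNReal.top_ne_zero
      rw [ENNReal.top_mul hvolS] at hbound
      exact top_le_iff.1 hbound
    exact absurd this hcy'.ne
  -- Part 1: full column rank
  have hrank : X.rank = p := by
    have hinj : Function.Injective X.mulVecLin := by
      intro v w hvw
      have hsub : X.mulVecLin (v - w) = 0 := by rw [map_sub, hvw, sub_self]
      have hXvw : ∀ i, ∑ c, X i c * (v - w) c = 0 := by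
        intro i
        have := congrFun hsub i
        simpa [Matrix.mulVecLin_apply, Matrix.mulVec, dotProduct] using this
      have hz : v - w = 0 := by
        refine hkey (v - w) fun io => ?_
        cases io with
        | inl i =>
          have : ∑ c, A (Sum.inl i) c * (v - w) c
              = (if y i < m i then (1:ℝ) else -1) * ∑ c, X i c * (v - w) c := by
            rw [Finset.mul_sum]
            exact Finset.sum_congr rfl fun c _ => by simp [hA]
          rw [this, hXvw i, mul_zero]
        | inr i =>
          have : ∑ c, A (Sum.inr i) c * (v - w) c = -(∑ c, X i.1 c * (v - w) c) := by
            rw [← Finset.sum_neg_distrib]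
            exact Finset.sum_congr rfl fun c _ => by simp [hA]
          rw [this, hXvw i.1, neg_zero]
      exact sub_eq_zero.1 hz
    rw [Matrix.rank, LinearMap.finrank_range_of_inj hinj, Module.finrank_fin_fun]
  -- Part 2: positive left null vector via Stiemke
  have hne : Nonempty (Fin n ⊕ {i : Fin n // 0 < y i ∧ y i < m i}) := ⟨Sum.inl ⟨0, hn⟩⟩
  obtain ⟨e, hepos, hesum⟩ := stiemke hp A (fun η hη => by
    by_contra hcon
    push_neg at hcon
    exact hη (hkey η fun io => hcon io))
  have hpart2 : ∃ e : Fin n ⊕ {i : Fin n // 0 < y i ∧ y i < m i} → ℝ,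
      (∀ row, 0 < e row) ∧
      ∀ c : Fin p,
        (∑ i : Fin n, e (Sum.inl i) * ((if y i < m i then (1 : ℝ) else -1) * X i c)) +
          (∑ i : {i : Fin n // 0 < y i ∧ y i < m i}, e (Sum.inr i) * (-(X i.1 c))) = 0 := by
    refine ⟨e, hepos, fun c => ?_⟩
    have := hesum c
    rw [Fintype.sum_sum_type] at this
    simpa [hA] using this
  -- Part 3: shape parameters
  have hpart3 : ∀ j0, 0 < a j0 + (qv j0 : ℝ) / 2 := by
    intro j0
    by_contra hcon
    push_neg at hcon
    set Ak : ℕ → Set (Fin r → ℝ) := fun k =>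
      Set.univ.pi fun j => if j = j0 then Ioc ((1/2:ℝ)^(k+1)) ((1/2:ℝ)^k)
        else Ioc (1/2:ℝ) 1 with hAk
    have hAkm : ∀ k, MeasurableSet (Ak k) := by
      intro k
      refine MeasurableSet.univ_pi fun j => ?_
      by_cases h : j = j0 <;> simp [h, measurableSet_Ioc]
    have hAksub : ∀ k, Ak k ⊆ S := by
      intro k τ hτ j _
      by_cases h : j = j0
      · subst h
        have : τ j ∈ Ioc ((1/2:ℝ)^(k+1)) ((1/2:ℝ)^k) := by simpa using hτ j (mem_univ j)
        exact lt_trans (by positivity) this.1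
      · have : τ j ∈ Ioc (1/2:ℝ) 1 := by simpa [h] using hτ j (mem_univ j)
        exact lt_trans (by norm_num) this.1
    have hAkdisj : ∀ k l, k ≠ l → ∀ τ, τ ∈ Ak k → τ ∉ Ak l := by
      intro k l hkl τ hk hl
      have h1 : τ j0 ∈ Ioc ((1/2:ℝ)^(k+1)) ((1/2:ℝ)^k) := by
        simpa using hk j0 (mem_univ j0)
      have h2 : τ j0 ∈ Ioc ((1/2:ℝ)^(l+1)) ((1/2:ℝ)^l) := by
        simpa using hl j0 (mem_univ j0)
      rcases hkl.lt_or_gt with h | h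
      · have hpow : ((1:ℝ)/2)^l ≤ ((1:ℝ)/2)^(k+1) :=
          pow_le_pow_of_le_one (by norm_num) (by norm_num) (Nat.succ_le_of_lt h)
        linarith [h1.1, h2.2]
      · have hpow : ((1:ℝ)/2)^k ≤ ((1:ℝ)/2)^(l+1) :=
          pow_le_pow_of_le_one (by norm_num) (by norm_num) (Nat.succ_le_of_lt h)
        linarith [h2.1, h1.2]
    have hmid2 : ∀ τ ∈ S, ENNReal.ofReal (ε0 * (Gmin τ * Hf τ)) * VU * VB
        ≤ ∫⁻ β, ∫⁻ u, I τ β u := by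
      intro τ hτ
      have hpt : ∀ β, Box.indicator
          (fun _ => ENNReal.ofReal (ε0 * (Gmin τ * Hf τ)) * VU) β ≤ ∫⁻ u, I τ β u := by
        intro β
        by_cases hβ : β ∈ Box
        · rw [Set.indicator_of_mem hβ]
          exact hInner τ hτ β fun u hu => hPlB β hβ u hu
        · rw [Set.indicator_of_notMem hβ]; exact zero_le
      calc ENNReal.ofReal (ε0 * (Gmin τ * Hf τ)) * VU * VB
          = ∫⁻ β, Box.indicator (fun _ => ENNReal.ofReal (ε0 * (Gmin τ * Hf τ)) * VU) β := by
            rw [lintegral_indicator hBoxm, setLIntegral_const]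
        _ ≤ _ := lintegral_mono hpt
    have hGHsplit : ∀ τ : Fin r → ℝ, Gmin τ * Hf τ
        = (2 * Real.pi) ^ (-(((∑ j, qv j : ℕ)) : ℝ) / 2) *
          ∏ j, (τ j ^ ((qv j : ℝ) / 2) * Real.exp (-(τ j) * (qv j : ℝ) / 2) *
            (τ j ^ (a j - 1) * Real.exp (-(b j) * τ j))) := by
      intro τ
      simp only [hGmin, hHf]
      rw [mul_assoc, ← Finset.prod_mul_distrib]
    set pe : ℝ := (2 * Real.pi) ^ (-(((∑ j, qv j : ℕ)) : ℝ) / 2) with hpe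
    have hpe0 : 0 < pe := Real.rpow_pos_of_pos h2pi _
    set ρ : Fin r → ℝ := fun j => Real.exp (-|a j + (qv j:ℝ)/2 - 1| * Real.log 2) *
      (Real.exp (-((qv j:ℝ))/2) * Real.exp (-(b j))) with hρ
    have hρpos : ∀ j, 0 < ρ j := fun j => by rw [hρ]; positivity
    set ρ0 : ℝ := Real.exp (-((qv j0:ℝ))/2) * Real.exp (-(b j0)) with hρ0def
    have hρ00 : 0 < ρ0 := by rw [hρ0def]; positivity
    have hfac : ∀ k (τ : Fin r → ℝ), τ ∈ Ak k → ∀ j,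
        (if j = j0 then (2:ℝ)^k * ρ0 else ρ j) ≤
          τ j ^ ((qv j : ℝ) / 2) * Real.exp (-(τ j) * (qv j : ℝ) / 2) *
            (τ j ^ (a j - 1) * Real.exp (-(b j) * τ j)) := by
      intro k τ hτ j
      by_cases h : j = j0
      · subst h
        have hmem : τ j ∈ Ioc ((1/2:ℝ)^(k+1)) ((1/2:ℝ)^k) := by simpa using hτ j (mem_univ j)
        have hτ0 : (0:ℝ) < τ j := lt_trans (by positivity) hmem.1
        have hτ1 : τ j ≤ 1 := hmem.2.trans (pow_le_one₀ (by norm_num) (by norm_num))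
        rw [if_pos rfl, hρ0def]
        have hcomb : τ j ^ ((qv j : ℝ)/2) * τ j ^ (a j - 1)
            = τ j ^ (a j + (qv j:ℝ)/2 - 1) := by
          rw [← Real.rpow_add hτ0]; ring_nf
        have hdy : (2:ℝ)^k ≤ τ j ^ (a j + (qv j:ℝ)/2 - 1) :=
          rpow_lb_dyadic k (by linarith) hτ0 hmem.2
        have hexp1 : Real.exp (-((qv j:ℝ))/2) ≤ Real.exp (-(τ j) * (qv j:ℝ)/2) := by
          apply Real.exp_le_exp.2
          nlinarith [Nat.cast_nonneg (α := ℝ) (qv j)]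
        have hexp2 : Real.exp (-(b j)) ≤ Real.exp (-(b j) * τ j) := by
          apply Real.exp_le_exp.2
          nlinarith [hb j]
        calc (2:ℝ)^k * (Real.exp (-((qv j:ℝ))/2) * Real.exp (-(b j)))
            ≤ (τ j ^ (a j + (qv j:ℝ)/2 - 1)) *
              (Real.exp (-(τ j) * (qv j:ℝ)/2) * Real.exp (-(b j) * τ j)) :=
              mul_le_mul hdy (mul_le_mul hexp1 hexp2 (Real.exp_pos _).le (Real.exp_pos _).le)
                (by positivity) (Real.rpow_nonneg hτ0.le _)
          _ = τ j ^ ((qv j : ℝ)/2) * Real.exp (-(τ j) * (qv j:ℝ)/2) *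
              (τ j ^ (a j - 1) * Real.exp (-(b j) * τ j)) := by
              rw [← hcomb]; ring
      · have hmem : τ j ∈ Ioc (1/2:ℝ) 1 := by simpa [h] using hτ j (mem_univ j)
        have hτ0 : (0:ℝ) < τ j := lt_trans (by norm_num) hmem.1
        have hτ1 : τ j ≤ 1 := hmem.2
        rw [if_neg h, hρ]
        have hcomb : τ j ^ ((qv j : ℝ)/2) * τ j ^ (a j - 1)
            = τ j ^ (a j + (qv j:ℝ)/2 - 1) := by
          rw [← Real.rpow_add hτ0]; ring_nf
        have hhalf : Real.exp (-|a j + (qv j:ℝ)/2 - 1| * Real.log 2)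
            ≤ τ j ^ (a j + (qv j:ℝ)/2 - 1) :=
          rpow_lb_of_half _ hmem.1.le hmem.2
        have hexp1 : Real.exp (-((qv j:ℝ))/2) ≤ Real.exp (-(τ j) * (qv j:ℝ)/2) := by
          apply Real.exp_le_exp.2
          nlinarith [Nat.cast_nonneg (α := ℝ) (qv j)]
        have hexp2 : Real.exp (-(b j)) ≤ Real.exp (-(b j) * τ j) := by
          apply Real.exp_le_exp.2
          nlinarith [hb j]
        calc Real.exp (-|a j + (qv j:ℝ)/2 - 1| * Real.log 2) *
              (Real.exp (-((qv j:ℝ))/2) * Real.exp (-(b j)))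
            ≤ (τ j ^ (a j + (qv j:ℝ)/2 - 1)) *
              (Real.exp (-(τ j) * (qv j:ℝ)/2) * Real.exp (-(b j) * τ j)) :=
              mul_le_mul hhalf (mul_le_mul hexp1 hexp2 (Real.exp_pos _).le (Real.exp_pos _).le)
                (by positivity) (Real.rpow_nonneg hτ0.le _)
          _ = τ j ^ ((qv j : ℝ)/2) * Real.exp (-(τ j) * (qv j:ℝ)/2) *
              (τ j ^ (a j - 1) * Real.exp (-(b j) * τ j)) := by
              rw [← hcomb]; ring
    have hGH : ∀ k (τ : Fin r → ℝ), τ ∈ Ak k →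
        pe * ((2:ℝ)^k * ρ0 * ∏ j ∈ Finset.univ.erase j0, ρ j) ≤ Gmin τ * Hf τ := by
      intro k τ hτ
      rw [hGHsplit τ]
      refine mul_le_mul_of_nonneg_left ?_ hpe0.le
      have hsplit : (2:ℝ)^k * ρ0 * ∏ j ∈ Finset.univ.erase j0, ρ j
          = ∏ j, (if j = j0 then (2:ℝ)^k * ρ0 else ρ j) := by
        rw [← Finset.mul_prod_erase Finset.univ _ (Finset.mem_univ j0), if_pos rfl]
        congr 1
        exact Finset.prod_congr rfl fun j hj => by
          rw [if_neg (Finset.ne_of_mem_erase hj)]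
      rw [hsplit]
      refine Finset.prod_le_prod (fun j _ => ?_) (fun j _ => hfac k τ hτ j)
      by_cases h : j = j0
      · rw [if_pos h]
        exact mul_nonneg (pow_nonneg (by norm_num) _) hρ00.le
      · rw [if_neg h]
        exact (hρpos j).le
    set W : ℝ≥0∞ := ∏ j ∈ Finset.univ.erase j0, ENNReal.ofReal (1/2:ℝ) with hW
    have hvolAk : ∀ k, volume (Ak k) = ENNReal.ofReal ((1/2:ℝ)^(k+1)) * W := by
      intro k
      rw [hAk]
      rw [volume_pi_pi]
      have hv : ∀ j, volume (if j = j0 then Ioc ((1/2:ℝ)^(k+1)) ((1/2:ℝ)^k)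
          else Ioc (1/2:ℝ) 1)
          = if j = j0 then ENNReal.ofReal ((1/2:ℝ)^(k+1)) else ENNReal.ofReal (1/2:ℝ) := by
        intro j
        by_cases h : j = j0
        · rw [if_pos h, if_pos h, Real.volume_Ioc]
          congr 1
          rw [pow_succ]; ring
        · rw [if_neg h, if_neg h, Real.volume_Ioc]; norm_num
      rw [Finset.prod_congr rfl fun j _ => hv j]
      rw [← Finset.mul_prod_erase Finset.univ _ (Finset.mem_univ j0), if_pos rfl, hW]
      congr 1
      exact Finset.prod_congr rfl fun j hj => by rw [if_neg (Finset.ne_of_mem_erase hj)]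
    have hW0 : W ≠ 0 := by
      rw [hW]
      exact (CanonicallyOrderedAdd.prod_pos.2 fun j _ =>
        ENNReal.ofReal_pos.2 (by norm_num)).ne'
    have hprodρ : (0:ℝ) < ∏ j ∈ Finset.univ.erase j0, ρ j :=
      Finset.prod_pos fun j _ => hρpos j
    have htop : (∫⁻ τ in S, ∫⁻ β, ∫⁻ u, I τ β u) = ⊤ := by
      refine lintegral_top_of_indicators (volume.restrict S) _ Ak hAkm hAkdisj
        (fun k => ENNReal.ofReal
          (ε0 * (pe * ((2:ℝ)^k * ρ0 * ∏ j ∈ Finset.univ.erase j0, ρ j))) * VU * VB)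
        ?_ (ENNReal.ofReal
          (ε0 * (pe * (ρ0 * ∏ j ∈ Finset.univ.erase j0, ρ j)) * (1/2)) * VU * VB * W)
        ?_ ?_
      · intro k τ hτ
        have hτS := hAksub k hτ
        refine le_trans ?_ (hmid2 τ hτS)
        refine mul_le_mul_left (mul_le_mul_left (ENNReal.ofReal_le_ofReal ?_) _) _
        exact mul_le_mul_of_nonneg_left (hGH k τ hτ) hε0.le
      · have hc0 : (0:ℝ) < ε0 * (pe * (ρ0 * ∏ j ∈ Finset.univ.erase j0, ρ j)) * (1/2) :=
          mul_pos (mul_pos hε0 (mul_pos hpe0 (mul_pos hρ00 hprodρ))) (by norm_num)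
        refine ENNReal.mul_pos ?_ hW0
        refine (ENNReal.mul_pos ?_ hVB0.ne').ne'
        refine (ENNReal.mul_pos (ENNReal.ofReal_pos.2 hc0).ne' hVU0.ne').ne'
      · intro k
        rw [Measure.restrict_apply (hAkm k),
          Set.inter_eq_self_of_subset_left (hAksub k), hvolAk k]
        have hpow : (2:ℝ)^k * (1/2:ℝ)^(k+1) = 1/2 := by
          rw [pow_succ, ← mul_assoc, ← mul_pow]
          norm_num
        have hnn : (0:ℝ) ≤ ε0 * (pe * ((2:ℝ)^k * ρ0 * ∏ j ∈ Finset.univ.erase j0, ρ j)) :=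
          (mul_pos hε0 (mul_pos hpe0 (mul_pos (mul_pos (pow_pos (by norm_num) k) hρ00)
            hprodρ))).le
        have hEk : ε0 * (pe * (ρ0 * ∏ j ∈ Finset.univ.erase j0, ρ j)) * (1/2)
            = ε0 * (pe * ((2:ℝ)^k * ρ0 * ∏ j ∈ Finset.univ.erase j0, ρ j)) *
              ((1/2:ℝ)^(k+1)) := by
          calc ε0 * (pe * (ρ0 * ∏ j ∈ Finset.univ.erase j0, ρ j)) * (1/2)
              = ε0 * (pe * (ρ0 * ∏ j ∈ Finset.univ.erase j0, ρ j)) *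
                ((2:ℝ)^k * (1/2:ℝ)^(k+1)) := by rw [hpow]
            _ = ε0 * (pe * ((2:ℝ)^k * ρ0 * ∏ j ∈ Finset.univ.erase j0, ρ j)) *
                ((1/2:ℝ)^(k+1)) := by ring
        rw [hEk, ENNReal.ofReal_mul hnn]
        exact le_of_eq (by ring)
    exact absurd htop hcy'.ne
  exact ⟨hrank, hpart2, hpart3⟩
end

section
/- Consider binary data (m_i = 1, y_i ∈ {0,1}) in a GLMM with flat prior on β and priors π(τ_j) ∝ τ_j^{a_j−1} e^{−b_j τ_j} with b_j ≥ 0. Assume 0 < F(x) < 1 for all x ∈ ℝ. If c(y) < ∞ (posterior propriety), then necessarily: (1) X has full column rank p; and (2) a_j + q_j/2 > 0 for every j = 1,…,r. -/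
open MeasureTheory Set

open scoped ENNReal

private lemma glmm_aux_double_lower {B U : Type*} [MeasureSpace B] [MeasureSpace U]
    (f : B → U → ℝ≥0∞) {s : Set B} {t : Set U}
    (hs : MeasurableSet s) (ht : MeasurableSet t) (c : ℝ≥0∞)
    (h : ∀ β ∈ s, ∀ u ∈ t, c ≤ f β u) :
    (c * volume t) * volume s ≤ ∫⁻ β, ∫⁻ u, f β u := by
  have h1 : ∀ β, s.indicator (fun _ => c * volume t) β ≤ ∫⁻ u, f β u := by
    intro β
    by_cases hβ : β ∈ s
    · rw [Set.indicator_of_mem hβ]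
      calc c * volume t = ∫⁻ u, t.indicator (fun _ => c) u :=
            (lintegral_indicator_const ht c).symm
        _ ≤ ∫⁻ u, f β u := lintegral_mono fun u => by
            by_cases hu : u ∈ t
            · rw [Set.indicator_of_mem hu]; exact h β hβ u hu
            · rw [Set.indicator_of_notMem hu]; exact zero_le
    · rw [Set.indicator_of_notMem hβ]; exact zero_le
  calc (c * volume t) * volume s = ∫⁻ β, s.indicator (fun _ => c * volume t) β :=
        (lintegral_indicator_const hs _).symm
    _ ≤ ∫⁻ β, ∫⁻ u, f β u := lintegral_mono h1

private lemma glmm_aux_shell {α : Type*} [MeasureSpace α] {S : Set α}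
    (Φ : α → ℝ≥0∞) (A : ℕ → Set α) (hA : ∀ m, MeasurableSet (A m))
    (hAS : ∀ m, A m ⊆ S) (hdisj : ∀ m m' (x : α), x ∈ A m → x ∈ A m' → m = m')
    (g : ℕ → ℝ≥0∞) (hΦ : ∀ m, ∀ τ ∈ A m, g m ≤ Φ τ)
    (δ : ℝ≥0∞) (hδ : δ ≠ 0) (hδg : ∀ m, δ ≤ g m * volume (A m)) :
    ∫⁻ τ in S, Φ τ = ⊤ := by
  apply top_le_iff.mp
  calc (⊤:ℝ≥0∞) = ∑' _m : ℕ, δ := (ENNReal.tsum_const_eq_top_of_ne_zero hδ).symm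
    _ ≤ ∑' m, g m * volume (A m) := ENNReal.tsum_le_tsum hδg
    _ = ∑' m, ∫⁻ τ in S, (A m).indicator (fun _ => g m) τ := by
        refine tsum_congr fun m => ?_
        rw [lintegral_indicator_const (hA m), Measure.restrict_apply (hA m),
          inter_eq_self_of_subset_left (hAS m)]
    _ = ∫⁻ τ in S, ∑' m, (A m).indicator (fun _ => g m) τ :=
        (lintegral_tsum fun m => (measurable_const.indicator (hA m)).aemeasurable).symm
    _ ≤ ∫⁻ τ in S, Φ τ := by
        apply lintegral_mono
        intro τ
        show (∑' m, (A m).indicator (fun _ => g m) τ) ≤ Φ τ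
        by_cases hτ : ∃ m, τ ∈ A m
        · obtain ⟨m, hm⟩ := hτ
          rw [tsum_eq_single m
            (fun m' hm' => Set.indicator_of_notMem (fun hmem => hm' (hdisj m' m τ hmem hm)) _)]
          rw [Set.indicator_of_mem hm]
          exact hΦ m τ hm
        · push_neg at hτ
          rw [tsum_congr (fun m => Set.indicator_of_notMem (hτ m) _), tsum_zero]
          exact zero_le

private lemma glmm_aux_const_top {α : Type*} [MeasureSpace α] {S : Set α}
    (hS : MeasurableSet S) (hS0 : volume S ≠ 0) (Φ : α → ℝ≥0∞)
    (hΦ : ∀ τ ∈ S, Φ τ = ⊤) : ∫⁻ τ in S, Φ τ = ⊤ := by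
  apply top_le_iff.mp
  calc (⊤:ℝ≥0∞) = ⊤ * volume S := (ENNReal.top_mul hS0).symm
    _ = ∫⁻ _τ in S, ⊤ := (setLIntegral_const S ⊤).symm
    _ ≤ ∫⁻ τ in S, Φ τ := lintegral_mono_ae ((ae_restrict_iff' hS).mpr
        (ae_of_all _ (fun τ hτ => ge_of_eq (hΦ τ hτ))))

private lemma glmm_aux_tube_volume (n p : ℕ) (X : Matrix (Fin n) (Fin p) ℝ)
    (v : Fin p → ℝ) (hv0 : v ≠ 0) (hvk : ∀ i, ∑ c, X i c * v c = 0) :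
    volume {β : Fin p → ℝ | ∀ i, |∑ c, X i c * β c| ≤ ∑ i, ∑ c, |X i c|} = ⊤ := by
  set MX : ℝ := ∑ i, ∑ c, |X i c| with hMX
  set tube : Set (Fin p → ℝ) := {β | ∀ i, |∑ c, X i c * β c| ≤ MX} with htube
  set v' : Fin p → ℝ := ‖v‖⁻¹ • v with hv'
  have hnv : ‖v‖ ≠ 0 := norm_ne_zero_iff.mpr hv0
  have hv'n : ‖v'‖ = 1 := by
    rw [hv', norm_smul, norm_inv, norm_norm, inv_mul_cancel₀ hnv]
  have hv'k : ∀ i, ∑ c, X i c * v' c = 0 := by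
    intro i
    rw [hv']
    calc ∑ c, X i c * (‖v‖⁻¹ • v) c = ‖v‖⁻¹ * ∑ c, X i c * v c := by
          rw [Finset.mul_sum]; exact Finset.sum_congr rfl fun c _ => by simp; ring
      _ = 0 := by rw [hvk i, mul_zero]
  have hball : ∀ m : ℕ, Metric.ball ((3 * (m:ℝ)) • v') 1 ⊆ tube := by
    intro m β hβ i
    have hnorm : ‖β - (3 * (m:ℝ)) • v'‖ < 1 := mem_ball_iff_norm.mp hβ
    have hco : ∀ c, |β c - 3 * (m:ℝ) * v' c| ≤ 1 := by
      intro c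
      have h := norm_le_pi_norm (β - (3 * (m:ℝ)) • v') c
      simp only [Pi.sub_apply, Pi.smul_apply, smul_eq_mul, Real.norm_eq_abs] at h
      linarith
    have hz : ∑ c, X i c * (3 * (m:ℝ) * v' c) = 0 := by
      calc ∑ c, X i c * (3 * (m:ℝ) * v' c) = 3 * (m:ℝ) * ∑ c, X i c * v' c := by
            rw [Finset.mul_sum]; exact Finset.sum_congr rfl fun c _ => by ring
        _ = 0 := by rw [hv'k i, mul_zero]
    calc |∑ c, X i c * β c|
        = |∑ c, X i c * (β c - 3 * (m:ℝ) * v' c) + ∑ c, X i c * (3 * (m:ℝ) * v' c)| := by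
          rw [← Finset.sum_add_distrib]
          congr 1
          exact Finset.sum_congr rfl fun c _ => by ring
      _ = |∑ c, X i c * (β c - 3 * (m:ℝ) * v' c)| := by rw [hz, add_zero]
      _ ≤ ∑ c, |X i c * (β c - 3 * (m:ℝ) * v' c)| := Finset.abs_sum_le_sum_abs _ _
      _ ≤ ∑ c, |X i c| := Finset.sum_le_sum fun c _ => by
          rw [abs_mul]
          exact mul_le_of_le_one_right (abs_nonneg _) (hco c)
      _ ≤ MX := Finset.single_le_sum (f := fun i => ∑ c, |X i c|)
          (fun i _ => Finset.sum_nonneg fun c _ => abs_nonneg _) (Finset.mem_univ i)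
  have hdisj : Pairwise (Function.onFun Disjoint fun m : ℕ => Metric.ball ((3 * (m:ℝ)) • v') 1) := by
    intro m m' hmm'
    rw [Function.onFun]
    apply Metric.ball_disjoint_ball
    rw [dist_eq_norm, ← sub_smul, norm_smul, hv'n, mul_one, Real.norm_eq_abs]
    have h1 : (1:ℝ) ≤ |(m:ℝ) - (m':ℝ)| := by
      rcases lt_or_gt_of_ne hmm' with h' | h'
      · rw [abs_sub_comm, abs_of_pos (by exact_mod_cast sub_pos.mpr (by exact_mod_cast h' : (m:ℝ) < m'))]
        have : (m:ℝ) + 1 ≤ m' := by exact_mod_cast h'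
        linarith
      · rw [abs_of_pos (by exact_mod_cast sub_pos.mpr (by exact_mod_cast h' : (m':ℝ) < m))]
        have : (m':ℝ) + 1 ≤ m := by exact_mod_cast h'
        linarith
    have h2 : |3 * (m:ℝ) - 3 * m'| = 3 * |(m:ℝ) - m'| := by
      rw [show 3 * (m:ℝ) - 3 * m' = 3 * ((m:ℝ) - m') by ring, abs_mul]
      norm_num
    rw [h2]
    linarith
  have hunion : volume (⋃ m : ℕ, Metric.ball ((3 * (m:ℝ)) • v') 1) = ⊤ := by
    rw [measure_iUnion hdisj fun m => measurableSet_ball]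
    have heach : ∀ m : ℕ, volume (Metric.ball ((3 * (m:ℝ)) • v') 1)
        = volume (Metric.ball (0 : Fin p → ℝ) 1) := fun m =>
      Measure.addHaar_ball_center volume _ 1
    rw [tsum_congr heach]
    exact ENNReal.tsum_const_eq_top_of_ne_zero (Metric.measure_ball_pos volume 0 one_pos).ne'
  exact top_le_iff.mp (hunion ▸ measure_mono (iUnion_subset hball))

set_option maxHeartbeats 2000000 in
/-- Necessary conditions for posterior propriety for binary GLMMs
(Corollary 3 of Rao & Roy): with a flat prior on β, priors
π(τ_j) ∝ τ_j^{a_j-1} e^{-b_j τ_j} with b_j ≥ 0, and 0 < F < 1 everywhere,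
finiteness of the marginal c(y) forces X to have full column rank p and
a_j + q_j/2 > 0 for every j. -/
theorem binary_glmm_necessary_conditions
    (n p r : ℕ) (hn : 0 < n) (hp : 0 < p) (hr : 0 < r)
    (qv : Fin r → ℕ) (hqv : ∀ j, 0 < qv j)
    (X : Matrix (Fin n) (Fin p) ℝ)
    (Z : (i : Fin n) → (j : Fin r) → Fin (qv j) → ℝ)
    (μ : Measure ℝ) [IsProbabilityMeasure μ]
    (F : ℝ → ℝ) (hF : ∀ x, F x = (μ (Iic x)).toReal)
    (hF01 : ∀ x : ℝ, 0 < F x ∧ F x < 1)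
    (y : Fin n → ℕ) (hy : ∀ i, y i ≤ 1)
    (a b : Fin r → ℝ) (hb : ∀ j, 0 ≤ b j)
    -- posterior propriety
    (hcy :
      (∫⁻ τ : Fin r → ℝ in Set.univ.pi fun _ => Ioi (0 : ℝ),
        ∫⁻ β : Fin p → ℝ,
          ∫⁻ u : (j : Fin r) → Fin (qv j) → ℝ,
            ENNReal.ofReal (
              (∏ i : Fin n,
                F (∑ c, X i c * β c + ∑ j, ∑ s, Z i j s * u j s) ^ (y i) *
                  (1 - F (∑ c, X i c * β c + ∑ j, ∑ s, Z i j s * u j s)) ^ (1 - y i)) *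
              ((2 * Real.pi) ^ (-(((∑ j, qv j : ℕ)) : ℝ) / 2) *
                ∏ j : Fin r,
                  τ j ^ ((qv j : ℝ) / 2) * Real.exp (-(τ j) * (∑ s, (u j s) ^ 2) / 2)) *
              (∏ j : Fin r, τ j ^ (a j - 1) * Real.exp (-(b j) * τ j)))) < ⊤) :
    X.rank = p ∧ ∀ j, 0 < a j + (qv j : ℝ) / 2 := by
  -- common setup
  have hFmono : Monotone F := by
    intro s t hst
    rw [hF, hF]
    exact ENNReal.toReal_mono (measure_ne_top μ _) (measure_mono (Iic_subset_Iic.mpr hst))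
  set MX : ℝ := ∑ i, ∑ c, |X i c| with hMXdef
  set MZ : ℝ := ∑ i : Fin n, ∑ j, ∑ s, |Z i j s| with hMZdef
  set R : ℝ := MX + MZ with hRdef
  set δ0 : ℝ := min (F (-R)) (1 - F R) with hδ0def
  have hδ0 : 0 < δ0 := lt_min (hF01 _).1 (by linarith [(hF01 R).2])
  have hZb : ∀ (i : Fin n) (u : (j : Fin r) → Fin (qv j) → ℝ),
      (∀ j s, |u j s| ≤ 1) → |∑ j, ∑ s, Z i j s * u j s| ≤ MZ := by
    intro i u hu1
    calc |∑ j, ∑ s, Z i j s * u j s| ≤ ∑ j, |∑ s, Z i j s * u j s| :=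
          Finset.abs_sum_le_sum_abs _ _
      _ ≤ ∑ j, ∑ s, |Z i j s| := Finset.sum_le_sum fun j _ =>
          (Finset.abs_sum_le_sum_abs _ _).trans (Finset.sum_le_sum fun s _ => by
            rw [abs_mul]
            exact mul_le_of_le_one_right (abs_nonneg _) (hu1 j s))
      _ ≤ MZ := Finset.single_le_sum (f := fun i => ∑ j, ∑ s, |Z i j s|)
          (fun i _ => Finset.sum_nonneg fun j _ => Finset.sum_nonneg fun s _ => abs_nonneg _)
          (Finset.mem_univ i)
  have hLike : ∀ (w : Fin n → ℝ), (∀ i, |w i| ≤ R) →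
      δ0 ^ n ≤ ∏ i, F (w i) ^ (y i) * (1 - F (w i)) ^ (1 - y i) := by
    intro w hw
    have key : ∀ i ∈ Finset.univ,
        δ0 ≤ F (w i) ^ (y i) * (1 - F (w i)) ^ (1 - y i) := by
      intro i _
      have h1 := abs_le.mp (hw i)
      rcases Nat.le_one_iff_eq_zero_or_eq_one.mp (hy i) with h | h <;> rw [h]
      · simp only [pow_zero, pow_one, one_mul, Nat.sub_zero]
        have := hFmono h1.2
        exact le_trans (min_le_right _ _) (by linarith)
      · simp only [pow_one, Nat.sub_self, pow_zero, mul_one]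
        have := hFmono h1.1
        exact le_trans (min_le_left _ _) (by linarith)
    calc δ0 ^ n = ∏ _i : Fin n, δ0 := by
          rw [Finset.prod_const, Finset.card_univ, Fintype.card_fin]
      _ ≤ _ := Finset.prod_le_prod (fun _ _ => hδ0.le) key
  set A2 : ℝ := (2 * Real.pi) ^ (-(((∑ j, qv j : ℕ)) : ℝ) / 2) with hA2def
  have hA2 : 0 < A2 := Real.rpow_pos_of_pos (by positivity) _
  -- box sets
  set boxB : Set (Fin p → ℝ) := univ.pi fun _ => Icc (0:ℝ) 1 with hboxBdef
  set boxU : Set ((j : Fin r) → Fin (qv j) → ℝ) :=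
    univ.pi fun j => univ.pi fun _ => Icc (0:ℝ) 1 with hboxUdef
  have hboxBmeas : MeasurableSet boxB :=
    MeasurableSet.univ_pi fun _ => measurableSet_Icc
  have hboxUmeas : MeasurableSet boxU :=
    MeasurableSet.univ_pi fun _ => MeasurableSet.univ_pi fun _ => measurableSet_Icc
  have hvolB : volume boxB = 1 := by
    rw [hboxBdef, volume_pi_pi]
    simp [Real.volume_Icc]
  have hvolU : volume boxU = 1 := by
    rw [hboxUdef]
    calc volume (univ.pi fun j : Fin r => univ.pi fun _ : Fin (qv j) => Icc (0:ℝ) 1)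
        = ∏ j : Fin r, volume (univ.pi fun _ : Fin (qv j) => Icc (0:ℝ) 1) := volume_pi_pi _
      _ = ∏ _j : Fin r, (1:ℝ≥0∞) := Finset.prod_congr rfl fun j _ => by
          rw [volume_pi_pi]; simp [Real.volume_Icc]
      _ = 1 := Finset.prod_const_one
  have hSmeas : MeasurableSet (Set.univ.pi fun _ : Fin r => Ioi (0 : ℝ)) :=
    MeasurableSet.univ_pi fun _ => measurableSet_Ioi
  -- facts about u in boxU
  have huSq : ∀ u ∈ boxU, ∀ j : Fin r,
      (0:ℝ) ≤ ∑ s, (u j s) ^ 2 ∧ (∑ s, (u j s) ^ 2) ≤ (qv j : ℝ) := by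
    intro u hu j
    have hu01 : ∀ s, 0 ≤ u j s ∧ u j s ≤ 1 := by
      intro s
      have h := Set.mem_univ_pi.mp (Set.mem_univ_pi.mp hu j) s
      exact ⟨h.1, h.2⟩
    constructor
    · exact Finset.sum_nonneg fun s _ => sq_nonneg _
    · calc (∑ s, (u j s) ^ 2) ≤ ∑ _s : Fin (qv j), (1:ℝ) :=
            Finset.sum_le_sum fun s _ => by nlinarith [(hu01 s).1, (hu01 s).2]
        _ = (qv j : ℝ) := by simp
  have huAbs : ∀ u ∈ boxU, ∀ j s, |u j s| ≤ 1 := by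
    intro u hu j s
    have h := Set.mem_univ_pi.mp (Set.mem_univ_pi.mp hu j) s
    exact abs_le.mpr ⟨by linarith [h.1], h.2⟩
  constructor
  · -- full column rank
    by_cases hker : LinearMap.ker X.mulVecLin = ⊥
    · have h1 := LinearMap.finrank_range_add_finrank_ker X.mulVecLin
      rw [hker, finrank_bot, add_zero] at h1
      rw [Matrix.rank, h1]
      simp
    · exfalso
      obtain ⟨v, hv, hv0⟩ := (Submodule.ne_bot_iff _).mp hker
      have hvk : ∀ i, ∑ c, X i c * v c = 0 := by
        intro i
        have := congrFun (LinearMap.mem_ker.mp hv) i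
        simpa [Matrix.mulVecLin, Matrix.mulVec, dotProduct] using this
      set tube : Set (Fin p → ℝ) := {β | ∀ i, |∑ c, X i c * β c| ≤ MX} with htubedef
      have htube_meas : MeasurableSet tube := by
        have : tube = ⋂ i, (fun β : Fin p → ℝ => ∑ c, X i c * β c) ⁻¹' (Icc (-MX) MX) := by
          ext β
          simp [htubedef, abs_le, Set.mem_iInter, and_comm]
        rw [this]
        exact MeasurableSet.iInter fun i =>
          (Finset.measurable_sum _ fun c _ => by fun_prop)
            measurableSet_Icc
      have htube_top : volume tube = ⊤ := glmm_aux_tube_volume n p X v hv0 hvk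
      have hS0 : volume (Set.univ.pi fun _ : Fin r => Ioi (0 : ℝ)) ≠ 0 := by
        rw [volume_pi_pi]
        simp [Real.volume_Ioi]
      refine absurd hcy (not_lt.mpr (top_le_iff.mpr (glmm_aux_const_top hSmeas hS0 _ ?_)))
      intro τ hτS
      have hτpos : ∀ j, 0 < τ j := fun j => Set.mem_univ_pi.mp hτS j
      set CR : ℝ := δ0 ^ n *
          (A2 * ∏ j, τ j ^ ((qv j : ℝ) / 2) * Real.exp (-(τ j) * (qv j : ℝ) / 2)) *
          (∏ j, τ j ^ (a j - 1) * Real.exp (-(b j) * τ j)) with hCRdef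
      have hCRpos : 0 < CR := by
        rw [hCRdef]
        apply mul_pos
        apply mul_pos (pow_pos hδ0 n)
        · exact mul_pos hA2 (Finset.prod_pos fun j _ =>
            mul_pos (Real.rpow_pos_of_pos (hτpos j) _) (Real.exp_pos _))
        · exact Finset.prod_pos fun j _ =>
            mul_pos (Real.rpow_pos_of_pos (hτpos j) _) (Real.exp_pos _)
      have hbnd : ∀ β ∈ tube, ∀ u ∈ boxU, ENNReal.ofReal CR ≤
          ENNReal.ofReal (
            (∏ i : Fin n,
              F (∑ c, X i c * β c + ∑ j, ∑ s, Z i j s * u j s) ^ (y i) *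
                (1 - F (∑ c, X i c * β c + ∑ j, ∑ s, Z i j s * u j s)) ^ (1 - y i)) *
            (A2 * ∏ j : Fin r,
                τ j ^ ((qv j : ℝ) / 2) * Real.exp (-(τ j) * (∑ s, (u j s) ^ 2) / 2)) *
            (∏ j : Fin r, τ j ^ (a j - 1) * Real.exp (-(b j) * τ j))) := by
        intro β hβ u hu
        apply ENNReal.ofReal_le_ofReal
        have hw : ∀ i, |∑ c, X i c * β c + ∑ j, ∑ s, Z i j s * u j s| ≤ R := by
          intro i
          calc |∑ c, X i c * β c + ∑ j, ∑ s, Z i j s * u j s|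
              ≤ |∑ c, X i c * β c| + |∑ j, ∑ s, Z i j s * u j s| := abs_add_le _ _
            _ ≤ MX + MZ := add_le_add (hβ i) (hZb i u (huAbs u hu))
            _ = R := hRdef.symm
        have hdL := hLike _ hw
        have hG : (∏ j, τ j ^ ((qv j : ℝ) / 2) * Real.exp (-(τ j) * (qv j : ℝ) / 2)) ≤
            ∏ j, τ j ^ ((qv j : ℝ) / 2) * Real.exp (-(τ j) * (∑ s, (u j s) ^ 2) / 2) := by
          apply Finset.prod_le_prod (fun j _ =>
            mul_nonneg (Real.rpow_nonneg (hτpos j).le _) (Real.exp_pos _).le)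
          intro j _
          apply mul_le_mul_of_nonneg_left _ (Real.rpow_nonneg (hτpos j).le _)
          apply Real.exp_le_exp.mpr
          nlinarith [(huSq u hu j).1, (huSq u hu j).2, (hτpos j).le]
        have hGnn : (0:ℝ) ≤ ∏ j, τ j ^ ((qv j : ℝ) / 2) *
            Real.exp (-(τ j) * (∑ s, (u j s) ^ 2) / 2) :=
          Finset.prod_nonneg fun j _ =>
            mul_nonneg (Real.rpow_nonneg (hτpos j).le _) (Real.exp_pos _).le
        have hPnn : (0:ℝ) ≤ ∏ j, τ j ^ (a j - 1) * Real.exp (-(b j) * τ j) :=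
          Finset.prod_nonneg fun j _ =>
            mul_nonneg (Real.rpow_nonneg (hτpos j).le _) (Real.exp_pos _).le
        rw [hCRdef]
        apply mul_le_mul_of_nonneg_right _ hPnn
        calc δ0 ^ n * (A2 * ∏ j, τ j ^ ((qv j : ℝ) / 2) * Real.exp (-(τ j) * (qv j : ℝ) / 2))
            ≤ δ0 ^ n * (A2 * ∏ j, τ j ^ ((qv j : ℝ) / 2) *
                Real.exp (-(τ j) * (∑ s, (u j s) ^ 2) / 2)) :=
              mul_le_mul_of_nonneg_left (mul_le_mul_of_nonneg_left hG hA2.le)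
                (pow_nonneg hδ0.le n)
          _ ≤ _ := mul_le_mul_of_nonneg_right hdL (mul_nonneg hA2.le hGnn)
      have h := glmm_aux_double_lower _ htube_meas hboxUmeas (ENNReal.ofReal CR) hbnd
      rw [hvolU, mul_one, htube_top,
        ENNReal.mul_top (by simpa using (ENNReal.ofReal_pos.mpr hCRpos).ne')] at h
      exact top_le_iff.mp h
  · -- exponents
    intro j₀
    by_contra hcon
    push_neg at hcon
    set cc : Fin r → ℝ := fun j => (qv j : ℝ) / 2 + (a j - 1) with hccdef
    set κ : Fin r → ℝ := fun j => min ((1/2:ℝ) ^ cc j) 1 with hκdef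
    have hκnn : ∀ j, 0 ≤ κ j := fun j => le_min (Real.rpow_nonneg (by norm_num) _) zero_le_one
    have hκpos : ∀ j, 0 < κ j := fun j =>
      lt_min (Real.rpow_pos_of_pos (by norm_num) _) one_pos
    have hccj₀ : cc j₀ + 1 ≤ 0 := by
      rw [hccdef]; simp only; linarith
    set KP : ℝ := ∏ j, Real.exp (-(qv j : ℝ)/2) * Real.exp (-(b j)) with hKPdef
    have hKPpos : 0 < KP := Finset.prod_pos fun j _ => mul_pos (Real.exp_pos _) (Real.exp_pos _)
    set κP : ℝ := ∏ j ∈ Finset.univ.erase j₀, κ j with hκPdef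
    have hκPpos : 0 < κP := Finset.prod_pos fun j _ => hκpos j
    set Creal : ℝ := δ0 ^ n * A2 * KP * κP with hCrealdef
    have hCrealpos : 0 < Creal :=
      mul_pos (mul_pos (mul_pos (pow_pos hδ0 n) hA2) hKPpos) hκPpos
    set A : ℕ → Set (Fin r → ℝ) := fun m => univ.pi fun j =>
      if j = j₀ then Ioo ((1/2:ℝ)^(m+1)) ((1/2:ℝ)^m) else Ioo (1/2:ℝ) 1 with hAdef
    have hAmeas : ∀ m, MeasurableSet (A m) :=
      fun m => MeasurableSet.univ_pi fun j => by
        by_cases h : j = j₀ <;> simp [h, measurableSet_Ioo]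
    -- facts about τ ∈ A m
    have hτfacts : ∀ m, ∀ τ ∈ A m, (∀ j, 0 < τ j) ∧ (∀ j, τ j ≤ 1) ∧
        (∀ j, j ≠ j₀ → 1/2 ≤ τ j) ∧ τ j₀ ≤ (1/2:ℝ)^m := by
      intro m τ hτ
      have h := Set.mem_univ_pi.mp hτ
      have hj₀ : τ j₀ ∈ Ioo ((1/2:ℝ)^(m+1)) ((1/2:ℝ)^m) := by
        have := h j₀; rwa [if_pos rfl] at this
      have hne : ∀ j, j ≠ j₀ → τ j ∈ Ioo (1/2:ℝ) 1 := by
        intro j hj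
        have := h j; rwa [if_neg hj] at this
      refine ⟨?_, ?_, fun j hj => (hne j hj).1.le, hj₀.2.le⟩
      · intro j
        by_cases hj : j = j₀
        · subst hj
          exact lt_trans (by positivity) hj₀.1
        · linarith [(hne j hj).1]
      · intro j
        by_cases hj : j = j₀
        · subst hj
          exact hj₀.2.le.trans (pow_le_one₀ (by norm_num) (by norm_num))
        · exact (hne j hj).2.le
    have hAS : ∀ m, A m ⊆ Set.univ.pi fun _ : Fin r => Ioi (0 : ℝ) := by
      intro m τ hτ
      exact Set.mem_univ_pi.mpr fun j => (hτfacts m τ hτ).1 j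
    have hdisj : ∀ m m' (τ : Fin r → ℝ), τ ∈ A m → τ ∈ A m' → m = m' := by
      intro m m' τ hm hm'
      have h1 : τ j₀ ∈ Ioo ((1/2:ℝ)^(m+1)) ((1/2:ℝ)^m) := by
        have := Set.mem_univ_pi.mp hm j₀; rwa [if_pos rfl] at this
      have h2 : τ j₀ ∈ Ioo ((1/2:ℝ)^(m'+1)) ((1/2:ℝ)^(m')) := by
        have := Set.mem_univ_pi.mp hm' j₀; rwa [if_pos rfl] at this
      by_contra hne
      rcases lt_or_gt_of_ne hne with h' | h'
      · have : (1/2:ℝ)^(m') ≤ (1/2:ℝ)^(m+1) :=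
          pow_le_pow_of_le_one (by norm_num) (by norm_num) h'
        linarith [h1.1, h2.2]
      · have : (1/2:ℝ)^m ≤ (1/2:ℝ)^(m'+1) :=
          pow_le_pow_of_le_one (by norm_num) (by norm_num) h'
        linarith [h1.2, h2.1]
    have hAvol : ∀ m, volume (A m) =
        ENNReal.ofReal ((1/2:ℝ)^(m+1)) *
          ENNReal.ofReal (1/2:ℝ) ^ (Finset.univ.erase j₀).card := by
      intro m
      rw [hAdef]
      rw [volume_pi_pi, ← Finset.mul_prod_erase Finset.univ _ (Finset.mem_univ j₀)]
      congr 1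
      · rw [if_pos rfl, Real.volume_Ioo]
        congr 1
        ring
      · rw [Finset.prod_congr rfl (fun j hj => by
          rw [if_neg (Finset.mem_erase.mp hj).1, Real.volume_Ioo])]
        rw [Finset.prod_const]
        norm_num
    set g : ℕ → ℝ≥0∞ := fun m =>
      ENNReal.ofReal (Creal * ((1/2:ℝ)^m) ^ cc j₀) with hgdef
    set δ : ℝ≥0∞ := ENNReal.ofReal (Creal * (1/2)) *
      ENNReal.ofReal (1/2:ℝ) ^ (Finset.univ.erase j₀).card with hδdef
    have hδne : δ ≠ 0 := by
      rw [hδdef]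
      apply mul_ne_zero
      · exact (ENNReal.ofReal_pos.mpr (by linarith)).ne'
      · exact pow_ne_zero _ (ENNReal.ofReal_pos.mpr (by norm_num)).ne'
    have hδg : ∀ m, δ ≤ g m * volume (A m) := by
      intro m
      rw [hAvol m, hgdef, hδdef]
      have hx1 : (1:ℝ) ≤ ((1/2:ℝ)^m) ^ cc j₀ * ((1/2:ℝ)^m) := by
        have hxpos : (0:ℝ) < (1/2:ℝ)^m := by positivity
        have hxle : ((1/2:ℝ)^m) ≤ 1 := pow_le_one₀ (by norm_num) (by norm_num)
        have h := Real.rpow_add hxpos (cc j₀) 1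
        rw [Real.rpow_one] at h
        rw [← h]
        exact Real.one_le_rpow_of_pos_of_le_one_of_nonpos hxpos hxle hccj₀
      have hxnn : (0:ℝ) ≤ ((1/2:ℝ)^m) ^ cc j₀ := Real.rpow_nonneg (by positivity) _
      have hreal : Creal * (1/2) ≤ Creal * ((1/2:ℝ)^m) ^ cc j₀ * ((1/2:ℝ)^(m+1)) := by
        calc Creal * (1/2:ℝ) = Creal * (1/2) * 1 := by ring
          _ ≤ Creal * (1/2) * (((1/2:ℝ)^m) ^ cc j₀ * ((1/2:ℝ)^m)) :=
              mul_le_mul_of_nonneg_left hx1 (by positivity)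
          _ = Creal * ((1/2:ℝ)^m) ^ cc j₀ * ((1/2:ℝ)^(m+1)) := by
              rw [pow_succ]; ring
      calc ENNReal.ofReal (Creal * (1/2)) *
            ENNReal.ofReal (1/2:ℝ) ^ (Finset.univ.erase j₀).card
          ≤ ENNReal.ofReal (Creal * ((1/2:ℝ)^m) ^ cc j₀ * ((1/2:ℝ)^(m+1))) *
            ENNReal.ofReal (1/2:ℝ) ^ (Finset.univ.erase j₀).card :=
            mul_le_mul_left (ENNReal.ofReal_le_ofReal hreal) _
        _ = (ENNReal.ofReal (Creal * ((1/2:ℝ)^m) ^ cc j₀) *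
            ENNReal.ofReal ((1/2:ℝ)^(m+1))) *
            ENNReal.ofReal (1/2:ℝ) ^ (Finset.univ.erase j₀).card := by
            rw [ENNReal.ofReal_mul (by positivity)]
        _ = _ := by ring
    -- pointwise lower bound on the inner double integral
    refine absurd hcy (not_lt.mpr (top_le_iff.mpr (glmm_aux_shell _ A hAmeas hAS hdisj g ?_ δ hδne hδg)))
    intro m τ hτm
    obtain ⟨hτpos, hτle1, hτhalf, hτj₀⟩ := hτfacts m τ hτm
    have hbnd : ∀ β ∈ boxB, ∀ u ∈ boxU, g m ≤
        ENNReal.ofReal (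
          (∏ i : Fin n,
            F (∑ c, X i c * β c + ∑ j, ∑ s, Z i j s * u j s) ^ (y i) *
              (1 - F (∑ c, X i c * β c + ∑ j, ∑ s, Z i j s * u j s)) ^ (1 - y i)) *
          (A2 * ∏ j : Fin r,
              τ j ^ ((qv j : ℝ) / 2) * Real.exp (-(τ j) * (∑ s, (u j s) ^ 2) / 2)) *
          (∏ j : Fin r, τ j ^ (a j - 1) * Real.exp (-(b j) * τ j))) := by
      intro β hβ u hu
      rw [hgdef]
      apply ENNReal.ofReal_le_ofReal
      -- likelihood bound
      have hβ1 : ∀ c, |β c| ≤ 1 := by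
        intro c
        have h := Set.mem_univ_pi.mp hβ c
        exact abs_le.mpr ⟨by linarith [h.1], h.2⟩
      have hw : ∀ i, |∑ c, X i c * β c + ∑ j, ∑ s, Z i j s * u j s| ≤ R := by
        intro i
        have hXβ : |∑ c, X i c * β c| ≤ MX := by
          calc |∑ c, X i c * β c| ≤ ∑ c, |X i c * β c| := Finset.abs_sum_le_sum_abs _ _
            _ ≤ ∑ c, |X i c| := Finset.sum_le_sum fun c _ => by
                rw [abs_mul]
                exact mul_le_of_le_one_right (abs_nonneg _) (hβ1 c)
            _ ≤ MX := Finset.single_le_sum (f := fun i => ∑ c, |X i c|)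
                (fun i _ => Finset.sum_nonneg fun c _ => abs_nonneg _) (Finset.mem_univ i)
        calc |∑ c, X i c * β c + ∑ j, ∑ s, Z i j s * u j s|
            ≤ |∑ c, X i c * β c| + |∑ j, ∑ s, Z i j s * u j s| := abs_add_le _ _
          _ ≤ MX + MZ := add_le_add hXβ (hZb i u (huAbs u hu))
          _ = R := hRdef.symm
      have hdL := hLike _ hw
      have hrpnn : ∀ j (e : ℝ), 0 ≤ τ j ^ e := fun j e => Real.rpow_nonneg (hτpos j).le e
      -- products over τ^cc
      have h_tau_prod : κP * (((1/2:ℝ)^m) ^ cc j₀) ≤ ∏ j, τ j ^ cc j := by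
        rw [← Finset.mul_prod_erase Finset.univ (fun j => τ j ^ cc j) (Finset.mem_univ j₀)]
        have hj₀le : ((1/2:ℝ)^m) ^ cc j₀ ≤ τ j₀ ^ cc j₀ :=
          Real.rpow_le_rpow_of_nonpos (hτpos j₀) hτj₀ (by linarith)
        have hκer : κP ≤ ∏ j ∈ Finset.univ.erase j₀, τ j ^ cc j := by
          rw [hκPdef]
          apply Finset.prod_le_prod (fun j _ => hκnn j)
          intro j hj
          have hjne := (Finset.mem_erase.mp hj).1
          rcases le_or_gt 0 (cc j) with h' | h'
          · exact le_trans (min_le_left _ _)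
              (Real.rpow_le_rpow (by norm_num) (hτhalf j hjne) h')
          · exact le_trans (min_le_right _ _)
              (Real.one_le_rpow_of_pos_of_le_one_of_nonpos (hτpos j) (hτle1 j) h'.le)
        calc κP * (((1/2:ℝ)^m) ^ cc j₀) = (((1/2:ℝ)^m) ^ cc j₀) * κP := mul_comm _ _
          _ ≤ τ j₀ ^ cc j₀ * ∏ j ∈ Finset.univ.erase j₀, τ j ^ cc j :=
              mul_le_mul hj₀le hκer hκPpos.le (hrpnn j₀ _)
      have heq : (∏ j, τ j ^ ((qv j : ℝ)/2) * Real.exp (-(qv j : ℝ)/2)) *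
          (∏ j, τ j ^ (a j - 1) * Real.exp (-(b j))) = KP * ∏ j, τ j ^ cc j := by
        rw [hKPdef, ← Finset.prod_mul_distrib, ← Finset.prod_mul_distrib]
        refine Finset.prod_congr rfl fun j _ => ?_
        have : τ j ^ cc j = τ j ^ ((qv j : ℝ)/2) * τ j ^ (a j - 1) := by
          rw [hccdef]; exact Real.rpow_add (hτpos j) _ _
        rw [this]; ring
      have hGnn : (0:ℝ) ≤ ∏ j, τ j ^ ((qv j : ℝ)/2) *
          Real.exp (-(τ j) * (∑ s, (u j s) ^ 2) / 2) :=
        Finset.prod_nonneg fun j _ => mul_nonneg (hrpnn j _) (Real.exp_pos _).le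
      have hP'nn : (0:ℝ) ≤ ∏ j, τ j ^ (a j - 1) * Real.exp (-(b j)) :=
        Finset.prod_nonneg fun j _ => mul_nonneg (hrpnn j _) (Real.exp_pos _).le
      have hPnn : (0:ℝ) ≤ ∏ j, τ j ^ (a j - 1) * Real.exp (-(b j) * τ j) :=
        Finset.prod_nonneg fun j _ => mul_nonneg (hrpnn j _) (Real.exp_pos _).le
      have hG : (∏ j, τ j ^ ((qv j : ℝ)/2) * Real.exp (-(qv j : ℝ)/2)) ≤
          ∏ j, τ j ^ ((qv j : ℝ)/2) * Real.exp (-(τ j) * (∑ s, (u j s) ^ 2) / 2) := by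
        apply Finset.prod_le_prod (fun j _ => mul_nonneg (hrpnn j _) (Real.exp_pos _).le)
        intro j _
        apply mul_le_mul_of_nonneg_left _ (hrpnn j _)
        apply Real.exp_le_exp.mpr
        nlinarith [(huSq u hu j).1, (huSq u hu j).2, (hτpos j).le, hτle1 j]
      have hP : (∏ j, τ j ^ (a j - 1) * Real.exp (-(b j))) ≤
          ∏ j, τ j ^ (a j - 1) * Real.exp (-(b j) * τ j) := by
        apply Finset.prod_le_prod (fun j _ => mul_nonneg (hrpnn j _) (Real.exp_pos _).le)
        intro j _
        apply mul_le_mul_of_nonneg_left _ (hrpnn j _)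
        apply Real.exp_le_exp.mpr
        nlinarith [hb j, hτle1 j, (hτpos j).le]
      calc Creal * ((1/2:ℝ)^m) ^ cc j₀
          = (δ0 ^ n * A2) * (KP * (κP * (((1/2:ℝ)^m) ^ cc j₀))) := by
            rw [hCrealdef]; ring
        _ ≤ (δ0 ^ n * A2) * (KP * ∏ j, τ j ^ cc j) :=
            mul_le_mul_of_nonneg_left (mul_le_mul_of_nonneg_left h_tau_prod hKPpos.le)
              (mul_nonneg (pow_nonneg hδ0.le n) hA2.le)
        _ = δ0 ^ n * (A2 * ∏ j, τ j ^ ((qv j : ℝ)/2) * Real.exp (-(qv j : ℝ)/2)) *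
            (∏ j, τ j ^ (a j - 1) * Real.exp (-(b j))) := by rw [← heq]; ring
        _ ≤ δ0 ^ n * (A2 * ∏ j, τ j ^ ((qv j : ℝ)/2) *
              Real.exp (-(τ j) * (∑ s, (u j s) ^ 2) / 2)) *
            (∏ j, τ j ^ (a j - 1) * Real.exp (-(b j))) :=
            mul_le_mul_of_nonneg_right
              (mul_le_mul_of_nonneg_left (mul_le_mul_of_nonneg_left hG hA2.le)
                (pow_nonneg hδ0.le n)) hP'nn
        _ ≤ δ0 ^ n * (A2 * ∏ j, τ j ^ ((qv j : ℝ)/2) *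
              Real.exp (-(τ j) * (∑ s, (u j s) ^ 2) / 2)) *
            (∏ j, τ j ^ (a j - 1) * Real.exp (-(b j) * τ j)) :=
            mul_le_mul_of_nonneg_left hP
              (mul_nonneg (pow_nonneg hδ0.le n) (mul_nonneg hA2.le hGnn))
        _ ≤ _ :=
            mul_le_mul_of_nonneg_right
              (mul_le_mul_of_nonneg_right hdL (mul_nonneg hA2.le hGnn)) hPnn
    have h := glmm_aux_double_lower _ hboxBmeas hboxUmeas (g m) hbnd
    rwa [hvolU, mul_one, hvolB, mul_one] at h
end

section
/- Consider binary data (m_i = 1, y_i ∈ {0,1}) in a GLMM with flat prior on β and priors π(τ_j) ∝ τ_j^{a_j−1} e^{−b_j τ_j} with b_j ≥ 0, and suppose the random-effects design matrix Z has full column rank q. Assume 0 < F(x) < 1 for all x ∈ ℝ. If c(y) < ∞ (posterior propriety), then necessarily: (1) X has full column rank p; (2) there exists a vector e ∈ ℝ^n with all coordinates strictly positive such that e^T X* = 0, where X* is the n×p matrix whose i-th row is (1 − 2y_i) x_i^T; and (3) a_j + q_j/2 > 0 for every j = 1,…,r. -/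
open MeasureTheory Set
open scoped ENNReal

lemma aux_lintegral_top_of_shift {p : ℕ} (G : (Fin p → ℝ) → ℝ) (hG : Measurable G)
    (hpos : ∀ β, 0 < G β) (w : Fin p → ℝ) (hw : w ≠ 0)
    (hmono : ∀ (β : Fin p → ℝ) (k : ℕ), G β ≤ G (β + k • w)) :
    ∫⁻ β, ENNReal.ofReal (G β) = ⊤ := by
  obtain ⟨i0, hi0⟩ := Function.ne_iff.mp hw
  have hi0' : w i0 ≠ 0 := hi0
  have hε : 0 < |w i0| := abs_pos.mpr hi0'
  set ε : ℝ := |w i0| with hεdef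
  set B : Set (Fin p → ℝ) := Set.univ.pi fun _ => Ico (0:ℝ) ε with hBdef
  have hBm : MeasurableSet B := MeasurableSet.univ_pi fun _ => measurableSet_Ico
  set Bk : ℕ → Set (Fin p → ℝ) := fun k => (fun β => β - (k:ℕ) • w) ⁻¹' B with hBkdef
  have hsubm : ∀ k : ℕ, Measurable (fun β : Fin p → ℝ => β - (k:ℕ) • w) := by
    intro k; exact measurable_id.sub_const _
  have hBkm : ∀ k, MeasurableSet (Bk k) := fun k => (hsubm k) hBm
  -- coordinates
  have hmem : ∀ (k : ℕ) (β : Fin p → ℝ), β ∈ Bk k →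
      β i0 - (k : ℝ) * w i0 ∈ Ico (0:ℝ) ε := by
    intro k β hβ
    have := hβ i0 (mem_univ i0)
    simpa [Pi.sub_apply, Pi.smul_apply, nsmul_eq_mul] using this
  have hdisj : Pairwise (Function.onFun Disjoint Bk) := by
    intro k m hkm
    rw [Function.onFun, Set.disjoint_left]
    intro β hβk hβm
    have h1 := hmem k β hβk
    have h2 := hmem m β hβm
    have habs : |(k:ℝ) - (m:ℝ)| ≥ 1 := by
      rcases lt_or_gt_of_ne hkm with h | h
      · have : (k:ℝ) + 1 ≤ m := by exact_mod_cast h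
        rw [abs_sub_comm, abs_of_nonneg (by linarith)]; linarith
      · have : (m:ℝ) + 1 ≤ k := by exact_mod_cast h
        rw [abs_of_nonneg (by linarith)]; linarith
    have hkey : |((k:ℝ) - m) * w i0| < ε := by
      have : ((k:ℝ) - m) * w i0 = (β i0 - (m:ℝ) * w i0) - (β i0 - (k:ℝ) * w i0) := by ring
      rw [this]
      rw [abs_sub_lt_iff]
      constructor <;> · simp only [mem_Ico] at h1 h2; linarith [h1.1, h1.2, h2.1, h2.2]
    rw [abs_mul] at hkey
    nlinarith [hε]
  -- translation invariance
  have hkey : ∀ k : ℕ, ∫⁻ β in B, ENNReal.ofReal (G β) ≤ ∫⁻ β in Bk k, ENNReal.ofReal (G β) := by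
    intro k
    have hmp : MeasurePreserving (fun β : Fin p → ℝ => β - (k:ℕ) • w) volume volume :=
      measurePreserving_sub_right volume _
    have hemb : MeasurableEmbedding (fun β : Fin p → ℝ => β - (k:ℕ) • w) :=
      (MeasurableEquiv.subRight ((k:ℕ) • w)).measurableEmbedding
    have heq : ∫⁻ β in Bk k, ENNReal.ofReal (G (β - (k:ℕ) • w)) =
        ∫⁻ β in B, ENNReal.ofReal (G β) :=
      hmp.setLIntegral_comp_preimage_emb hemb (fun β => ENNReal.ofReal (G β)) B
    rw [← heq]
    refine lintegral_mono fun β => ?_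
    refine ENNReal.ofReal_le_ofReal ?_
    have := hmono (β - (k:ℕ) • w) k
    simpa using this
  -- positivity of the base integral
  have hBvol : 0 < volume B := by
    rw [hBdef, volume_pi_pi]
    simp only [Real.volume_Ico, sub_zero]
    refine CanonicallyOrderedAdd.prod_pos.mpr fun _ _ => ?_
    exact ENNReal.ofReal_pos.mpr hε
  have hcpos : 0 < ∫⁻ β in B, ENNReal.ofReal (G β) := by
    rw [lintegral_pos_iff_support hG.ennreal_ofReal]
    have hsupp : Function.support (fun β => ENNReal.ofReal (G β)) = Set.univ := by
      ext β; simp [Function.mem_support, (ENNReal.ofReal_pos.mpr (hpos β)).ne']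
    rw [hsupp, Measure.restrict_apply_univ]
    exact hBvol
  -- sum over translates
  have hle : ∫⁻ β in ⋃ k, Bk k, ENNReal.ofReal (G β) ≤ ∫⁻ β, ENNReal.ofReal (G β) :=
    setLIntegral_le_lintegral _ _
  rw [lintegral_iUnion hBkm hdisj] at hle
  refine top_le_iff.mp (le_trans ?_ hle)
  have : ∀ k : ℕ, (∫⁻ β in B, ENNReal.ofReal (G β)) ≤ ∫⁻ β in Bk k, ENNReal.ofReal (G β) := hkey
  calc (⊤ : ℝ≥0∞) = ∑' _ : ℕ, ∫⁻ β in B, ENNReal.ofReal (G β) :=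
        (ENNReal.tsum_const_eq_top_of_ne_zero hcpos.ne').symm
    _ ≤ ∑' k : ℕ, ∫⁻ β in Bk k, ENNReal.ofReal (G β) := ENNReal.tsum_le_tsum this

lemma aux_stiemke {n p : ℕ} (A : Matrix (Fin n) (Fin p) ℝ)
    (h : ∀ v : Fin p → ℝ, (∀ i, 0 ≤ A.mulVec v i) → A.mulVec v = 0) :
    ∃ e : Fin n → ℝ, (∀ i, 0 < e i) ∧ ∀ c, ∑ i, e i * A i c = 0 := by
  set K : Submodule ℝ (Fin n → ℝ) := LinearMap.range A.mulVecLin with hKdef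
  have hKc : IsClosed (K : Set (Fin n → ℝ)) := K.closed_of_finiteDimensional
  have hKconv : Convex ℝ (K : Set (Fin n → ℝ)) := K.convex
  have hdisj : Disjoint (K : Set (Fin n → ℝ)) (stdSimplex ℝ (Fin n)) := by
    rw [Set.disjoint_left]
    rintro x ⟨v, rfl⟩ ⟨hx0, hx1⟩
    have hx : A.mulVec v = 0 := h v (by simpa [Matrix.mulVecLin_apply] using hx0)
    rw [Matrix.mulVecLin_apply, hx] at hx1
    simp at hx1
  obtain ⟨f, u, v', hfu, huv, hfv⟩ :=
    geometric_hahn_banach_closed_compact hKconv hKc (convex_stdSimplex ℝ _)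
      (isCompact_stdSimplex ℝ _) hdisj
  have hu0 : 0 < u := by
    have := hfu 0 K.zero_mem
    simpa using this
  have hK0 : ∀ x ∈ K, f x = 0 := by
    intro x hx
    by_contra hne
    have hmem : ((|u| + 1) / f x) • x ∈ K := K.smul_mem _ hx
    have := hfu _ hmem
    rw [_root_.map_smul, smul_eq_mul, div_mul_cancel₀ _ hne] at this
    have : |u| + 1 < u := this
    have := le_abs_self u
    linarith
  refine ⟨fun i => f (Pi.single i 1), fun i => ?_, fun c => ?_⟩
  · have hmem : Pi.single i 1 ∈ stdSimplex ℝ (Fin n) := by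
      constructor
      · intro j
        rcases eq_or_ne j i with rfl | hne
        · simp
        · simp [Pi.single_apply, hne]
      · simp [Finset.sum_pi_single']
    have := hfv _ hmem
    linarith
  · have hcol : A.mulVec (Pi.single c 1) ∈ K := ⟨Pi.single c 1, by rw [Matrix.mulVecLin_apply]⟩
    have h0 : f (A.mulVec (Pi.single c 1)) = 0 := hK0 _ hcol
    have hexp : f (A.mulVec (Pi.single c 1)) =
        ∑ i, (A.mulVec (Pi.single c 1)) i • f (fun j => if i = j then 1 else 0) :=
      LinearMap.pi_apply_eq_sum_univ (f : (Fin n → ℝ) →ₗ[ℝ] ℝ) _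
    rw [hexp] at h0
    rw [← h0]
    refine Finset.sum_congr rfl fun i _ => ?_
    have h1 : (fun j => if i = j then (1:ℝ) else 0) = Pi.single i 1 := by
      ext j; simp [Pi.single_apply, eq_comm]
    rw [h1, Matrix.mulVec_single, smul_eq_mul]
    simp [Matrix.col, mul_comm]

lemma aux_lintegral_tau_top {r : ℕ} (j0 : Fin r) (e c : Fin r → ℝ)
    (hc : ∀ j, 0 ≤ c j) (he : e j0 ≤ 0) (K : ℝ) (hK : 0 < K) :
    ∫⁻ τ : Fin r → ℝ in Set.univ.pi fun _ => Ioi (0:ℝ),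
      ENNReal.ofReal (K * ∏ j, τ j ^ (e j - 1) * Real.exp (-(c j) * τ j)) = ⊤ := by
  set f : (Fin r → ℝ) → ℝ≥0∞ :=
    fun τ => ENNReal.ofReal (K * ∏ j, τ j ^ (e j - 1) * Real.exp (-(c j) * τ j)) with hfdef
  set S : ℕ → Set (Fin r → ℝ) := fun k =>
    Set.univ.pi fun j => if j = j0 then Ioc ((2:ℝ)^(-(k:ℤ)-1)) ((2:ℝ)^(-(k:ℤ))) else Icc 1 2
    with hSdef
  have hSm : ∀ k, MeasurableSet (S k) := by
    intro k
    refine MeasurableSet.univ_pi fun j => ?_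
    rcases eq_or_ne j j0 with rfl | hne
    · rw [if_pos rfl]; exact measurableSet_Ioc
    · rw [if_neg hne]; exact measurableSet_Icc
  have hj0mem : ∀ k (τ : Fin r → ℝ), τ ∈ S k →
      τ j0 ∈ Ioc ((2:ℝ)^(-(k:ℤ)-1)) ((2:ℝ)^(-(k:ℤ))) := by
    intro k τ hτ
    have := hτ j0 (mem_univ _)
    simpa using this
  have homem : ∀ k (τ : Fin r → ℝ), τ ∈ S k → ∀ j, j ≠ j0 → τ j ∈ Icc (1:ℝ) 2 := by
    intro k τ hτ j hj
    have := hτ j (mem_univ _)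
    simpa [hj] using this
  have hdisj' : ∀ k m : ℕ, k < m → Disjoint (S k) (S m) := by
    intro k m hkm
    rw [Set.disjoint_left]
    intro τ hτk hτm
    have h1 := hj0mem k τ hτk
    have h2 := hj0mem m τ hτm
    have hle : ((2:ℝ))^(-(m:ℤ)) ≤ (2:ℝ)^(-(k:ℤ)-1) := by
      apply zpow_le_zpow_right₀ (by norm_num : (1:ℝ) ≤ 2)
      have : (k:ℤ) < (m:ℤ) := by exact_mod_cast hkm
      omega
    have := h1.1
    have := h2.2
    linarith
  have hdisj : Pairwise (Function.onFun Disjoint S) := by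
    intro k m hkm
    rcases lt_or_gt_of_ne hkm with h | h
    · exact hdisj' k m h
    · exact (hdisj' m k h).symm
  have hSsub : ∀ k, S k ⊆ Set.univ.pi fun _ : Fin r => Ioi (0:ℝ) := by
    intro k τ hτ j _
    rcases eq_or_ne j j0 with rfl | hne
    · have := (hj0mem k τ hτ).1
      have h2 : (0:ℝ) < (2:ℝ)^(-(k:ℤ)-1) := zpow_pos (by norm_num) _
      exact lt_trans h2 this
    · have := (homem k τ hτ j hne).1
      exact lt_of_lt_of_le one_pos this
  have hmpos : ∀ j : Fin r, (0:ℝ) <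
      (if j = j0 then Real.exp (-(c j))
        else min 1 ((2:ℝ) ^ (e j - 1)) * Real.exp (-(2 * c j))) := by
    intro j
    rcases eq_or_ne j j0 with rfl | hne
    · rw [if_pos rfl]; exact Real.exp_pos _
    · rw [if_neg hne]
      exact mul_pos (lt_min one_pos (Real.rpow_pos_of_pos two_pos _)) (Real.exp_pos _)
  set m : Fin r → ℝ := fun j =>
    if j = j0 then Real.exp (-(c j))
    else min 1 ((2:ℝ) ^ (e j - 1)) * Real.exp (-(2 * c j)) with hmdef
  set M : ℝ := ∏ j, m j with hMdef
  have hM : 0 < M := Finset.prod_pos fun j _ => hmpos j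
  -- key pointwise bound
  have hbound : ∀ (k : ℕ) (τ : Fin r → ℝ), τ ∈ S k →
      K * ((2:ℝ)^(k:ℕ) * M) ≤ K * ∏ j, τ j ^ (e j - 1) * Real.exp (-(c j) * τ j) := by
    intro k τ hτ
    refine mul_le_mul_of_nonneg_left ?_ hK.le
    have h1 : ∏ j, ((if j = j0 then (2:ℝ)^(k:ℕ) else 1) * m j) ≤
        ∏ j, τ j ^ (e j - 1) * Real.exp (-(c j) * τ j) := by
      refine Finset.prod_le_prod (fun j _ => ?_) (fun j _ => ?_)
      · refine mul_nonneg ?_ (hmpos j).le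
        split <;> positivity
      · rcases eq_or_ne j j0 with rfl | hne
        · rw [if_pos rfl, hmdef]
          simp only [if_pos rfl]
          have hmem := hj0mem k τ hτ
          have hτpos : 0 < τ j := lt_trans (zpow_pos (by norm_num) _) hmem.1
          have hτle : τ j ≤ (2:ℝ)^(-(k:ℤ)) := hmem.2
          have hτle1 : τ j ≤ 1 := by
            refine hτle.trans ?_
            rw [zpow_neg, zpow_natCast]
            exact inv_le_one_of_one_le₀ (one_le_pow₀ (by norm_num))
          have hrp : (2:ℝ)^(k:ℕ) ≤ τ j ^ (e j - 1) := by
            have step1 : τ j ^ (-1:ℝ) ≤ τ j ^ (e j - 1) :=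
              Real.rpow_le_rpow_of_exponent_ge hτpos hτle1 (by linarith)
            have step2 : (2:ℝ)^(k:ℕ) ≤ τ j ^ (-1:ℝ) := by
              rw [Real.rpow_neg_one]
              have : ((2:ℝ)^(-(k:ℤ)))⁻¹ ≤ (τ j)⁻¹ := by
                apply inv_anti₀ hτpos hτle
              rwa [zpow_neg, inv_inv, zpow_natCast] at this
            linarith
          have hexp : Real.exp (-(c j)) ≤ Real.exp (-(c j) * τ j) := by
            apply Real.exp_le_exp.mpr
            nlinarith [hc j, hτpos, hτle1]
          exact mul_le_mul hrp hexp (Real.exp_pos _).le (Real.rpow_nonneg hτpos.le _)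
        · rw [if_neg hne, hmdef]
          simp only [if_neg hne, one_mul]
          have hmem := homem k τ hτ j hne
          have hτ1 : (1:ℝ) ≤ τ j := hmem.1
          have hτ2 : τ j ≤ 2 := hmem.2
          have hτpos : (0:ℝ) < τ j := lt_of_lt_of_le one_pos hτ1
          have hrp : min 1 ((2:ℝ) ^ (e j - 1)) ≤ τ j ^ (e j - 1) := by
            rcases le_or_gt 0 (e j - 1) with hpe | hne2
            · refine (min_le_left _ _).trans ?_
              calc (1:ℝ) = (1:ℝ) ^ (e j - 1) := (Real.one_rpow _).symm
                _ ≤ τ j ^ (e j - 1) := Real.rpow_le_rpow one_pos.le hτ1 hpe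
            · refine (min_le_right _ _).trans ?_
              exact Real.rpow_le_rpow_of_nonpos hτpos hτ2 hne2.le
          have hexp : Real.exp (-(2 * c j)) ≤ Real.exp (-(c j) * τ j) := by
            apply Real.exp_le_exp.mpr
            nlinarith [hc j]
          exact mul_le_mul hrp hexp (Real.exp_pos _).le (Real.rpow_nonneg hτpos.le _)
    calc (2:ℝ)^(k:ℕ) * M = ∏ j, ((if j = j0 then (2:ℝ)^(k:ℕ) else 1) * m j) := by
          rw [Finset.prod_mul_distrib, Finset.prod_ite_eq' Finset.univ j0
            (fun _ => (2:ℝ)^(k:ℕ)), if_pos (Finset.mem_univ _), hMdef]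
      _ ≤ _ := h1
  -- volume of S k
  have hvol : ∀ k, volume (S k) = ENNReal.ofReal ((2:ℝ)^(-(k:ℤ)-1)) := by
    intro k
    rw [hSdef, volume_pi_pi]
    have : ∀ j : Fin r, volume (if j = j0 then Ioc ((2:ℝ)^(-(k:ℤ)-1)) ((2:ℝ)^(-(k:ℤ)))
        else Icc (1:ℝ) 2) = if j = j0 then ENNReal.ofReal ((2:ℝ)^(-(k:ℤ)-1)) else 1 := by
      intro j
      rcases eq_or_ne j j0 with rfl | hne
      · rw [if_pos rfl, if_pos rfl, Real.volume_Ioc]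
        congr 1
        have h2 : (2:ℝ)^(-(k:ℤ)) = 2 * 2^(-(k:ℤ)-1) := by
          rw [mul_comm, ← zpow_add_one₀ (two_ne_zero (α := ℝ))]
          norm_num
        rw [h2]; ring
      · rw [if_neg hne, if_neg hne, Real.volume_Icc]
        norm_num
    simp_rw [this]
    rw [Finset.prod_ite_eq' Finset.univ j0
      (fun _ => ENNReal.ofReal ((2:ℝ)^(-(k:ℤ)-1))), if_pos (Finset.mem_univ _)]
  -- per-piece lower bound
  have hpiece : ∀ k : ℕ, ENNReal.ofReal (K * M * 2⁻¹) ≤ ∫⁻ τ in S k, f τ := by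
    intro k
    have h1 : ∀ τ, (S k).indicator (fun _ => ENNReal.ofReal (K * ((2:ℝ)^(k:ℕ) * M))) τ ≤ f τ := by
      intro τ
      by_cases hτ : τ ∈ S k
      · rw [indicator_of_mem hτ]
        exact ENNReal.ofReal_le_ofReal (hbound k τ hτ)
      · rw [indicator_of_notMem hτ]; exact zero_le
    have h2 : ∫⁻ τ in S k, (S k).indicator
        (fun _ => ENNReal.ofReal (K * ((2:ℝ)^(k:ℕ) * M))) τ ≤ ∫⁻ τ in S k, f τ :=
      lintegral_mono h1
    rw [lintegral_indicator_const (hSm k), Measure.restrict_apply_self _ _, hvol k] at h2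
    refine le_trans (le_of_eq ?_) h2
    rw [← ENNReal.ofReal_mul (by positivity)]
    congr 1
    have h3 : (2:ℝ)^(k:ℕ) * (2:ℝ)^(-(k:ℤ)-1) = 2⁻¹ := by
      rw [← zpow_natCast (2:ℝ) k, ← zpow_add₀ (two_ne_zero (α := ℝ))]
      have h4 : (k:ℤ) + (-(k:ℤ)-1) = -1 := by ring
      rw [h4, zpow_neg_one]
    linear_combination (-(K*M)) * h3
  -- conclude
  have hsum : ∫⁻ τ in ⋃ k, S k, f τ ≤
      ∫⁻ τ in Set.univ.pi fun _ : Fin r => Ioi (0:ℝ), f τ :=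
    lintegral_mono_set (iUnion_subset hSsub)
  rw [lintegral_iUnion hSm hdisj] at hsum
  refine top_le_iff.mp (le_trans ?_ hsum)
  calc (⊤ : ℝ≥0∞) = ∑' _ : ℕ, ENNReal.ofReal (K * M * 2⁻¹) :=
        (ENNReal.tsum_const_eq_top_of_ne_zero (by positivity)).symm
    _ ≤ ∑' k : ℕ, ∫⁻ τ in S k, f τ := ENNReal.tsum_le_tsum hpiece
set_option maxHeartbeats 1000000 in
/-- Necessary conditions for posterior propriety for binary GLMMs when the
random-effects design matrix Z has full column rank (Corollary 4 of
Rao & Roy): with a flat prior on β, priors π(τ_j) ∝ τ_j^{a_j-1} e^{-b_j τ_j}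
with b_j ≥ 0, and 0 < F < 1 everywhere, finiteness of the marginal c(y)
forces X to have full column rank p, the existence of a strictly positive
vector e with eᵀ X* = 0 (the i-th row of X* being (1-2y_i) x_iᵀ), and
a_j + q_j/2 > 0 for every j. -/
theorem binary_glmm_necessary_conditions_Z_full_rank
    (n p r : ℕ) (hn : 0 < n) (hp : 0 < p) (hr : 0 < r)
    (qv : Fin r → ℕ) (hqv : ∀ j, 0 < qv j)
    (X : Matrix (Fin n) (Fin p) ℝ)
    (Z : (i : Fin n) → (j : Fin r) → Fin (qv j) → ℝ)
    -- Z has full column rank q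
    (hZrank :
      (Matrix.of fun (i : Fin n) (s : (j : Fin r) × Fin (qv j)) => Z i s.1 s.2).rank
        = ∑ j, qv j)
    (μ : Measure ℝ) [IsProbabilityMeasure μ]
    (F : ℝ → ℝ) (hF : ∀ x, F x = (μ (Iic x)).toReal)
    (hF01 : ∀ x : ℝ, 0 < F x ∧ F x < 1)
    (y : Fin n → ℕ) (hy : ∀ i, y i ≤ 1)
    (a b : Fin r → ℝ) (hb : ∀ j, 0 ≤ b j)
    -- posterior propriety
    (hcy :
      (∫⁻ τ : Fin r → ℝ in Set.univ.pi fun _ => Ioi (0 : ℝ),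
        ∫⁻ β : Fin p → ℝ,
          ∫⁻ u : (j : Fin r) → Fin (qv j) → ℝ,
            ENNReal.ofReal (
              (∏ i : Fin n,
                F (∑ c, X i c * β c + ∑ j, ∑ s, Z i j s * u j s) ^ (y i) *
                  (1 - F (∑ c, X i c * β c + ∑ j, ∑ s, Z i j s * u j s)) ^ (1 - y i)) *
              ((2 * Real.pi) ^ (-(((∑ j, qv j : ℕ)) : ℝ) / 2) *
                ∏ j : Fin r,
                  τ j ^ ((qv j : ℝ) / 2) * Real.exp (-(τ j) * (∑ s, (u j s) ^ 2) / 2)) *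
              (∏ j : Fin r, τ j ^ (a j - 1) * Real.exp (-(b j) * τ j)))) < ⊤) :
    X.rank = p ∧
    (∃ e : Fin n → ℝ,
      (∀ i, 0 < e i) ∧
      ∀ c : Fin p, ∑ i : Fin n, e i * ((1 - 2 * (y i : ℝ)) * X i c) = 0) ∧
    ∀ j, 0 < a j + (qv j : ℝ) / 2 := by
  classical
  have hFmono : Monotone F := by
    intro s t hst
    rw [hF s, hF t]
    exact ENNReal.toReal_mono (measure_ne_top μ _) (measure_mono (Iic_subset_Iic.mpr hst))
  have hFmeas : Measurable F := hFmono.measurable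
  have hFpos : ∀ x, 0 < F x := fun x => (hF01 x).1
  have hFlt : ∀ x, F x < 1 := fun x => (hF01 x).2
  have hlike : ∀ (i : Fin n) (t l m' : ℝ), l ≤ t → t ≤ m' →
      F l ^ y i * (1 - F m') ^ (1 - y i) ≤ F t ^ y i * (1 - F t) ^ (1 - y i) := by
    intro i t l m' hl hm
    rcases Nat.le_one_iff_eq_zero_or_eq_one.mp (hy i) with h0 | h1
    · rw [h0]
      simp only [pow_zero, one_mul, Nat.sub_zero, pow_one]
      linarith [hFmono hm]
    · rw [h1]
      simp only [pow_one, Nat.sub_self, pow_zero, mul_one]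
      exact hFmono hl
  have hlikepos : ∀ (i : Fin n) (l m' : ℝ), 0 < F l ^ y i * (1 - F m') ^ (1 - y i) :=
    fun i l m' => mul_pos (pow_pos (hFpos l) _) (pow_pos (by linarith [hFlt m']) _)
  set piIoi : Set (Fin r → ℝ) := Set.univ.pi fun _ => Ioi (0:ℝ) with hpiIoi
  have hpiIoim : MeasurableSet piIoi := MeasurableSet.univ_pi fun _ => measurableSet_Ioi
  set c0 : ℝ := (2 * Real.pi) ^ (-(((∑ j, qv j : ℕ)) : ℝ) / 2) with hc0def
  have hc0 : 0 < c0 := Real.rpow_pos_of_pos (by positivity) _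
  set bodyI : (Fin r → ℝ) → (Fin p → ℝ) → ((j : Fin r) → Fin (qv j) → ℝ) → ℝ≥0∞ :=
    fun τ β u => ENNReal.ofReal (
      (∏ i : Fin n,
        F (∑ c, X i c * β c + ∑ j, ∑ s, Z i j s * u j s) ^ (y i) *
          (1 - F (∑ c, X i c * β c + ∑ j, ∑ s, Z i j s * u j s)) ^ (1 - y i)) *
      (c0 *
        ∏ j : Fin r,
          τ j ^ ((qv j : ℝ) / 2) * Real.exp (-(τ j) * (∑ s, (u j s) ^ 2) / 2)) *
      (∏ j : Fin r, τ j ^ (a j - 1) * Real.exp (-(b j) * τ j))) with hbodyI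
  have hcy' : (∫⁻ τ : Fin r → ℝ in piIoi, ∫⁻ β : Fin p → ℝ,
      ∫⁻ u : (j : Fin r) → Fin (qv j) → ℝ, bodyI τ β u) < ⊤ := by
    simp only [hbodyI]
    exact hcy
  set U : Set ((j : Fin r) → Fin (qv j) → ℝ) :=
    Set.univ.pi fun j => Set.univ.pi fun _ => Icc (0:ℝ) 1 with hUdef
  have hUm : MeasurableSet U :=
    MeasurableSet.univ_pi fun j => MeasurableSet.univ_pi fun _ => measurableSet_Icc
  have hUvol : volume U = 1 := by
    rw [hUdef, volume_pi_pi]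
    have h1 : ∀ j : Fin r, volume (Set.univ.pi fun _ : Fin (qv j) => Icc (0:ℝ) 1) = 1 := by
      intro j
      rw [volume_pi_pi]
      norm_num [Real.volume_Icc]
    simp only [h1, Finset.prod_const_one]
  have hUmem : ∀ u : (j : Fin r) → Fin (qv j) → ℝ, u ∈ U → ∀ j s, u j s ∈ Icc (0:ℝ) 1 :=
    fun u hu j s => hu j (mem_univ j) s (mem_univ s)
  set Cz : Fin n → ℝ := fun i => ∑ j, ∑ s, |Z i j s| with hCzdef
  have hzu : ∀ (i : Fin n) (u : (j : Fin r) → Fin (qv j) → ℝ), u ∈ U →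
      |∑ j, ∑ s, Z i j s * u j s| ≤ Cz i := by
    intro i u hu
    rw [hCzdef]
    calc |∑ j, ∑ s, Z i j s * u j s| ≤ ∑ j, |∑ s, Z i j s * u j s| :=
          Finset.abs_sum_le_sum_abs _ _
      _ ≤ ∑ j, ∑ s, |Z i j s * u j s| :=
          Finset.sum_le_sum fun j _ => Finset.abs_sum_le_sum_abs _ _
      _ ≤ ∑ j, ∑ s, |Z i j s| := by
          refine Finset.sum_le_sum fun j _ => Finset.sum_le_sum fun s _ => ?_
          rw [abs_mul]
          have h01 := hUmem u hu j s
          have habs : |u j s| ≤ 1 := abs_le.mpr ⟨by linarith [h01.1], h01.2⟩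
          nlinarith [abs_nonneg (Z i j s)]
  have hsumu : ∀ (u : (j : Fin r) → Fin (qv j) → ℝ), u ∈ U → ∀ j,
      ∑ s, (u j s)^2 ≤ (qv j : ℝ) := by
    intro u hu j
    calc ∑ s, (u j s)^2 ≤ ∑ _s : Fin (qv j), (1:ℝ) := by
          refine Finset.sum_le_sum fun s _ => ?_
          have h01 := hUmem u hu j s
          nlinarith [h01.1, h01.2]
      _ = (qv j : ℝ) := by simp
  have hsumu0 : ∀ (u : (j : Fin r) → Fin (qv j) → ℝ) (j : Fin r), 0 ≤ ∑ s, (u j s)^2 :=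
    fun u j => Finset.sum_nonneg fun s _ => sq_nonneg _
  -- MAIN CLAIM: no nonzero direction v with (1-2y_i)⟨x_i,v⟩ ≥ 0 for all i
  have claim_nodir : ∀ v : Fin p → ℝ,
      (∀ i, 0 ≤ (1 - 2*(y i:ℝ)) * ∑ c, X i c * v c) → v = 0 := by
    intro v hv
    by_contra hvne
    set w : Fin p → ℝ := -v with hwdef
    have hwne : w ≠ 0 := neg_ne_zero.mpr hvne
    set sgn : Fin n → ℝ := fun i => ∑ c, X i c * w c with hsgndef
    have hsumneg : ∀ i, sgn i = -∑ c, X i c * v c := by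
      intro i
      simp only [hsgndef, hwdef, Pi.neg_apply, mul_neg]
      rw [← Finset.sum_neg_distrib]
    have hsign : ∀ i, (y i = 0 ∧ sgn i ≤ 0) ∨ (y i = 1 ∧ 0 ≤ sgn i) := by
      intro i
      rcases Nat.le_one_iff_eq_zero_or_eq_one.mp (hy i) with h0 | h1
      · left
        refine ⟨h0, ?_⟩
        have hvi := hv i
        rw [h0] at hvi
        simp only [Nat.cast_zero, mul_zero, sub_zero, one_mul] at hvi
        rw [hsumneg i]; linarith
      · right
        refine ⟨h1, ?_⟩
        have hvi := hv i
        rw [h1] at hvi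
        have he : (1 - 2*((1:ℕ):ℝ)) = -1 := by norm_num
        rw [he] at hvi
        rw [hsumneg i]; nlinarith
    set G : (Fin p → ℝ) → ℝ := fun β =>
      ∏ i, F ((∑ c, X i c * β c) - Cz i) ^ y i * (1 - F ((∑ c, X i c * β c) + Cz i)) ^ (1 - y i)
      with hGdef
    have hℓmeas : ∀ i : Fin n, Measurable (fun β : Fin p → ℝ => ∑ c, X i c * β c) :=
      fun i => Finset.measurable_sum _ fun c _ => (measurable_pi_apply c).const_mul _
    have hGmeas : Measurable G := by
      rw [hGdef]
      refine Finset.measurable_prod _ fun i _ => ?_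
      exact ((hFmeas.comp ((hℓmeas i).sub_const _)).pow_const _).mul
        ((measurable_const.sub (hFmeas.comp ((hℓmeas i).add_const _))).pow_const _)
    have hGpos : ∀ β, 0 < G β := by
      intro β
      rw [hGdef]
      exact Finset.prod_pos fun i _ => hlikepos i _ _
    have hℓshift : ∀ (i : Fin n) (β : Fin p → ℝ) (k : ℕ),
        (∑ c, X i c * (β + k • w) c) = (∑ c, X i c * β c) + k * sgn i := by
      intro i β k
      simp only [hsgndef]
      rw [Finset.mul_sum, ← Finset.sum_add_distrib]
      refine Finset.sum_congr rfl fun c _ => ?_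
      have hc' : (β + k • w) c = β c + (k:ℝ) * w c := by
        simp [Pi.smul_apply]
      rw [hc']
      ring
    have hGmono : ∀ (β : Fin p → ℝ) (k : ℕ), G β ≤ G (β + k • w) := by
      intro β k
      simp only [hGdef]
      refine Finset.prod_le_prod (fun i _ => (hlikepos i _ _).le) (fun i _ => ?_)
      rw [hℓshift i β k]
      have hk : (0:ℝ) ≤ (k:ℝ) := Nat.cast_nonneg k
      rcases hsign i with ⟨h0, hs0⟩ | ⟨h1, hs1⟩
      · rw [h0]
        simp only [pow_zero, one_mul, Nat.sub_zero, pow_one]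
        have hmono' : (∑ c, X i c * β c) + (k:ℝ) * sgn i + Cz i ≤ (∑ c, X i c * β c) + Cz i := by
          nlinarith
        linarith [hFmono hmono']
      · rw [h1]
        simp only [pow_one, Nat.sub_self, pow_zero, mul_one]
        refine hFmono ?_
        nlinarith
    have hGint : (∫⁻ β : Fin p → ℝ, ENNReal.ofReal (G β)) = ⊤ :=
      aux_lintegral_top_of_shift G hGmeas hGpos w hwne hGmono
    set κ1 : ℝ := c0 * ∏ j, Real.exp (-(qv j:ℝ)) with hκ1def
    set κ2 : ℝ := ∏ j, min 1 ((2:ℝ) ^ (a j - 1)) * Real.exp (-(2 * b j)) with hκ2def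
    have hκ1 : 0 < κ1 := mul_pos hc0 (Finset.prod_pos fun j _ => Real.exp_pos _)
    have hκ2 : 0 < κ2 := Finset.prod_pos fun j _ =>
      mul_pos (lt_min one_pos (Real.rpow_pos_of_pos two_pos _)) (Real.exp_pos _)
    set T : Set (Fin r → ℝ) := Set.univ.pi fun _ => Icc (1:ℝ) 2 with hTdef
    have hTm : MeasurableSet T := MeasurableSet.univ_pi fun _ => measurableSet_Icc
    have hTvol : volume T = 1 := by
      rw [hTdef, volume_pi_pi]
      simp [Real.volume_Icc]
      norm_num
    have hTmem : ∀ τ : Fin r → ℝ, τ ∈ T → ∀ j, τ j ∈ Icc (1:ℝ) 2 :=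
      fun τ hτ j => hτ j (mem_univ j)
    have hTsub : T ⊆ piIoi := by
      intro τ hτ j _
      exact lt_of_lt_of_le one_pos (hTmem τ hτ j).1
    have P1 : ∀ (τ : Fin r → ℝ), τ ∈ T → ∀ (β : Fin p → ℝ),
        ∀ u : (j : Fin r) → Fin (qv j) → ℝ, u ∈ U →
        ENNReal.ofReal (G β * (κ1 * κ2)) ≤ bodyI τ β u := by
      intro τ hτ β u hu
      simp only [hbodyI]
      refine ENNReal.ofReal_le_ofReal ?_
      have h1 : G β ≤ ∏ i : Fin n,
          F (∑ c, X i c * β c + ∑ j, ∑ s, Z i j s * u j s) ^ (y i) *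
            (1 - F (∑ c, X i c * β c + ∑ j, ∑ s, Z i j s * u j s)) ^ (1 - y i) := by
        simp only [hGdef]
        refine Finset.prod_le_prod (fun i _ => (hlikepos i _ _).le) (fun i _ => ?_)
        have hz := hzu i u hu
        rw [abs_le] at hz
        exact hlike i _ _ _ (by linarith [hz.1]) (by linarith [hz.2])
      have h2 : κ1 ≤ c0 *
          ∏ j : Fin r, τ j ^ ((qv j : ℝ) / 2) * Real.exp (-(τ j) * (∑ s, (u j s) ^ 2) / 2) := by
        rw [hκ1def]
        refine mul_le_mul_of_nonneg_left ?_ hc0.le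
        refine Finset.prod_le_prod (fun j _ => (Real.exp_pos _).le) (fun j _ => ?_)
        have hτj := hTmem τ hτ j
        have hτ1 : (1:ℝ) ≤ τ j := hτj.1
        have hτ2 : τ j ≤ 2 := hτj.2
        have hr1 : (1:ℝ) ≤ τ j ^ ((qv j:ℝ)/2) := by
          calc (1:ℝ) = (1:ℝ) ^ ((qv j:ℝ)/2) := (Real.one_rpow _).symm
            _ ≤ τ j ^ ((qv j:ℝ)/2) := Real.rpow_le_rpow zero_le_one hτ1 (by positivity)
        have hexp : Real.exp (-(qv j:ℝ)) ≤ Real.exp (-(τ j) * (∑ s, (u j s) ^ 2) / 2) := by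
          refine Real.exp_le_exp.mpr ?_
          have hs1 := hsumu u hu j
          have hs0 := hsumu0 u j
          nlinarith
        calc Real.exp (-(qv j:ℝ)) = 1 * Real.exp (-(qv j:ℝ)) := (one_mul _).symm
          _ ≤ τ j ^ ((qv j:ℝ)/2) * Real.exp (-(τ j) * (∑ s, (u j s) ^ 2) / 2) :=
            mul_le_mul hr1 hexp (Real.exp_pos _).le (by linarith)
      have h3 : κ2 ≤ ∏ j : Fin r, τ j ^ (a j - 1) * Real.exp (-(b j) * τ j) := by
        rw [hκ2def]
        refine Finset.prod_le_prod (fun j _ => (mul_pos (lt_min one_pos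
          (Real.rpow_pos_of_pos two_pos _)) (Real.exp_pos _)).le) (fun j _ => ?_)
        have hτj := hTmem τ hτ j
        have hτ1 : (1:ℝ) ≤ τ j := hτj.1
        have hτ2 : τ j ≤ 2 := hτj.2
        have hτpos : (0:ℝ) < τ j := lt_of_lt_of_le one_pos hτ1
        have hrp : min 1 ((2:ℝ) ^ (a j - 1)) ≤ τ j ^ (a j - 1) := by
          rcases le_or_gt 0 (a j - 1) with hpe | hne2
          · refine (min_le_left _ _).trans ?_
            calc (1:ℝ) = (1:ℝ) ^ (a j - 1) := (Real.one_rpow _).symm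
              _ ≤ τ j ^ (a j - 1) := Real.rpow_le_rpow zero_le_one hτ1 hpe
          · exact (min_le_right _ _).trans (Real.rpow_le_rpow_of_nonpos hτpos hτ2 hne2.le)
        have hexp : Real.exp (-(2 * b j)) ≤ Real.exp (-(b j) * τ j) := by
          refine Real.exp_le_exp.mpr ?_
          nlinarith [hb j]
        exact mul_le_mul hrp hexp (Real.exp_pos _).le (Real.rpow_nonneg hτpos.le _)
      have hA0 : (0:ℝ) ≤ ∏ i : Fin n,
          F (∑ c, X i c * β c + ∑ j, ∑ s, Z i j s * u j s) ^ (y i) *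
            (1 - F (∑ c, X i c * β c + ∑ j, ∑ s, Z i j s * u j s)) ^ (1 - y i) :=
        Finset.prod_nonneg fun i _ => (hlikepos i _ _).le
      have hB0 : (0:ℝ) ≤ c0 *
          ∏ j : Fin r, τ j ^ ((qv j : ℝ) / 2) * Real.exp (-(τ j) * (∑ s, (u j s) ^ 2) / 2) := by
        refine mul_nonneg hc0.le (Finset.prod_nonneg fun j _ => mul_nonneg ?_ (Real.exp_pos _).le)
        exact Real.rpow_nonneg (le_trans zero_le_one (hTmem τ hτ j).1) _
      calc G β * (κ1 * κ2) = (G β * κ1) * κ2 := by ring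
        _ ≤ _ := mul_le_mul (mul_le_mul h1 h2 hκ1.le hA0) h3 hκ2.le (mul_nonneg hA0 hB0)
    have hmid : ∀ τ : Fin r → ℝ, τ ∈ T →
        (∫⁻ β : Fin p → ℝ, ∫⁻ u : (j : Fin r) → Fin (qv j) → ℝ, bodyI τ β u) = ⊤ := by
      intro τ hτ
      have hinner : ∀ β : Fin p → ℝ,
          ENNReal.ofReal (G β * (κ1 * κ2)) ≤ ∫⁻ u, bodyI τ β u := by
        intro β
        have h1 : ∀ u, U.indicator (fun _ => ENNReal.ofReal (G β * (κ1 * κ2))) u ≤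
            bodyI τ β u := by
          intro u
          by_cases hu : u ∈ U
          · rw [indicator_of_mem hu]
            exact P1 τ hτ β u hu
          · rw [indicator_of_notMem hu]
            exact zero_le
        have h2 := lintegral_mono (μ := volume) h1
        rwa [lintegral_indicator_const hUm, hUvol, mul_one] at h2
      have h3 : (∫⁻ β : Fin p → ℝ, ENNReal.ofReal (G β * (κ1 * κ2))) = ⊤ := by
        have heq : ∀ β : Fin p → ℝ, ENNReal.ofReal (G β * (κ1 * κ2)) =
            ENNReal.ofReal (κ1 * κ2) * ENNReal.ofReal (G β) := by
          intro β
          rw [← ENNReal.ofReal_mul (mul_pos hκ1 hκ2).le]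
          congr 1
          ring
        simp_rw [heq]
        rw [lintegral_const_mul' _ _ ENNReal.ofReal_ne_top, hGint, ENNReal.mul_top]
        exact (ENNReal.ofReal_pos.mpr (mul_pos hκ1 hκ2)).ne'
      refine top_le_iff.mp ?_
      calc (⊤:ℝ≥0∞) = ∫⁻ β : Fin p → ℝ, ENNReal.ofReal (G β * (κ1 * κ2)) := h3.symm
        _ ≤ _ := lintegral_mono hinner
    have houter : (∫⁻ τ : Fin r → ℝ in piIoi, ∫⁻ β : Fin p → ℝ,
        ∫⁻ u : (j : Fin r) → Fin (qv j) → ℝ, bodyI τ β u) = ⊤ := by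
      refine top_le_iff.mp ?_
      have h1 : ∀ τ : Fin r → ℝ, T.indicator (fun _ => (⊤:ℝ≥0∞)) τ ≤
          ∫⁻ β : Fin p → ℝ, ∫⁻ u : (j : Fin r) → Fin (qv j) → ℝ, bodyI τ β u := by
        intro τ
        by_cases hτ : τ ∈ T
        · rw [indicator_of_mem hτ]
          exact (hmid τ hτ).ge
        · rw [indicator_of_notMem hτ]
          exact zero_le
      have h2 := lintegral_mono (μ := volume.restrict piIoi) h1
      rw [lintegral_indicator_const hTm, Measure.restrict_apply hTm,
        inter_eq_self_of_subset_left hTsub, hTvol, mul_one] at h2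
      exact h2
    exact absurd houter hcy'.ne
  -- THIRD CONCLUSION
  have claim3 : ∀ j, 0 < a j + (qv j : ℝ) / 2 := by
    by_contra hcon
    push_neg at hcon
    obtain ⟨j0, hj0⟩ := hcon
    set R : Fin n → ℝ := fun i => (∑ c, |X i c|) + Cz i with hRdef
    set δ : ℝ := ∏ i, F (-(R i)) ^ y i * (1 - F (R i)) ^ (1 - y i) with hδdef
    have hδ : 0 < δ := by
      rw [hδdef]
      exact Finset.prod_pos fun i _ => hlikepos i _ _
    set B0 : Set (Fin p → ℝ) := Set.univ.pi fun _ => Icc (0:ℝ) 1 with hB0def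
    have hB0m : MeasurableSet B0 := MeasurableSet.univ_pi fun _ => measurableSet_Icc
    have hB0vol : volume B0 = 1 := by
      rw [hB0def, volume_pi_pi]; simp [Real.volume_Icc]
    have hβmem : ∀ β : Fin p → ℝ, β ∈ B0 → ∀ i : Fin n,
        |∑ c, X i c * β c| ≤ ∑ c, |X i c| := by
      intro β hβ i
      calc |∑ c, X i c * β c| ≤ ∑ c, |X i c * β c| := Finset.abs_sum_le_sum_abs _ _
        _ ≤ ∑ c, |X i c| := by
            refine Finset.sum_le_sum fun c _ => ?_
            rw [abs_mul]
            have h01 := hβ c (mem_univ c)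
            have habs : |β c| ≤ 1 := abs_le.mpr ⟨by linarith [h01.1], h01.2⟩
            nlinarith [abs_nonneg (X i c)]
    have P2 : ∀ (τ : Fin r → ℝ), τ ∈ piIoi → ∀ β ∈ B0,
        ∀ u : (j : Fin r) → Fin (qv j) → ℝ, u ∈ U →
        ENNReal.ofReal ((δ * c0) * ∏ j, τ j ^ (a j + (qv j:ℝ)/2 - 1) *
          Real.exp (-(b j + (qv j:ℝ)/2) * τ j)) ≤ bodyI τ β u := by
      intro τ hτ β hβ u hu
      have hτpos : ∀ j, (0:ℝ) < τ j := fun j => hτ j (mem_univ j)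
      simp only [hbodyI]
      refine ENNReal.ofReal_le_ofReal ?_
      have hsplit : (∏ j, τ j ^ (a j + (qv j:ℝ)/2 - 1) * Real.exp (-(b j + (qv j:ℝ)/2) * τ j))
          = (∏ j, τ j ^ ((qv j:ℝ)/2) * Real.exp (-(τ j) * (qv j:ℝ) / 2)) *
            (∏ j : Fin r, τ j ^ (a j - 1) * Real.exp (-(b j) * τ j)) := by
        rw [← Finset.prod_mul_distrib]
        refine Finset.prod_congr rfl fun j _ => ?_
        have e1 : a j + (qv j:ℝ)/2 - 1 = (qv j:ℝ)/2 + (a j - 1) := by ring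
        have e2 : -(b j + (qv j:ℝ)/2) * τ j = (-(τ j) * (qv j:ℝ) / 2) + (-(b j) * τ j) := by
          ring
        rw [e1, e2, Real.rpow_add (hτpos j), Real.exp_add]
        ring
      have h1 : δ ≤ ∏ i : Fin n,
          F (∑ c, X i c * β c + ∑ j, ∑ s, Z i j s * u j s) ^ (y i) *
            (1 - F (∑ c, X i c * β c + ∑ j, ∑ s, Z i j s * u j s)) ^ (1 - y i) := by
        rw [hδdef]
        refine Finset.prod_le_prod (fun i _ => (hlikepos i _ _).le) (fun i _ => ?_)
        have hz := hzu i u hu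
        rw [abs_le] at hz
        have hx := hβmem β hβ i
        rw [abs_le] at hx
        refine hlike i _ _ _ ?_ ?_
        · rw [hRdef]; simp only; linarith [hz.1, hx.1]
        · rw [hRdef]; simp only; linarith [hz.2, hx.2]
      have h2 : (∏ j, τ j ^ ((qv j:ℝ)/2) * Real.exp (-(τ j) * (qv j:ℝ) / 2)) ≤
          ∏ j : Fin r, τ j ^ ((qv j : ℝ) / 2) * Real.exp (-(τ j) * (∑ s, (u j s) ^ 2) / 2) := by
        refine Finset.prod_le_prod (fun j _ => mul_nonneg (Real.rpow_nonneg (hτpos j).le _)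
          (Real.exp_pos _).le) (fun j _ => ?_)
        refine mul_le_mul_of_nonneg_left ?_ (Real.rpow_nonneg (hτpos j).le _)
        refine Real.exp_le_exp.mpr ?_
        have hs1 := hsumu u hu j
        nlinarith [hτpos j]
      have hA0 : (0:ℝ) ≤ ∏ i : Fin n,
          F (∑ c, X i c * β c + ∑ j, ∑ s, Z i j s * u j s) ^ (y i) *
            (1 - F (∑ c, X i c * β c + ∑ j, ∑ s, Z i j s * u j s)) ^ (1 - y i) :=
        Finset.prod_nonneg fun i _ => (hlikepos i _ _).le
      have hgauss0 : (0:ℝ) ≤ ∏ j, τ j ^ ((qv j:ℝ)/2) * Real.exp (-(τ j) * (qv j:ℝ) / 2) :=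
        Finset.prod_nonneg fun j _ => mul_nonneg (Real.rpow_nonneg (hτpos j).le _)
          (Real.exp_pos _).le
      have hprior0 : (0:ℝ) ≤ ∏ j : Fin r, τ j ^ (a j - 1) * Real.exp (-(b j) * τ j) :=
        Finset.prod_nonneg fun j _ => mul_nonneg (Real.rpow_nonneg (hτpos j).le _)
          (Real.exp_pos _).le
      calc (δ * c0) * ∏ j, τ j ^ (a j + (qv j:ℝ)/2 - 1) * Real.exp (-(b j + (qv j:ℝ)/2) * τ j)
          = (δ * (c0 * (∏ j, τ j ^ ((qv j:ℝ)/2) * Real.exp (-(τ j) * (qv j:ℝ) / 2)))) *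
            (∏ j : Fin r, τ j ^ (a j - 1) * Real.exp (-(b j) * τ j)) := by
            rw [hsplit]; ring
        _ ≤ _ := by
            refine mul_le_mul_of_nonneg_right ?_ hprior0
            exact mul_le_mul h1 (mul_le_mul_of_nonneg_left h2 hc0.le)
              (mul_nonneg hc0.le hgauss0) hA0
    have hmid2 : ∀ τ : Fin r → ℝ, τ ∈ piIoi →
        ENNReal.ofReal ((δ * c0) * ∏ j, τ j ^ (a j + (qv j:ℝ)/2 - 1) *
          Real.exp (-(b j + (qv j:ℝ)/2) * τ j)) ≤
        ∫⁻ β : Fin p → ℝ, ∫⁻ u : (j : Fin r) → Fin (qv j) → ℝ, bodyI τ β u := by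
      intro τ hτ
      have hinner : ∀ β : Fin p → ℝ, β ∈ B0 →
          ENNReal.ofReal ((δ * c0) * ∏ j, τ j ^ (a j + (qv j:ℝ)/2 - 1) *
            Real.exp (-(b j + (qv j:ℝ)/2) * τ j)) ≤ ∫⁻ u, bodyI τ β u := by
        intro β hβ
        have h1 : ∀ u, U.indicator (fun _ => ENNReal.ofReal ((δ * c0) *
            ∏ j, τ j ^ (a j + (qv j:ℝ)/2 - 1) *
              Real.exp (-(b j + (qv j:ℝ)/2) * τ j))) u ≤ bodyI τ β u := by
          intro u
          by_cases hu : u ∈ U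
          · rw [indicator_of_mem hu]
            exact P2 τ hτ β hβ u hu
          · rw [indicator_of_notMem hu]
            exact zero_le
        have h2 := lintegral_mono (μ := volume) h1
        rwa [lintegral_indicator_const hUm, hUvol, mul_one] at h2
      have h1 : ∀ β : Fin p → ℝ, B0.indicator (fun _ => ENNReal.ofReal ((δ * c0) *
          ∏ j, τ j ^ (a j + (qv j:ℝ)/2 - 1) *
            Real.exp (-(b j + (qv j:ℝ)/2) * τ j))) β ≤ ∫⁻ u, bodyI τ β u := by
        intro β
        by_cases hβ : β ∈ B0
        · rw [indicator_of_mem hβ]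
          exact hinner β hβ
        · rw [indicator_of_notMem hβ]
          exact zero_le
      have h2 := lintegral_mono (μ := volume) h1
      rwa [lintegral_indicator_const hB0m, hB0vol, mul_one] at h2
    have houter2 : (∫⁻ τ : Fin r → ℝ in piIoi, ∫⁻ β : Fin p → ℝ,
        ∫⁻ u : (j : Fin r) → Fin (qv j) → ℝ, bodyI τ β u) = ⊤ := by
      refine top_le_iff.mp ?_
      have htau := aux_lintegral_tau_top (r := r) j0 (fun j => a j + (qv j:ℝ)/2)
        (fun j => b j + (qv j:ℝ)/2) (fun j => add_nonneg (hb j) (by positivity)) hj0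
        (δ * c0) (mul_pos hδ hc0)
      have hstep : (∫⁻ τ : Fin r → ℝ in piIoi,
          ENNReal.ofReal ((δ * c0) * ∏ j, τ j ^ (a j + (qv j:ℝ)/2 - 1) *
            Real.exp (-(b j + (qv j:ℝ)/2) * τ j))) = ⊤ := htau
      refine le_trans (le_of_eq hstep.symm) ?_
      have h1 : ∀ τ : Fin r → ℝ, piIoi.indicator (fun τ' => ENNReal.ofReal ((δ * c0) *
          ∏ j, τ' j ^ (a j + (qv j:ℝ)/2 - 1) *
            Real.exp (-(b j + (qv j:ℝ)/2) * τ' j))) τ ≤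
          ∫⁻ β : Fin p → ℝ, ∫⁻ u : (j : Fin r) → Fin (qv j) → ℝ, bodyI τ β u := by
        intro τ
        by_cases hτ : τ ∈ piIoi
        · rw [indicator_of_mem hτ]
          exact hmid2 τ hτ
        · rw [indicator_of_notMem hτ]
          exact zero_le
      have h2 := lintegral_mono (μ := volume.restrict piIoi) h1
      rw [lintegral_indicator hpiIoim, Measure.restrict_restrict hpiIoim, inter_self] at h2
      exact h2
    exact absurd houter2 hcy'.ne
  -- ASSEMBLE
  refine ⟨?_, ?_, claim3⟩
  · -- rank
    have hinj : ∀ v : Fin p → ℝ, X.mulVec v = 0 → v = 0 := by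
      intro v hv
      refine claim_nodir v fun i => ?_
      have h0 : ∑ c, X i c * v c = 0 := by
        have := congrFun hv i
        simpa [Matrix.mulVec, dotProduct] using this
      rw [h0, mul_zero]
    have hinj' : Function.Injective X.mulVecLin := by
      rw [← LinearMap.ker_eq_bot, LinearMap.ker_eq_bot']
      intro v hv
      exact hinj v (by simpa [Matrix.mulVecLin_apply] using hv)
    have hr1 : X.rank = Module.finrank ℝ (LinearMap.range X.mulVecLin) := rfl
    rw [hr1, LinearMap.finrank_range_of_inj hinj', Module.finrank_fin_fun]
  · set A : Matrix (Fin n) (Fin p) ℝ := Matrix.of fun i c => (1 - 2*(y i:ℝ)) * X i c with hAdef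
    have hA : ∀ v : Fin p → ℝ, (∀ i, 0 ≤ A.mulVec v i) → A.mulVec v = 0 := by
      intro v hv
      have hveq : v = 0 := by
        refine claim_nodir v fun i => ?_
        have hAv : A.mulVec v i = (1 - 2*(y i:ℝ)) * ∑ c, X i c * v c := by
          simp only [hAdef, Matrix.mulVec, dotProduct, Matrix.of_apply, Finset.mul_sum]
          exact Finset.sum_congr rfl fun c _ => by ring
        rw [← hAv]
        exact hv i
      rw [hveq, Matrix.mulVec_zero]
    obtain ⟨e, hepos, heq⟩ := aux_stiemke A hA
    refine ⟨e, hepos, fun c => ?_⟩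
    have := heq c
    simpa [hAdef] using this
end

section
/- Consider an exponential family GLMM with a proper prior π(Ψ) on the covariance matrix of the random effects, a monotone θ-link θ, and a monotone function b. If X does not have full column rank (rank(X) < p), then c(y) = ∞; equivalently, rank(X) = p is a necessary condition for the propriety of the posterior of (β, Ψ), i.e., for c(y) < ∞. -/
open MeasureTheory Set Matrix
open scoped ENNReal

private lemma aux_min_mul {y c d t : ℝ} (h1 : min c d ≤ t) (h2 : t ≤ max c d) :
    min (y * c) (y * d) ≤ y * t := by
  rcases le_total 0 y with hy | hy
  · rcases le_total c d with h | h
    · exact (min_le_left _ _).trans (mul_le_mul_of_nonneg_left ((min_eq_left h) ▸ h1) hy)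
    · exact (min_le_right _ _).trans (mul_le_mul_of_nonneg_left ((min_eq_right h) ▸ h1) hy)
  · rcases le_total c d with h | h
    · exact (min_le_right _ _).trans (mul_le_mul_of_nonpos_left ((max_eq_right h) ▸ h2) hy)
    · exact (min_le_left _ _).trans (mul_le_mul_of_nonpos_left ((max_eq_left h) ▸ h2) hy)

private lemma aux_between {g : ℝ → ℝ} (hg : Monotone g ∨ Antitone g) {a b t : ℝ}
    (h1 : a ≤ t) (h2 : t ≤ b) : min (g a) (g b) ≤ g t ∧ g t ≤ max (g a) (g b) := by
  rcases hg with hg | hg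
  · exact ⟨(min_le_left _ _).trans (hg h1), (hg h2).trans (le_max_right _ _)⟩
  · exact ⟨(min_le_right _ _).trans (hg h2), (hg h1).trans (le_max_left _ _)⟩

private lemma aux_comp {f g : ℝ → ℝ} (hf : Monotone f ∨ Antitone f)
    (hg : Monotone g ∨ Antitone g) :
    Monotone (fun t => f (g t)) ∨ Antitone (fun t => f (g t)) := by
  rcases hf with hf | hf <;> rcases hg with hg | hg
  exacts [Or.inl (hf.comp hg), Or.inr (hf.comp_antitone hg),
    Or.inr (hf.comp_monotone hg), Or.inl (hf.comp hg)]

private lemma aux_volume_top {p : ℕ} {v : Fin p → ℝ} (hv : v ≠ 0) {ε : ℝ} (hε : 0 < ε)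
    {S : Set (Fin p → ℝ)} (hS : ∀ t : ℝ, Metric.closedBall (t • v) ε ⊆ S) :
    ∃ U : Set (Fin p → ℝ), MeasurableSet U ∧ U ⊆ S ∧ volume U = ⊤ := by
  obtain ⟨c₀, hc₀⟩ : ∃ c, v c ≠ 0 := by
    by_contra h; push_neg at h; exact hv (funext fun c => h c)
  set T : ℝ := 3 * ε / |v c₀| with hT
  have hTpos : 0 < T := by positivity
  refine ⟨⋃ m : ℕ, Metric.closedBall (((m : ℝ) * T) • v) ε,
    MeasurableSet.iUnion fun _ => measurableSet_closedBall,
    iUnion_subset fun m => hS _, ?_⟩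
  rw [measure_iUnion ?_ fun _ => measurableSet_closedBall]
  · have hvol : ∀ m : ℕ, volume (Metric.closedBall (((m : ℝ) * T) • v) ε)
        = ENNReal.ofReal ((2 * ε) ^ p) := by
      intro m
      rw [Real.volume_pi_closedBall _ hε.le, Fintype.card_fin]
    rw [tsum_congr hvol]
    exact ENNReal.tsum_const_eq_top_of_ne_zero (by
      simp only [ne_eq, ENNReal.ofReal_eq_zero, not_le]
      positivity)
  · intro a b hab
    simp only [Function.onFun]
    refine Metric.closedBall_disjoint_closedBall ?_
    have h1 : dist ((((a : ℝ) * T) • v) c₀) ((((b : ℝ) * T) • v) c₀)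
        ≤ dist (((a : ℝ) * T) • v) (((b : ℝ) * T) • v) := dist_le_pi_dist _ _ c₀
    have h2 : dist ((((a : ℝ) * T) • v) c₀) ((((b : ℝ) * T) • v) c₀)
        = |(a : ℝ) - b| * (T * |v c₀|) := by
      simp only [Pi.smul_apply, smul_eq_mul, Real.dist_eq]
      have he : (a : ℝ) * T * v c₀ - (b : ℝ) * T * v c₀ = ((a : ℝ) - b) * (T * v c₀) := by ring
      rw [he, abs_mul, abs_mul, abs_of_pos hTpos]
    have h3 : T * |v c₀| = 3 * ε := by
      rw [hT]; field_simp
    have hab1 : (1 : ℝ) ≤ |(a : ℝ) - b| := by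
      have hne : ((a : ℤ) - b) ≠ 0 := sub_ne_zero.2 (by exact_mod_cast hab)
      have := Int.one_le_abs hne
      calc (1 : ℝ) = ((1 : ℤ) : ℝ) := by norm_num
        _ ≤ ((|(a : ℤ) - b| : ℤ) : ℝ) := by exact_mod_cast this
        _ = |(a : ℝ) - b| := by push_cast; ring_nf
    have : 3 * ε ≤ dist (((a : ℝ) * T) • v) (((b : ℝ) * T) • v) := by
      calc 3 * ε = 1 * (3 * ε) := (one_mul _).symm
        _ ≤ |(a : ℝ) - b| * (T * |v c₀|) := by
            rw [h3]; exact mul_le_mul_of_nonneg_right hab1 (by positivity)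
        _ = _ := h2.symm
        _ ≤ _ := h1
    linarith

private lemma aux_pointwise
    (n p q : ℕ)
    (X : Matrix (Fin n) (Fin p) ℝ) (Z : Matrix (Fin n) (Fin q) ℝ)
    (y : Fin n → ℝ)
    (θ bf : ℝ → ℝ)
    (hθ : Monotone θ ∨ Antitone θ)
    (hbf : Monotone bf ∨ Antitone bf)
    (Psi : Matrix (Fin q) (Fin q) ℝ) (hPsi : Psi.PosDef)
    (S : Set (Fin p → ℝ)) (hSmem : ∀ β ∈ S, ∀ i, |∑ c, X i c * β c| ≤ 1) :
    ∃ r : ℝ, 0 < r ∧ ∀ β ∈ S, ∀ u ∈ Metric.closedBall (0 : Fin q → ℝ) 1,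
      r ≤ (∏ i : Fin n,
              Real.exp (y i * θ (∑ c, X i c * β c + ∑ s, Z i s * u s) -
                bf (θ (∑ c, X i c * β c + ∑ s, Z i s * u s)))) *
            ((2 * Real.pi) ^ (-(q : ℝ) / 2) * Psi.det ^ (-(1 : ℝ) / 2) *
              Real.exp (-(u ⬝ᵥ (Psi⁻¹ *ᵥ u)) / 2)) := by
  classical
  set g : ℝ → ℝ := fun t => bf (θ t) with hgdef
  have hgm : Monotone g ∨ Antitone g := aux_comp hbf hθ
  set R : ℝ := 1 + ∑ i : Fin n, ∑ s : Fin q, |Z i s| with hR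
  set m : Fin n → ℝ := fun i => min (y i * θ (-R)) (y i * θ R) - max (g (-R)) (g R) with hm
  set K : ℝ := ∑ s : Fin q, ∑ t : Fin q, |Psi⁻¹ s t| with hK
  have hdet : 0 < Psi.det := hPsi.det_pos
  have hC1 : 0 < (2 * Real.pi) ^ (-(q : ℝ) / 2) :=
    Real.rpow_pos_of_pos (by positivity) _
  have hC2 : 0 < Psi.det ^ (-(1 : ℝ) / 2) := Real.rpow_pos_of_pos hdet _
  refine ⟨Real.exp (∑ i, m i) * ((2 * Real.pi) ^ (-(q : ℝ) / 2) * Psi.det ^ (-(1 : ℝ) / 2) *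
      Real.exp (-K / 2)), by positivity, ?_⟩
  intro β hβ u hu
  have hus : ∀ s, |u s| ≤ 1 := by
    intro s
    have h1 : dist (u s) ((0 : Fin q → ℝ) s) ≤ dist u 0 := dist_le_pi_dist u 0 s
    have h2 : dist u 0 ≤ 1 := Metric.mem_closedBall.1 hu
    simpa [Real.dist_eq] using h1.trans h2
  have heta : ∀ i, -R ≤ ∑ c, X i c * β c + ∑ s, Z i s * u s ∧
      ∑ c, X i c * β c + ∑ s, Z i s * u s ≤ R := by
    intro i
    have h1 := abs_le.1 (hSmem β hβ i)
    have h2a : |∑ s, Z i s * u s| ≤ ∑ s, |Z i s| := by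
      calc |∑ s, Z i s * u s| ≤ ∑ s, |Z i s * u s| := Finset.abs_sum_le_sum_abs _ _
        _ ≤ ∑ s, |Z i s| := Finset.sum_le_sum fun s _ => by
            rw [abs_mul]
            exact (mul_le_mul_of_nonneg_left (hus s) (abs_nonneg _)).trans
              (le_of_eq (mul_one _))
    have h2b : ∑ s : Fin q, |Z i s| ≤ ∑ i : Fin n, ∑ s : Fin q, |Z i s| :=
      Finset.single_le_sum (f := fun j : Fin n => ∑ s : Fin q, |Z j s|)
        (fun j _ => Finset.sum_nonneg fun s _ => abs_nonneg _) (Finset.mem_univ i)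
    have h2 := abs_le.1 (h2a.trans h2b)
    constructor <;> simp only [hR] <;> linarith [h1.1, h1.2, h2.1, h2.2]
  have hprod : Real.exp (∑ i, m i) ≤ ∏ i : Fin n,
      Real.exp (y i * θ (∑ c, X i c * β c + ∑ s, Z i s * u s) -
        bf (θ (∑ c, X i c * β c + ∑ s, Z i s * u s))) := by
    rw [Real.exp_sum]
    refine Finset.prod_le_prod (fun i _ => (Real.exp_pos _).le) (fun i _ => ?_)
    rw [Real.exp_le_exp]
    obtain ⟨ha, hb⟩ := heta i
    have hθb := aux_between hθ ha hb
    have hy1 : min (y i * θ (-R)) (y i * θ R)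
        ≤ y i * θ (∑ c, X i c * β c + ∑ s, Z i s * u s) := aux_min_mul hθb.1 hθb.2
    have hg1 : g (∑ c, X i c * β c + ∑ s, Z i s * u s) ≤ max (g (-R)) (g R) :=
      (aux_between hgm ha hb).2
    have hge : g (∑ c, X i c * β c + ∑ s, Z i s * u s)
        = bf (θ (∑ c, X i c * β c + ∑ s, Z i s * u s)) := rfl
    simp only [hm]
    linarith [hge ▸ hg1]
  have hquad : u ⬝ᵥ (Psi⁻¹ *ᵥ u) ≤ K := by
    have habs : |u ⬝ᵥ (Psi⁻¹ *ᵥ u)| ≤ K := by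
      rw [hK, dotProduct]
      calc |∑ s, u s * (Psi⁻¹ *ᵥ u) s| ≤ ∑ s, |u s * (Psi⁻¹ *ᵥ u) s| :=
            Finset.abs_sum_le_sum_abs _ _
        _ ≤ ∑ s, ∑ t, |Psi⁻¹ s t| := Finset.sum_le_sum fun s _ => by
            have hmv : (Psi⁻¹ *ᵥ u) s = ∑ t, Psi⁻¹ s t * u t := by
              simp [Matrix.mulVec, dotProduct]
            rw [abs_mul, hmv]
            have hin : |∑ t, Psi⁻¹ s t * u t| ≤ ∑ t, |Psi⁻¹ s t| := by
              calc |∑ t, Psi⁻¹ s t * u t| ≤ ∑ t, |Psi⁻¹ s t * u t| :=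
                    Finset.abs_sum_le_sum_abs _ _
                _ ≤ ∑ t, |Psi⁻¹ s t| := Finset.sum_le_sum fun t _ => by
                    rw [abs_mul]
                    exact (mul_le_mul_of_nonneg_left (hus t) (abs_nonneg _)).trans
                      (le_of_eq (mul_one _))
            calc |u s| * |∑ t, Psi⁻¹ s t * u t| ≤ 1 * ∑ t, |Psi⁻¹ s t| :=
                  mul_le_mul (hus s) hin (abs_nonneg _) zero_le_one
              _ = ∑ t, |Psi⁻¹ s t| := one_mul _
    exact (le_abs_self _).trans habs
  have hexp : Real.exp (-K / 2) ≤ Real.exp (-(u ⬝ᵥ (Psi⁻¹ *ᵥ u)) / 2) := by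
    rw [Real.exp_le_exp]; linarith
  exact mul_le_mul hprod (mul_le_mul_of_nonneg_left hexp (by positivity))
    (by positivity) (Finset.prod_nonneg fun i _ => (Real.exp_pos _).le)



/-- Necessary condition for posterior propriety for exponential family
GLMMs (Theorem 5 of Rao & Roy): with a flat prior on β, a proper prior π
on the (symmetric positive definite) covariance matrix Ψ of the random
effects, a monotone θ-link and a monotone function b, if X does not have
full column rank then the marginal c(y) is infinite; equivalently,
rank(X) = p is necessary for posterior propriety. -/
theorem exponential_family_glmm_necessary_rank_condition
    (n p q : ℕ) (hn : 0 < n) (hp : 0 < p) (hq : 0 < q)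
    (X : Matrix (Fin n) (Fin p) ℝ) (Z : Matrix (Fin n) (Fin q) ℝ)
    (y : Fin n → ℝ)
    (θ bf : ℝ → ℝ)
    (hθ : Monotone θ ∨ Antitone θ)
    (hbf : Monotone bf ∨ Antitone bf)
    (π : Measure {M : Fin q → Fin q → ℝ // (Matrix.of M).PosDef})
    [IsProbabilityMeasure π]
    -- X does not have full column rank
    (hXrank : X.rank < p) :
    (∫⁻ Ψ : {M : Fin q → Fin q → ℝ // (Matrix.of M).PosDef},
      (∫⁻ β : Fin p → ℝ,
        ∫⁻ u : Fin q → ℝ,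
          ENNReal.ofReal (
            (∏ i : Fin n,
              Real.exp (y i * θ (∑ c, X i c * β c + ∑ s, Z i s * u s) -
                bf (θ (∑ c, X i c * β c + ∑ s, Z i s * u s)))) *
            ((2 * Real.pi) ^ (-(q : ℝ) / 2) * (Matrix.of Ψ.1).det ^ (-(1 : ℝ) / 2) *
              Real.exp (-(u ⬝ᵥ ((Matrix.of Ψ.1)⁻¹ *ᵥ u)) / 2)))) ∂π) = ⊤ := by
  classical
  obtain ⟨v, hXv, hv0⟩ : ∃ v : Fin p → ℝ, X.mulVec v = 0 ∧ v ≠ 0 := by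
    have hker : LinearMap.ker X.mulVecLin ≠ ⊥ := by
      intro h
      have h2 := X.mulVecLin.finrank_range_add_finrank_ker
      rw [h, finrank_bot, add_zero, Module.finrank_fintype_fun_eq_card,
        Fintype.card_fin] at h2
      have : X.rank = p := by simpa [Matrix.rank] using h2
      omega
    obtain ⟨v, hv, hvne⟩ := Submodule.exists_mem_ne_zero_of_ne_bot hker
    exact ⟨v, hv, hvne⟩
  set S : Set (Fin p → ℝ) := {β | ∀ i, |∑ c, X i c * β c| ≤ 1} with hSdef
  set M : ℝ := ∑ i : Fin n, ∑ c : Fin p, |X i c| with hM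
  have hM0 : 0 ≤ M :=
    Finset.sum_nonneg fun _ _ => Finset.sum_nonneg fun _ _ => abs_nonneg _
  set ε : ℝ := 1 / (M + 1) with hεdef
  have hεpos : 0 < ε := by positivity
  have hStube : ∀ t : ℝ, Metric.closedBall (t • v) ε ⊆ S := by
    intro t β hβ i
    have hwc : ∀ c, |β c - t * v c| ≤ ε := by
      intro c
      have h1 : dist (β c) ((t • v) c) ≤ dist β (t • v) := dist_le_pi_dist _ _ c
      have h2 : dist β (t • v) ≤ ε := Metric.mem_closedBall.1 hβ
      simpa [Real.dist_eq, Pi.smul_apply, smul_eq_mul] using h1.trans h2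
    have hXv_i : ∑ c, X i c * v c = 0 := by
      have := congrFun hXv i
      simpa [Matrix.mulVec, dotProduct] using this
    have heq : ∑ c, X i c * β c
        = ∑ c, X i c * (β c - t * v c) + t * ∑ c, X i c * v c := by
      rw [Finset.mul_sum, ← Finset.sum_add_distrib]
      exact Finset.sum_congr rfl fun c _ => by ring
    show |∑ c, X i c * β c| ≤ 1
    rw [heq, hXv_i, mul_zero, add_zero]
    calc |∑ c, X i c * (β c - t * v c)| ≤ ∑ c, |X i c * (β c - t * v c)| :=
          Finset.abs_sum_le_sum_abs _ _
      _ ≤ ∑ c, |X i c| * ε := Finset.sum_le_sum fun c _ => by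
          rw [abs_mul]; exact mul_le_mul_of_nonneg_left (hwc c) (abs_nonneg _)
      _ = (∑ c, |X i c|) * ε := (Finset.sum_mul _ _ _).symm
      _ ≤ M * ε := by
          refine mul_le_mul_of_nonneg_right ?_ hεpos.le
          exact Finset.single_le_sum (f := fun j : Fin n => ∑ c : Fin p, |X j c|)
            (fun j _ => Finset.sum_nonneg fun c _ => abs_nonneg _) (Finset.mem_univ i)
      _ ≤ 1 := by
          rw [hεdef, mul_one_div]
          exact div_le_one_of_le₀ (by linarith) (by linarith)
  obtain ⟨U, hUm, hUS, hUvol⟩ := aux_volume_top hv0 hεpos hStube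
  have hSmem : ∀ β ∈ S, ∀ i, |∑ c, X i c * β c| ≤ 1 := fun β hβ i => hβ i
  have inner_top : ∀ Ψ : {M : Fin q → Fin q → ℝ // (Matrix.of M).PosDef},
      (∫⁻ β : Fin p → ℝ,
        ∫⁻ u : Fin q → ℝ,
          ENNReal.ofReal (
            (∏ i : Fin n,
              Real.exp (y i * θ (∑ c, X i c * β c + ∑ s, Z i s * u s) -
                bf (θ (∑ c, X i c * β c + ∑ s, Z i s * u s)))) *
            ((2 * Real.pi) ^ (-(q : ℝ) / 2) * (Matrix.of Ψ.1).det ^ (-(1 : ℝ) / 2) *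
              Real.exp (-(u ⬝ᵥ ((Matrix.of Ψ.1)⁻¹ *ᵥ u)) / 2)))) = ⊤ := by
    intro Ψ
    obtain ⟨r, hr, hkey⟩ :=
      aux_pointwise n p q X Z y θ bf hθ hbf (Matrix.of Ψ.1) Ψ.2 S hSmem
    set c' : ℝ≥0∞ := ENNReal.ofReal r * volume (Metric.closedBall (0 : Fin q → ℝ) 1)
      with hc'
    have hball : volume (Metric.closedBall (0 : Fin q → ℝ) 1)
        = ENNReal.ofReal ((2 * 1 : ℝ) ^ q) := by
      rw [Real.volume_pi_closedBall _ zero_le_one, Fintype.card_fin]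
    have hc'0 : c' ≠ 0 := by
      rw [hc', hball]
      exact mul_ne_zero (ENNReal.ofReal_pos.mpr hr).ne'
        (ENNReal.ofReal_pos.mpr (by positivity)).ne'
    have hGlow : ∀ β ∈ U,
        c' ≤ ∫⁻ u : Fin q → ℝ,
          ENNReal.ofReal (
            (∏ i : Fin n,
              Real.exp (y i * θ (∑ c, X i c * β c + ∑ s, Z i s * u s) -
                bf (θ (∑ c, X i c * β c + ∑ s, Z i s * u s)))) *
            ((2 * Real.pi) ^ (-(q : ℝ) / 2) * (Matrix.of Ψ.1).det ^ (-(1 : ℝ) / 2) *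
              Real.exp (-(u ⬝ᵥ ((Matrix.of Ψ.1)⁻¹ *ᵥ u)) / 2))) := by
      intro β hβ
      rw [hc', ← lintegral_indicator_const measurableSet_closedBall]
      refine lintegral_mono fun u => ?_
      by_cases hum : u ∈ Metric.closedBall (0 : Fin q → ℝ) 1
      · rw [Set.indicator_of_mem hum]
        exact ENNReal.ofReal_le_ofReal (hkey β (hUS hβ) u hum)
      · rw [Set.indicator_of_notMem hum]; exact zero_le
    refine top_le_iff.1 ?_
    calc (⊤ : ℝ≥0∞) = c' * volume U := by rw [hUvol, ENNReal.mul_top hc'0]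
      _ = ∫⁻ β : Fin p → ℝ, U.indicator (fun _ => c') β :=
          (lintegral_indicator_const hUm c').symm
      _ ≤ _ := lintegral_mono fun β => by
          by_cases hβ : β ∈ U
          · rw [Set.indicator_of_mem hβ]; exact hGlow β hβ
          · rw [Set.indicator_of_notMem hβ]; exact zero_le
  rw [lintegral_congr inner_top, lintegral_const, measure_univ, mul_one]
end

section
/- For every integer m ≥ 1 and every real number w, (1 + e^w)^m ≤ e^{1−m} m^m exp(e^w). -/
/-- The elementary inequality (1 + e^w)^m ≤ e^{1-m} m^m exp(e^w) for every
integer m ≥ 1 and real w, used to bound the Poisson likelihood with log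
link by a binomial likelihood with logistic link. -/
theorem one_add_exp_pow_le (m : ℕ) (hm : 1 ≤ m) (w : ℝ) :
    (1 + Real.exp w) ^ m ≤
      Real.exp (1 - (m : ℝ)) * (m : ℝ) ^ m * Real.exp (Real.exp w) := by
  have hm0 : (0 : ℝ) < m := by exact_mod_cast Nat.pos_of_ne_zero (by omega)
  set y : ℝ := 1 + Real.exp w with hy
  have hy0 : 0 < y := by positivity
  set t : ℝ := y / m with ht
  have ht0 : 0 ≤ t := le_of_lt (div_pos hy0 hm0)
  have h1 : t ≤ Real.exp (t - 1) := by
    have := Real.add_one_le_exp (t - 1)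
    linarith
  have h2 : y = m * t := by rw [ht]; field_simp [hm0.ne']
  calc y ^ m = (m : ℝ) ^ m * t ^ m := by rw [h2, mul_pow]
    _ ≤ (m : ℝ) ^ m * Real.exp (t - 1) ^ m := by
        gcongr
    _ = (m : ℝ) ^ m * Real.exp (m * (t - 1)) := by
        rw [← Real.exp_nat_mul]
    _ = Real.exp (1 - (m : ℝ)) * (m : ℝ) ^ m * Real.exp (Real.exp w) := by
        rw [mul_sub, ← h2, hy, mul_one]
        rw [show (1 : ℝ) + Real.exp w - m = (1 - m) + Real.exp w by ring, Real.exp_add]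
        ring
end

section
/- Let q ≥ 1 be an integer, τ > 0 a real number, and c_1,…,c_q ≥ 0 nonnegative reals. Then the approximate Jeffreys' prior density satisfies [q/(2τ²) − Σ_{m=1}^q 1/(2(τ + c_m)²)]^{1/2} ≤ (Σ_{m=1}^q √c_m / 2)^{1/2} · τ^{−5/4}. -/
/-- The approximate Jeffreys' prior is bounded by a power prior:
[q/(2τ²) − Σ_m 1/(2(τ+c_m)²)]^{1/2} ≤ (Σ_m √c_m / 2)^{1/2} τ^{-5/4}
for q ≥ 1, τ > 0, and nonnegative constants c_1,…,c_q. -/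
theorem jeffreys_prior_le_power_prior (q : ℕ) (hq : 1 ≤ q) (τ : ℝ) (hτ : 0 < τ)
    (c : Fin q → ℝ) (hc : ∀ m, 0 ≤ c m) :
    Real.sqrt ((q : ℝ) / (2 * τ ^ 2) - ∑ m, 1 / (2 * (τ + c m) ^ 2)) ≤
      Real.sqrt (∑ m, Real.sqrt (c m) / 2) * τ ^ (-(5 : ℝ) / 4) := by
  set X : ℝ := 1 / (τ ^ 2 * Real.sqrt τ) with hX
  have hsτ : 0 < Real.sqrt τ := Real.sqrt_pos.mpr hτ
  have key : ∀ b : ℝ, 0 ≤ b →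
      1 / (2 * τ ^ 2) - 1 / (2 * (τ + b) ^ 2) ≤ Real.sqrt b / 2 * X := by
    intro b hb
    have hs : Real.sqrt b ^ 2 = b := Real.sq_sqrt hb
    have hu : Real.sqrt τ ^ 2 = τ := Real.sq_sqrt hτ.le
    have hτb : 0 < τ + b := by linarith
    have hsb : 0 ≤ Real.sqrt b := Real.sqrt_nonneg b
    have h1 : 1 / (2 * τ ^ 2) - 1 / (2 * (τ + b) ^ 2)
        = b * (2 * τ + b) / (2 * τ ^ 2 * (τ + b) ^ 2) := by
      field_simp
      ring
    rw [h1, hX]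
    rw [div_le_iff₀ (by positivity)]
    have expand : Real.sqrt b / 2 * (1 / (τ ^ 2 * Real.sqrt τ)) * (2 * τ ^ 2 * (τ + b) ^ 2)
        = Real.sqrt b * (τ + b) ^ 2 / Real.sqrt τ := by
      field_simp
    rw [expand, le_div_iff₀ hsτ]
    obtain ⟨u, hu0, rfl⟩ : ∃ u, 0 < u ∧ τ = u ^ 2 :=
      ⟨Real.sqrt τ, hsτ, (Real.sq_sqrt hτ.le).symm⟩
    obtain ⟨s, hs0, rfl⟩ : ∃ s, 0 ≤ s ∧ b = s ^ 2 :=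
      ⟨Real.sqrt b, hsb, (Real.sq_sqrt hb).symm⟩
    rw [Real.sqrt_sq hs0, Real.sqrt_sq hu0.le]
    nlinarith [mul_nonneg (mul_nonneg hs0 (sq_nonneg (u - s))) (sq_nonneg u),
      mul_nonneg (pow_nonneg hs0 3) (sq_nonneg (u - s / 2)),
      pow_nonneg hs0 5]
  have hsum : (q : ℝ) / (2 * τ ^ 2) - ∑ m, 1 / (2 * (τ + c m) ^ 2)
      ≤ (∑ m, Real.sqrt (c m) / 2) * X := by
    have : (q : ℝ) / (2 * τ ^ 2) = ∑ _m : Fin q, 1 / (2 * τ ^ 2) := by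
      rw [Finset.sum_const, Finset.card_univ, Fintype.card_fin, nsmul_eq_mul]
      ring
    rw [this, ← Finset.sum_sub_distrib, Finset.sum_mul]
    exact Finset.sum_le_sum fun m _ => key (c m) (hc m)
  have hXnn : 0 ≤ X := by positivity
  have hSnn : 0 ≤ ∑ m, Real.sqrt (c m) / 2 :=
    Finset.sum_nonneg fun m _ => by positivity
  calc Real.sqrt ((q : ℝ) / (2 * τ ^ 2) - ∑ m, 1 / (2 * (τ + c m) ^ 2))
      ≤ Real.sqrt ((∑ m, Real.sqrt (c m) / 2) * X) := Real.sqrt_le_sqrt hsum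
    _ = Real.sqrt (∑ m, Real.sqrt (c m) / 2) * Real.sqrt X := Real.sqrt_mul hSnn X
    _ = Real.sqrt (∑ m, Real.sqrt (c m) / 2) * τ ^ (-(5 : ℝ) / 4) := by
        congr 1
        have h52 : τ ^ 2 * Real.sqrt τ = τ ^ ((5 : ℝ) / 2) := by
          rw [Real.sqrt_eq_rpow, ← Real.rpow_natCast τ 2, ← Real.rpow_add hτ]
          norm_num
        rw [hX, h52, one_div, ← Real.rpow_neg hτ.le, Real.sqrt_eq_rpow,
          ← Real.rpow_mul hτ.le]
        norm_num
end

section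
/- Let q ≥ 2 be an integer and let p ≥ 0, a, b be real numbers with a > p/2 and b > 0. Then ∫_0^∞ r^{p+q−1} (b + r²/2)^{−(a + q/2)} dr ≤ 2^{(p+q)/2} b^{p/2 − a} / (2a − p). -/
open MeasureTheory Set

/-- The radial integral bound arising after a polar-coordinate change of
variables: for an integer q ≥ 2 and reals p ≥ 0, a > p/2, b > 0,
∫₀^∞ r^{p+q-1} (b + r²/2)^{-(a+q/2)} dr ≤ 2^{(p+q)/2} b^{p/2-a} / (2a-p). -/
theorem radial_integral_bound (q : ℕ) (hq : 2 ≤ q) (p a b : ℝ)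
    (hp : 0 ≤ p) (ha : p / 2 < a) (hb : 0 < b) :
    (∫⁻ r in Ioi (0 : ℝ),
        ENNReal.ofReal (r ^ (p + (q : ℝ) - 1) * (b + r ^ 2 / 2) ^ (-(a + (q : ℝ) / 2)))) ≤
      ENNReal.ofReal ((2 : ℝ) ^ ((p + (q : ℝ)) / 2) * b ^ (p / 2 - a) / (2 * a - p)) := by
  have hq2 : (2 : ℝ) ≤ (q : ℝ) := by exact_mod_cast hq
  set c : ℝ := a - p / 2 with hc
  have hc0 : 0 < c := by rw [hc]; linarith
  set t : ℝ := (p + (q : ℝ)) / 2 - 1 with ht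
  have ht0 : 0 ≤ t := by rw [ht]; linarith
  have hbase : ∀ r : ℝ, 0 < b + r ^ 2 / 2 := fun r => by positivity
  set C : ℝ := (2 : ℝ) ^ t with hC
  have hC0 : 0 < C := by rw [hC]; positivity
  set f : ℝ → ℝ := fun r => r * (b + r ^ 2 / 2) ^ (-(c + 1)) with hf
  set F : ℝ → ℝ := fun r => -(b + r ^ 2 / 2) ^ (-c) / c with hFdef
  -- derivative of the inner function
  have hg : ∀ r : ℝ, HasDerivAt (fun x : ℝ => b + x ^ 2 / 2) r r := by
    intro r
    have h1 : HasDerivAt (fun x : ℝ => x ^ 2) (2 * r) r := by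
      simpa using hasDerivAt_pow 2 r
    have := (h1.div_const 2).const_add b
    simpa using this
  have hderiv : ∀ r : ℝ, HasDerivAt F (f r) r := by
    intro r
    have h2 : HasDerivAt (fun x : ℝ => x ^ (-c)) (-c * (b + r ^ 2 / 2) ^ (-c - 1))
        (b + r ^ 2 / 2) :=
      Real.hasDerivAt_rpow_const (Or.inl (hbase r).ne')
    have h3 := ((h2.comp r (hg r)).div_const c).neg
    have heq : -(-c * (b + r ^ 2 / 2) ^ (-c - 1) * r / c) = f r := by
      rw [hf]
      have h4 : -c - 1 = -(c + 1) := by ring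
      rw [h4]
      field_simp
    rw [heq] at h3
    apply h3.congr_of_eventuallyEq
    filter_upwards with x
    rw [hFdef]
    simp [Function.comp, neg_div]
  -- F tends to 0 at infinity
  have htend : Filter.Tendsto F Filter.atTop (nhds 0) := by
    have h1 : Filter.Tendsto (fun r : ℝ => b + r ^ 2 / 2) Filter.atTop Filter.atTop := by
      apply Filter.tendsto_atTop_add_const_left
      apply Filter.Tendsto.atTop_div_const (by norm_num : (0:ℝ) < 2)
      exact Filter.tendsto_pow_atTop (by norm_num)
    have h2 := (tendsto_rpow_neg_atTop hc0).comp h1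
    have h3 := (h2.div_const c).neg
    have : F = fun x => -((b + x ^ 2 / 2) ^ (-c) / c) := by
      funext x; rw [hFdef]; ring
    rw [this]
    simpa [Function.comp] using h3
  have hpos : ∀ r ∈ Ioi (0 : ℝ), 0 ≤ f r := by
    intro r hr
    exact mul_nonneg (le_of_lt hr) (Real.rpow_nonneg (hbase r).le _)
  have hInt : IntegrableOn f (Ioi 0) :=
    integrableOn_Ioi_deriv_of_nonneg' (fun x _ => hderiv x) hpos htend
  have hIntVal : ∫ r in Ioi (0 : ℝ), f r = b ^ (-c) / c := by
    rw [integral_Ioi_of_hasDerivAt_of_nonneg' (fun x _ => hderiv x) hpos htend]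
    rw [hFdef]
    norm_num
    ring
  -- pointwise bound
  have key : ∀ r ∈ Ioi (0 : ℝ),
      ENNReal.ofReal (r ^ (p + (q : ℝ) - 1) * (b + r ^ 2 / 2) ^ (-(a + (q : ℝ) / 2)))
        ≤ ENNReal.ofReal (C * f r) := by
    intro r hr
    rw [mem_Ioi] at hr
    apply ENNReal.ofReal_le_ofReal
    have h1 : r ^ (p + (q : ℝ) - 1) = r * (r ^ 2) ^ t := by
      rw [← Real.rpow_natCast r 2, ← Real.rpow_mul hr.le]
      rw [show p + (q : ℝ) - 1 = 1 + ((2 : ℕ) : ℝ) * t by push_cast; rw [ht]; ring]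
      rw [Real.rpow_add hr, Real.rpow_one]
    have h2 : (r ^ 2 : ℝ) ≤ 2 * (b + r ^ 2 / 2) := by nlinarith [hb]
    have h3 : ((r : ℝ) ^ 2) ^ t ≤ (2 * (b + r ^ 2 / 2)) ^ t :=
      Real.rpow_le_rpow (by positivity) h2 ht0
    have h4 : (2 * (b + r ^ 2 / 2)) ^ t = C * (b + r ^ 2 / 2) ^ t := by
      rw [hC, Real.mul_rpow (by norm_num) (hbase r).le]
    calc r ^ (p + (q : ℝ) - 1) * (b + r ^ 2 / 2) ^ (-(a + (q : ℝ) / 2))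
        = (r * (r ^ 2) ^ t) * (b + r ^ 2 / 2) ^ (-(a + (q : ℝ) / 2)) := by rw [h1]
      _ ≤ (r * (C * (b + r ^ 2 / 2) ^ t)) * (b + r ^ 2 / 2) ^ (-(a + (q : ℝ) / 2)) := by
          apply mul_le_mul_of_nonneg_right _ (Real.rpow_nonneg (hbase r).le _)
          exact mul_le_mul_of_nonneg_left (h3.trans_eq h4) hr.le
      _ = C * (r * ((b + r ^ 2 / 2) ^ t * (b + r ^ 2 / 2) ^ (-(a + (q : ℝ) / 2)))) := by ring
      _ = C * f r := by
          rw [← Real.rpow_add (hbase r)]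
          rw [show t + -(a + (q : ℝ) / 2) = -(c + 1) by rw [ht, hc]; ring]
  have hnn : 0 ≤ᵐ[volume.restrict (Ioi (0:ℝ))] f :=
    (ae_restrict_iff' measurableSet_Ioi).2 (Filter.Eventually.of_forall hpos)
  calc (∫⁻ r in Ioi (0 : ℝ),
        ENNReal.ofReal (r ^ (p + (q : ℝ) - 1) * (b + r ^ 2 / 2) ^ (-(a + (q : ℝ) / 2))))
      ≤ ∫⁻ r in Ioi (0 : ℝ), ENNReal.ofReal (C * f r) :=
        setLIntegral_mono' measurableSet_Ioi key
    _ = ∫⁻ r in Ioi (0 : ℝ), ENNReal.ofReal C * ENNReal.ofReal (f r) := by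
        simp_rw [ENNReal.ofReal_mul hC0.le]
    _ = ENNReal.ofReal C * ∫⁻ r in Ioi (0 : ℝ), ENNReal.ofReal (f r) :=
        lintegral_const_mul' _ _ ENNReal.ofReal_ne_top
    _ = ENNReal.ofReal C * ENNReal.ofReal (b ^ (-c) / c) := by
        rw [← ofReal_integral_eq_lintegral_ofReal hInt hnn, hIntVal]
    _ = ENNReal.ofReal (C * (b ^ (-c) / c)) := (ENNReal.ofReal_mul hC0.le).symm
    _ = ENNReal.ofReal ((2 : ℝ) ^ ((p + (q : ℝ)) / 2) * b ^ (p / 2 - a) / (2 * a - p)) := by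
        congr 1
        have e1 : b ^ (-c) = b ^ (p / 2 - a) := by rw [hc]; ring_nf
        have e2 : C = (2 : ℝ) ^ ((p + (q : ℝ)) / 2) / 2 := by
          rw [hC, ht, Real.rpow_sub (by norm_num : (0:ℝ) < 2), Real.rpow_one]
        rw [e1, e2, show 2 * a - p = 2 * c by rw [hc]; ring]
        field_simp
        try ring
end

section
/- Let c > 0 and define f : (0,∞) → ℝ by f(τ) = (1/2) log(τ^{−2} − (τ + c)^{−2}) + log(1 + cτ). Then f is strictly decreasing on (0,∞) (its derivative is strictly negative at every τ > 0), f(τ) → +∞ as τ → 0⁺, and f(τ) → −∞ as τ → ∞; consequently there exists a unique τ₀ > 0 with f(τ₀) = 0, and f(τ) > 0 for τ < τ₀ while f(τ) < 0 for τ > τ₀. -/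
open Filter Set Topology

private lemma jvnk_form (c : ℝ) (hc : 0 < c) (f : ℝ → ℝ)
    (hf : ∀ τ : ℝ, f τ =
      (1 / 2) * Real.log (1 / τ ^ 2 - 1 / (τ + c) ^ 2) + Real.log (1 + c * τ))
    {τ : ℝ} (hτ : 0 < τ) :
    f τ = (1 / 2) * Real.log c + (1 / 2) * Real.log (2 * τ + c) - Real.log τ
      - Real.log (τ + c) + Real.log (1 + c * τ) := by
  have hτc : 0 < τ + c := by linarith
  have h2 : 0 < 2 * τ + c := by linarith
  have h1 : 1 / τ ^ 2 - 1 / (τ + c) ^ 2 = c * (2 * τ + c) / (τ * (τ + c)) ^ 2 := by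
    field_simp; ring
  rw [hf, h1, Real.log_div (by positivity) (by positivity),
    Real.log_mul hc.ne' h2.ne', Real.log_pow, Real.log_mul hτ.ne' hτc.ne']
  push_cast
  ring

private lemma jvnk_deriv (c : ℝ) (hc : 0 < c) (f : ℝ → ℝ)
    (hf : ∀ τ : ℝ, f τ =
      (1 / 2) * Real.log (1 / τ ^ 2 - 1 / (τ + c) ^ 2) + Real.log (1 + c * τ))
    {τ : ℝ} (hτ : 0 < τ) :
    HasDerivAt f (1 / (2 * τ + c) - 1 / τ - 1 / (τ + c) + c / (1 + c * τ)) τ := by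
  have hτc : 0 < τ + c := by linarith
  have h2 : 0 < 2 * τ + c := by linarith
  have h3 : 0 < 1 + c * τ := by nlinarith
  have d1 : HasDerivAt (fun x : ℝ => 2 * x + c) 2 τ := by
    simpa using ((hasDerivAt_id τ).const_mul 2).add_const c
  have d1' : HasDerivAt (fun x : ℝ => Real.log (2 * x + c)) ((2 * τ + c)⁻¹ * 2) τ :=
    (Real.hasDerivAt_log h2.ne').comp (h₂ := Real.log) τ d1
  have d2 : HasDerivAt (fun x : ℝ => Real.log x) τ⁻¹ τ := Real.hasDerivAt_log hτ.ne'
  have d3 : HasDerivAt (fun x : ℝ => x + c) 1 τ := (hasDerivAt_id τ).add_const c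
  have d3' : HasDerivAt (fun x : ℝ => Real.log (x + c)) ((τ + c)⁻¹ * 1) τ :=
    (Real.hasDerivAt_log hτc.ne').comp (h₂ := Real.log) τ d3
  have d4 : HasDerivAt (fun x : ℝ => 1 + c * x) c τ := by
    simpa using ((hasDerivAt_id τ).const_mul c).const_add 1
  have d4' : HasDerivAt (fun x : ℝ => Real.log (1 + c * x)) ((1 + c * τ)⁻¹ * c) τ :=
    (Real.hasDerivAt_log h3.ne').comp (h₂ := Real.log) τ d4
  have D : HasDerivAt (fun x : ℝ => (1 / 2) * Real.log c + (1 / 2) * Real.log (2 * x + c)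
      - Real.log x - Real.log (x + c) + Real.log (1 + c * x))
      ((1 / 2) * ((2 * τ + c)⁻¹ * 2) - τ⁻¹ - ((τ + c)⁻¹ * 1) + (1 + c * τ)⁻¹ * c) τ := by
    exact ((((d1'.const_mul (1 / 2)).const_add ((1 / 2) * Real.log c)).sub d2).sub d3').add d4'
  have heq : f =ᶠ[nhds τ] (fun x : ℝ => (1 / 2) * Real.log c + (1 / 2) * Real.log (2 * x + c)
      - Real.log x - Real.log (x + c) + Real.log (1 + c * x)) := by
    filter_upwards [isOpen_Ioi.mem_nhds (show τ ∈ Ioi (0 : ℝ) from hτ)] with x hx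
    exact jvnk_form c hc f hf hx
  have := D.congr_of_eventuallyEq heq
  refine this.congr_deriv ?_
  ring

/-- Comparison of the tails of the approximate Jeffreys' prior and the
Natarajan–Kass prior: for c > 0 the log-ratio
f(τ) = (1/2) log(τ⁻² − (τ+c)⁻²) + log(1 + cτ) is strictly decreasing on
(0,∞) with strictly negative derivative, tends to +∞ as τ → 0⁺ and to −∞
as τ → ∞, and hence has a unique zero τ₀ > 0 with f > 0 before τ₀ and
f < 0 after τ₀. -/
theorem jeffreys_vs_NK_tail_comparison (c : ℝ) (hc : 0 < c)
    (f : ℝ → ℝ)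
    (hf : ∀ τ : ℝ, f τ =
      (1 / 2) * Real.log (1 / τ ^ 2 - 1 / (τ + c) ^ 2) + Real.log (1 + c * τ)) :
    StrictAntiOn f (Ioi (0 : ℝ)) ∧
    (∀ τ : ℝ, 0 < τ → ∀ d : ℝ, HasDerivAt f d τ → d < 0) ∧
    Tendsto f (nhdsWithin 0 (Ioi (0 : ℝ))) atTop ∧
    Tendsto f atTop atBot ∧
    ∃ τ₀ : ℝ, 0 < τ₀ ∧ f τ₀ = 0 ∧
      (∀ τ : ℝ, 0 < τ → f τ = 0 → τ = τ₀) ∧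
      (∀ τ : ℝ, 0 < τ → τ < τ₀ → 0 < f τ) ∧
      (∀ τ : ℝ, τ₀ < τ → f τ < 0) := by
  -- the explicit derivative is negative
  have hdneg : ∀ τ : ℝ, 0 < τ →
      1 / (2 * τ + c) - 1 / τ - 1 / (τ + c) + c / (1 + c * τ) < 0 := by
    intro τ hτ
    have hτc : 0 < τ + c := by linarith
    have h2 : 0 < 2 * τ + c := by linarith
    have h3 : 0 < 1 + c * τ := by nlinarith
    have e1 : 1 / (2 * τ + c) < 1 / (τ + c) :=
      one_div_lt_one_div_of_lt hτc (by linarith)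
    have e2 : c / (1 + c * τ) < 1 / τ := by
      rw [div_lt_div_iff₀ h3 hτ]
      nlinarith
    linarith
  have hderneg : ∀ τ : ℝ, 0 < τ → ∀ d : ℝ, HasDerivAt f d τ → d < 0 := by
    intro τ hτ d hd
    have := hd.unique (jvnk_deriv c hc f hf hτ)
    rw [this]; exact hdneg τ hτ
  have hcont : ContinuousOn f (Ioi (0 : ℝ)) := fun τ hτ =>
    (jvnk_deriv c hc f hf hτ).continuousAt.continuousWithinAt
  have hanti : StrictAntiOn f (Ioi (0 : ℝ)) := by
    apply strictAntiOn_of_deriv_neg (convex_Ioi 0) hcont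
    intro x hx
    rw [interior_Ioi] at hx
    rw [(jvnk_deriv c hc f hf hx).deriv]
    exact hdneg x hx
  -- limit at 0⁺
  have hlim0 : Tendsto f (nhdsWithin 0 (Ioi (0 : ℝ))) atTop := by
    have hEq : (fun τ : ℝ => ((1 / 2) * Real.log c + (1 / 2) * Real.log (2 * τ + c)
        - Real.log (τ + c) + Real.log (1 + c * τ)) + (- Real.log τ)) =ᶠ[𝓝[>] (0 : ℝ)] f := by
      filter_upwards [self_mem_nhdsWithin] with τ hτ
      rw [jvnk_form c hc f hf hτ]; ring
    refine Tendsto.congr' hEq (Tendsto.add_atTop (C := (1/2) * Real.log c + (1/2) * Real.log c - Real.log c + Real.log 1) ?_ ?_)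
    · have c1 : Continuous (fun τ : ℝ => 2 * τ + c) := by continuity
      have t1 : Tendsto (fun τ : ℝ => Real.log (2 * τ + c)) (𝓝[>] (0 : ℝ)) (𝓝 (Real.log c)) := by
        have h0 : Tendsto (fun τ : ℝ => 2 * τ + c) (𝓝 (0 : ℝ)) (𝓝 c) := by
          have := c1.tendsto 0
          norm_num at this
          exact this
        exact (Real.continuousAt_log hc.ne').tendsto.comp (h0.mono_left nhdsWithin_le_nhds)
      have c2 : Continuous (fun τ : ℝ => τ + c) := by continuity
      have t2 : Tendsto (fun τ : ℝ => Real.log (τ + c)) (𝓝[>] (0 : ℝ)) (𝓝 (Real.log c)) := by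
        have h0 : Tendsto (fun τ : ℝ => τ + c) (𝓝 (0 : ℝ)) (𝓝 c) := by
          have := c2.tendsto 0
          norm_num at this
          exact this
        exact (Real.continuousAt_log hc.ne').tendsto.comp (h0.mono_left nhdsWithin_le_nhds)
      have c3 : Continuous (fun τ : ℝ => 1 + c * τ) := by continuity
      have t3 : Tendsto (fun τ : ℝ => Real.log (1 + c * τ)) (𝓝[>] (0 : ℝ)) (𝓝 (Real.log 1)) := by
        have h0 : Tendsto (fun τ : ℝ => 1 + c * τ) (𝓝 (0 : ℝ)) (𝓝 1) := by
          have := c3.tendsto 0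
          norm_num at this
          exact this
        exact (Real.continuousAt_log one_ne_zero).tendsto.comp (h0.mono_left nhdsWithin_le_nhds)
      exact ((tendsto_const_nhds.add (t1.const_mul (1 / 2))).sub t2).add t3
    · exact tendsto_neg_atBot_atTop.comp Real.tendsto_log_nhdsGT_zero
  -- limit at ∞
  have hlimtop : Tendsto f atTop atBot := by
    have hEq : (fun τ : ℝ => ((1 / 2) * Real.log c + (1 / 2) * Real.log (2 + c / τ)
        + Real.log ((1 + c * τ) / (τ + c))) + (-(1 / 2) * Real.log τ)) =ᶠ[atTop] f := by
      filter_upwards [eventually_gt_atTop (0 : ℝ)] with τ hτ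
      have hτc : 0 < τ + c := by linarith
      have h3 : 0 < 1 + c * τ := by nlinarith
      have e1 : (2 : ℝ) + c / τ = (2 * τ + c) / τ := by field_simp
      rw [jvnk_form c hc f hf hτ, e1, Real.log_div (by positivity) hτ.ne',
        Real.log_div h3.ne' hτc.ne']
      ring
    refine Tendsto.congr' hEq (Tendsto.add_atBot (C := (1/2) * Real.log c + (1/2) * Real.log 2 + Real.log c) ?_ ?_)
    · have hc0 : Tendsto (fun τ : ℝ => c / τ) atTop (𝓝 0) :=
        tendsto_const_nhds.div_atTop tendsto_id
      have t1 : Tendsto (fun τ : ℝ => Real.log (2 + c / τ)) atTop (𝓝 (Real.log 2)) := by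
        have h : Tendsto (fun τ : ℝ => 2 + c / τ) atTop (𝓝 2) := by
          have := (tendsto_const_nhds : Tendsto (fun _ : ℝ => (2:ℝ)) atTop (𝓝 2)).add hc0
          norm_num at this
          exact this
        exact (Real.continuousAt_log two_ne_zero).tendsto.comp h
      have t2 : Tendsto (fun τ : ℝ => Real.log ((1 + c * τ) / (τ + c))) atTop
          (𝓝 (Real.log c)) := by
        have h : Tendsto (fun τ : ℝ => (1 + c * τ) / (τ + c)) atTop (𝓝 c) := by
          have hEq2 : (fun τ : ℝ => (1 / τ + c) / (1 + c / τ)) =ᶠ[atTop]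
              (fun τ : ℝ => (1 + c * τ) / (τ + c)) := by
            filter_upwards [eventually_gt_atTop (0 : ℝ)] with τ hτ
            have hτc : 0 < τ + c := by linarith
            rw [div_eq_div_iff (by positivity) hτc.ne']
            field_simp
          have hone : Tendsto (fun τ : ℝ => 1 / τ) atTop (𝓝 (0 : ℝ)) :=
            Tendsto.div_atTop tendsto_const_nhds tendsto_id
          have hn : Tendsto (fun τ : ℝ => 1 / τ + c) atTop (𝓝 c) := by
            have := hone.add (tendsto_const_nhds : Tendsto (fun _ : ℝ => c) atTop (𝓝 c))
            rw [zero_add] at this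
            exact this
          have hd : Tendsto (fun τ : ℝ => 1 + c / τ) atTop (𝓝 1) := by
            have := (tendsto_const_nhds : Tendsto (fun _ : ℝ => (1:ℝ)) atTop (𝓝 1)).add hc0
            rw [add_zero] at this
            exact this
          have hq := hn.div hd one_ne_zero
          have := Tendsto.congr' hEq2 hq
          simpa using this
        exact (Real.continuousAt_log hc.ne').tendsto.comp h
      exact (tendsto_const_nhds.add (t1.const_mul (1 / 2))).add t2
    · exact Real.tendsto_log_atTop.const_mul_atTop_of_neg (by norm_num)
  refine ⟨hanti, hderneg, hlim0, hlimtop, ?_⟩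
  -- existence of a point with positive value and one with negative value
  have hpos : ∃ a : ℝ, 0 < a ∧ 0 < f a := by
    have h1 : ∀ᶠ τ in 𝓝[>] (0 : ℝ), 0 < f τ := hlim0.eventually (eventually_gt_atTop 0)
    have h2 : ∀ᶠ τ in 𝓝[>] (0 : ℝ), 0 < τ := self_mem_nhdsWithin
    obtain ⟨a, ha1, ha2⟩ := (h2.and h1).exists
    exact ⟨a, ha1, ha2⟩
  obtain ⟨a, ha, hfa⟩ := hpos
  have hneg : ∃ b : ℝ, a < b ∧ f b < 0 := by
    have h1 : ∀ᶠ τ in atTop, f τ < 0 := hlimtop.eventually (eventually_lt_atBot 0)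
    have h2 : ∀ᶠ τ in atTop, a < τ := eventually_gt_atTop a
    obtain ⟨b, hb1, hb2⟩ := (h2.and h1).exists
    exact ⟨b, hb1, hb2⟩
  obtain ⟨b, hab, hfb⟩ := hneg
  have hb : 0 < b := lt_trans ha hab
  have hIcc : Icc a b ⊆ Ioi (0 : ℝ) := fun x hx => lt_of_lt_of_le ha hx.1
  have hivt : (0 : ℝ) ∈ f '' Icc a b := by
    apply intermediate_value_Icc' hab.le (hcont.mono hIcc)
    exact ⟨hfb.le, hfa.le⟩
  obtain ⟨τ₀, hτ₀mem, hfτ₀⟩ := hivt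
  have hτ₀pos : 0 < τ₀ := lt_of_lt_of_le ha hτ₀mem.1
  refine ⟨τ₀, hτ₀pos, hfτ₀, ?_, ?_, ?_⟩
  · intro τ hτ hfτ
    by_contra hne
    rcases lt_or_gt_of_ne hne with h | h
    · have := hanti hτ hτ₀pos h
      rw [hfτ, hfτ₀] at this; exact lt_irrefl 0 this
    · have := hanti hτ₀pos hτ h
      rw [hfτ, hfτ₀] at this; exact lt_irrefl 0 this
  · intro τ hτ hlt
    have := hanti hτ hτ₀pos hlt
    rwa [hfτ₀] at this
  · intro τ hlt
    have := hanti hτ₀pos (lt_trans hτ₀pos hlt) hlt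
    rwa [hfτ₀] at this
end
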